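/- arXiv:1608.01932 — 4 statements merged into one kernel-verified Lean document; each statement's English description precedes it below -/
import Mathlib

section
/- For all k, ℓ ∈ ℕ with k, ℓ ≥ 1, NBP(ISA_{k,ℓ}) ≤ 3·2^(k + ℓ/2) + 2^ℓ and ⊕BP(ISA_{k,ℓ}) ≤ 3·2^(k + ℓ/2) + 2^ℓ (the bound being read in ℝ, with 2^(ℓ/2) = √(2^ℓ)). -/
def subfun {n : ℕ} (f : (Fin n → Bool) → Bool) (V : Finset (Fin n))
    (ρ : {i : Fin n // i ∉ V} → Bool) : ({i : Fin n // i ∈ V} → Bool) → Bool :=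
  fun y => f fun i => if h : i ∈ V then y ⟨i, h⟩ else ρ ⟨i, h⟩

noncomputable def numSubfuns {n : ℕ} (f : (Fin n → Bool) → Bool) (V : Finset (Fin n)) : ℕ :=
  (Set.range (subfun f V)).ncard
def ISA (k ℓ : ℕ) (a : Fin (k + 2^k*ℓ + 2^ℓ) → Bool) : Bool :=
  let a' : ℕ → Bool := fun j => if h : j < k + 2^k*ℓ + 2^ℓ then a ⟨j, h⟩ else false
  let α : ℕ := ∑ i ∈ Finset.range k, if a' i = true then 2^(k-1-i) else 0
  let β : ℕ := ∑ i ∈ Finset.range ℓ, if a' (k + ℓ*α + i) = true then 2^(ℓ-1-i) else 0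
  a' (k + ℓ*2^k + β)
structure BranchProg (n : ℕ) where
  size : ℕ
  start : Fin size ⊕ Bool
  A0 : Fin size → (Fin size ⊕ Bool) → Prop
  A1 : Fin size → (Fin size ⊕ Bool) → Prop
  var : Fin size → Fin n
  A0_ne_start : ∀ u v, A0 u v → v ≠ start
  A1_ne_start : ∀ u v, A1 u v → v ≠ start

namespace BranchProg

def arc {n : ℕ} (P : BranchProg n) (a : Fin n → Bool) :
    (Fin P.size ⊕ Bool) → (Fin P.size ⊕ Bool) → Prop
  | Sum.inl u, v => (a (P.var u) = false ∧ P.A0 u v) ∨ (a (P.var u) = true ∧ P.A1 u v)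
  | Sum.inr _, _ => False

def ComputesNBP {n : ℕ} (P : BranchProg n) (f : (Fin n → Bool) → Bool) : Prop :=
  ∀ a, f a = true ↔ Relation.ReflTransGen (P.arc a) P.start (Sum.inr true)

def accPaths {n : ℕ} (P : BranchProg n) (a : Fin n → Bool) :
    Set (List (Fin P.size ⊕ Bool)) :=
  {l | l.Nodup ∧ l.Chain' (P.arc a) ∧ l.head? = some P.start ∧
       l.getLast? = some (Sum.inr true)}

def ComputesPBP {n : ℕ} (P : BranchProg n) (f : (Fin n → Bool) → Bool) : Prop :=
  ∀ a, f a = true ↔ Odd ((P.accPaths a).ncard)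

def rawArc {n : ℕ} (P : BranchProg n) :
    (Fin P.size ⊕ Bool) → (Fin P.size ⊕ Bool) → Prop
  | Sum.inl u, v => P.A0 u v ∨ P.A1 u v
  | Sum.inr _, _ => False

def Deterministic {n : ℕ} (P : BranchProg n) : Prop :=
  (∀ u, ∃! v, P.A0 u v) ∧ (∀ u, ∃! v, P.A1 u v) ∧
  ∀ x, ¬ Relation.TransGen P.rawArc x x

end BranchProg

noncomputable def NBPc {n : ℕ} (f : (Fin n → Bool) → Bool) : ℕ :=
  sInf {s | ∃ P : BranchProg n, P.size = s ∧ P.ComputesNBP f}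

noncomputable def PBPc {n : ℕ} (f : (Fin n → Bool) → Bool) : ℕ :=
  sInf {s | ∃ P : BranchProg n, P.size = s ∧ P.ComputesPBP f}

noncomputable def BPc {n : ℕ} (f : (Fin n → Bool) → Bool) : ℕ :=
  sInf {s | ∃ P : BranchProg n, P.Deterministic ∧ P.size = s ∧ P.ComputesNBP f}

noncomputable def Nsem (n s : ℕ) : ℕ :=
  {f : (Fin n → Bool) → Bool | ∃ P : BranchProg n, P.size ≤ s ∧ P.ComputesNBP f}.ncard

noncomputable def Psem (n s : ℕ) : ℕ :=
  {f : (Fin n → Bool) → Bool | ∃ P : BranchProg n, P.size ≤ s ∧ P.ComputesPBP f}.ncard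


namespace ISAproof

variable (k ℓ : ℕ)

abbrev nn : ℕ := k + 2^k*ℓ + 2^ℓ
/-- length of first (deterministically read) half of the pointer block -/
abbrev L1 : ℕ := ℓ - ℓ/2
/-- length of second (guessed & verified) half -/
abbrev L2 : ℕ := ℓ/2

inductive St : Type where
  | rdA (j : Fin k) (p : Fin (2^(j:ℕ)))
  | rdB (α : Fin (2^k)) (j : Fin (L1 ℓ)) (p : Fin (2^(j:ℕ)))
  | outp (β : Fin (2^ℓ))
  | vB (α : Fin (2^k)) (j : Fin (L2 ℓ)) (r : Fin (2^(L2 ℓ - (j:ℕ))))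
  | vA (j : Fin k) (r : Fin (2^(k - (j:ℕ))))

open St

def StEquiv : St k ℓ ≃
    ((Σ j : Fin k, Fin (2^(j:ℕ))) ⊕ (Fin (2^k) × Σ j : Fin (L1 ℓ), Fin (2^(j:ℕ))) ⊕
     (Fin (2^ℓ)) ⊕ (Fin (2^k) × Σ j : Fin (L2 ℓ), Fin (2^(L2 ℓ - (j:ℕ)))) ⊕
     (Σ j : Fin k, Fin (2^(k - (j:ℕ))))) where
  toFun s := match s with
    | rdA j p => Sum.inl ⟨j, p⟩
    | rdB α j p => Sum.inr (Sum.inl ⟨α, j, p⟩)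
    | outp β => Sum.inr (Sum.inr (Sum.inl β))
    | vB α j r => Sum.inr (Sum.inr (Sum.inr (Sum.inl ⟨α, j, r⟩)))
    | vA j r => Sum.inr (Sum.inr (Sum.inr (Sum.inr ⟨j, r⟩)))
  invFun s := match s with
    | Sum.inl ⟨j, p⟩ => rdA j p
    | Sum.inr (Sum.inl ⟨α, j, p⟩) => rdB α j p
    | Sum.inr (Sum.inr (Sum.inl β)) => outp β
    | Sum.inr (Sum.inr (Sum.inr (Sum.inl ⟨α, j, r⟩))) => vB α j r
    | Sum.inr (Sum.inr (Sum.inr (Sum.inr ⟨j, r⟩))) => vA j r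
  left_inv s := by cases s <;> rfl
  right_inv s := by rcases s with ⟨j,p⟩ | ⟨⟨α,j,p⟩ | β | ⟨α,j,r⟩ | ⟨j,r⟩⟩ <;> rfl

noncomputable instance : Fintype (St k ℓ) := Fintype.ofEquiv _ (StEquiv k ℓ).symm

noncomputable def NN : ℕ := Fintype.card (St k ℓ)

lemma sum_two_pow (m : ℕ) : ∑ i ∈ Finset.range m, 2^i = 2^m - 1 := by
  induction m with
  | zero => simp
  | succ m ih =>
      rw [Finset.sum_range_succ, ih]
      have : 1 ≤ 2^m := Nat.one_le_two_pow
      have : 2^(m+1) = 2*2^m := by ring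
      omega

lemma sum_two_pow_sub (m : ℕ) : ∑ i ∈ Finset.range m, 2^(m - i) = 2^(m+1) - 2 := by
  induction m with
  | zero => simp
  | succ m ih =>
      rw [Finset.sum_range_succ']
      have h1 : ∀ i ∈ Finset.range m, 2^(m + 1 - (i+1)) = 2^(m-i) := by
        intro i _; congr 1; omega
      rw [Finset.sum_congr rfl h1, ih]
      have hb : 2 ≤ 2^(m+1) := by
        have : 2^1 ≤ 2^(m+1) := Nat.pow_le_pow_right (by norm_num) (by omega)
        simpa using this
      have h2 : 2^(m+2) = 2*2^(m+1) := by ring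
      simp only [Nat.sub_zero]
      omega

lemma NN_le : NN k ℓ ≤ 2^(k + L1 ℓ) + 2^(k + L2 ℓ + 1) + 2^ℓ := by
  have hcard : NN k ℓ =
      (∑ j ∈ Finset.range k, 2^j) + ((2^k) * (∑ j ∈ Finset.range (L1 ℓ), 2^j) +
      (2^ℓ + ((2^k) * (∑ j ∈ Finset.range (L2 ℓ), 2^(L2 ℓ - j)) +
      (∑ j ∈ Finset.range k, 2^(k - j))))) := by
    rw [NN, Fintype.card_congr (StEquiv k ℓ)]
    simp only [Fintype.card_sum, Fintype.card_prod, Fintype.card_sigma, Fintype.card_fin]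
    rw [Fin.sum_univ_eq_sum_range (fun j => 2^j) k,
      Fin.sum_univ_eq_sum_range (fun j => 2^j) (L1 ℓ),
      Fin.sum_univ_eq_sum_range (fun j => 2^(L2 ℓ - j)) (L2 ℓ),
      Fin.sum_univ_eq_sum_range (fun j => 2^(k - j)) k]
  rw [hcard, sum_two_pow, sum_two_pow, sum_two_pow_sub, sum_two_pow_sub]
  have e1 : 2^(k + L1 ℓ) = 2^k * 2^(L1 ℓ) := by rw [pow_add]
  have e2 : 2^(k + L2 ℓ + 1) = 2^k * 2^(L2 ℓ + 1) := by
    rw [show k + L2 ℓ + 1 = k + (L2 ℓ + 1) by omega, pow_add]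
  have p1 : 1 ≤ 2^k := Nat.one_le_two_pow
  have p2 : 1 ≤ 2^(L1 ℓ) := Nat.one_le_two_pow
  have p3 : 2 ≤ 2^(L2 ℓ + 1) := by
    calc 2 = 2^1 := rfl
    _ ≤ 2^(L2 ℓ + 1) := Nat.pow_le_pow_right (by norm_num) (by omega)
  have p4 : 2^k * 1 ≤ 2^k * 2^(L1 ℓ) := Nat.mul_le_mul_left _ p2
  have p5 : 2^k * (2^(L2 ℓ+1) - 2) = 2^k * 2^(L2 ℓ+1) - 2^k*2 := by
    rw [Nat.mul_sub]
  have p6 : 2^k * 2 ≤ 2^k * 2^(L2 ℓ + 1) := Nat.mul_le_mul_left _ p3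
  have p7 : 2^k * (2^(L1 ℓ) - 1) = 2^k * 2^(L1 ℓ) - 2^k*1 := by rw [Nat.mul_sub]
  rw [e1, e2, p5, p7]
  omega


open St

variable {k ℓ}

lemma combine_lt {x y m1 m2 : ℕ} (hx : x < 2^m1) (hy : y < 2^m2) :
    x * 2^m2 + y < 2^(m1+m2) := by
  have h1 : x + 1 ≤ 2^m1 := hx
  calc x * 2^m2 + y < x * 2^m2 + 2^m2 := by omega
  _ = (x+1) * 2^m2 := by ring
  _ ≤ 2^m1 * 2^m2 := Nat.mul_le_mul_right _ h1
  _ = 2^(m1+m2) := (pow_add 2 m1 m2).symm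

lemma blk_lt {α j : ℕ} (hα : α < 2^k) (hj : j < ℓ) : k + ℓ*α + j < nn k ℓ := by
  have h1 : ℓ*α + j < ℓ*(α+1) := by
    have : ℓ*(α+1) = ℓ*α + ℓ := by ring
    omega
  have h2 : ℓ*(α+1) ≤ ℓ*2^k := Nat.mul_le_mul_left _ (by omega)
  have h3 : 2^k*ℓ = ℓ*2^k := Nat.mul_comm _ _
  have h4 : 0 < 2^ℓ := Nat.two_pow_pos ℓ
  simp only [nn]
  omega

/-- which input variable a state reads -/
def varOf : St k ℓ → Fin (nn k ℓ)
  | rdA j _ => ⟨j, by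
      have := j.isLt
      have h2 : 0 < 2^k*ℓ + 2^ℓ := by positivity
      simp only [nn]; omega⟩
  | rdB α j _ => ⟨k + ℓ*(α:ℕ) + j, blk_lt α.isLt (by have := j.isLt; simp only [L1] at this; omega)⟩
  | outp β => ⟨k + ℓ*2^k + β, by
      have := β.isLt
      have h3 : 2^k*ℓ = ℓ*2^k := Nat.mul_comm _ _
      simp only [nn]; omega⟩
  | vB α j _ => ⟨k + ℓ*(α:ℕ) + (L1 ℓ + j), blk_lt α.isLt (by
      have := j.isLt; simp only [L1, L2] at *; omega)⟩
  | vA j _ => ⟨j, by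
      have := j.isLt
      have h2 : 0 < 2^k*ℓ + 2^ℓ := by positivity
      simp only [nn]; omega⟩

/-- arcs with label `b`. -/
def Step (hk : 0 < k) (hℓ : 0 < ℓ) (b : Bool) : St k ℓ → (St k ℓ ⊕ Bool) → Prop
  | rdA j p, t =>
      if h : (j:ℕ)+1 < k then
        t = Sum.inl (rdA ⟨(j:ℕ)+1, h⟩ ⟨2*(p:ℕ) + b.toNat, by
          show 2*(p:ℕ) + b.toNat < 2^((j:ℕ)+1)
          have := p.isLt; have hb : b.toNat ≤ 1 := Bool.toNat_le b
          have hp : 2^((j:ℕ)+1) = 2^(j:ℕ)*2 := pow_succ 2 _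
          omega⟩)
      else
        t = Sum.inl (rdB ⟨2*(p:ℕ) + b.toNat, by
            have := p.isLt; have hb : b.toNat ≤ 1 := Bool.toNat_le b
            have hj := j.isLt
            have hk' : (j:ℕ)+1 = k := by omega
            have hstep : 2*(p:ℕ) + b.toNat < 2^((j:ℕ)+1) := by
              have hp : 2^((j:ℕ)+1) = 2^(j:ℕ)*2 := pow_succ 2 _
              omega
            exact lt_of_lt_of_eq hstep (congrArg (2 ^ ·) hk')⟩
          ⟨0, by simp only [L1]; omega⟩ ⟨0, Nat.two_pow_pos 0⟩)
  | rdB α j p, t =>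
      if h : (j:ℕ)+1 < L1 ℓ then
        t = Sum.inl (rdB α ⟨(j:ℕ)+1, h⟩ ⟨2*(p:ℕ) + b.toNat, by
          show 2*(p:ℕ) + b.toNat < 2^((j:ℕ)+1)
          have := p.isLt; have hb : b.toNat ≤ 1 := Bool.toNat_le b
          have hp : 2^((j:ℕ)+1) = 2^(j:ℕ)*2 := pow_succ 2 _
          omega⟩)
      else
        ∃ β2 : Fin (2^(L2 ℓ)),
          t = Sum.inl (outp ⟨(2*(p:ℕ) + b.toNat)*2^(L2 ℓ) + β2, by
            have hL : ℓ = L1 ℓ + L2 ℓ := by simp only [L1, L2]; omega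
            have h1 : 2*(p:ℕ) + b.toNat < 2^(L1 ℓ) := by
              have := p.isLt; have hb : b.toNat ≤ 1 := Bool.toNat_le b
              have hj := j.isLt
              have hj' : (j:ℕ)+1 = L1 ℓ := by omega
              have hstep : 2*(p:ℕ) + b.toNat < 2^((j:ℕ)+1) := by
                have hp : 2^((j:ℕ)+1) = 2^(j:ℕ)*2 := pow_succ 2 _
                omega
              exact lt_of_lt_of_eq hstep (congrArg (2 ^ ·) hj')
            exact lt_of_lt_of_eq (combine_lt h1 β2.isLt) (congrArg (2 ^ ·) hL.symm)⟩)
  | outp β, t =>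
      b = true ∧ ∃ α' : Fin (2^k),
        t = Sum.inl (if h : 0 < L2 ℓ then
            vB α' ⟨0, h⟩ ⟨(β:ℕ) % 2^(L2 ℓ), Nat.mod_lt _ (Nat.two_pow_pos _)⟩
          else vA ⟨0, hk⟩ ⟨(α':ℕ), α'.isLt⟩)
  | vB α j r, t =>
      b = decide (2^(L2 ℓ - (j:ℕ) - 1) ≤ (r:ℕ)) ∧
      (if h : (j:ℕ)+1 < L2 ℓ then
        t = Sum.inl (vB α ⟨(j:ℕ)+1, h⟩
          ⟨(r:ℕ) % 2^(L2 ℓ - (j:ℕ) - 1), Nat.mod_lt _ (Nat.two_pow_pos _)⟩)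
      else t = Sum.inl (vA ⟨0, hk⟩ ⟨(α:ℕ), α.isLt⟩))
  | vA j r, t =>
      b = decide (2^(k - (j:ℕ) - 1) ≤ (r:ℕ)) ∧
      (if h : (j:ℕ)+1 < k then
        t = Sum.inl (vA ⟨(j:ℕ)+1, h⟩
          ⟨(r:ℕ) % 2^(k - (j:ℕ) - 1), Nat.mod_lt _ (Nat.two_pow_pos _)⟩)
      else t = Sum.inr true)

def Arc (hk : 0 < k) (hℓ : 0 < ℓ) (a : Fin (nn k ℓ) → Bool) :
    (St k ℓ ⊕ Bool) → (St k ℓ ⊕ Bool) → Prop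
  | Sum.inl s, t => Step hk hℓ (a (varOf s)) s t
  | Sum.inr _, _ => False

def rank : St k ℓ ⊕ Bool → ℕ
  | Sum.inl (rdA j _) => j
  | Sum.inl (rdB _ j _) => k + j
  | Sum.inl (outp _) => k + L1 ℓ
  | Sum.inl (vB _ j _) => k + L1 ℓ + 1 + j
  | Sum.inl (vA j _) => k + L1 ℓ + 1 + L2 ℓ + j
  | Sum.inr _ => k + L1 ℓ + 1 + L2 ℓ + k

lemma rank_step {hk : 0 < k} {hℓ : 0 < ℓ} {b : Bool} {s : St k ℓ} {t : St k ℓ ⊕ Bool}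
    (h : Step hk hℓ b s t) : rank t = rank (Sum.inl s) + 1 := by
  cases s with
  | rdA j p =>
      simp only [Step] at h
      split at h
      · subst h; simp [rank]
      · subst h; simp only [rank]; have := j.isLt; omega
  | rdB α j p =>
      simp only [Step] at h
      split at h
      · subst h; simp [rank]; omega
      · obtain ⟨β2, rfl⟩ := h; simp only [rank]; have := j.isLt; omega
  | outp β =>
      obtain ⟨hb, α', rfl⟩ := h
      by_cases h2 : 0 < L2 ℓ
      · rw [dif_pos h2]; simp [rank]
      · rw [dif_neg h2]; simp only [rank]; omega
  | vB α j r =>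
      obtain ⟨hb, h⟩ := h
      split at h
      · subst h; simp [rank]; omega
      · subst h; simp only [rank]; have := j.isLt; omega
  | vA j r =>
      obtain ⟨hb, h⟩ := h
      split at h
      · subst h; simp [rank]; omega
      · subst h; simp only [rank]; have := j.isLt; omega

/-! ### values of bit strings -/

def ext (a : Fin (nn k ℓ) → Bool) (j : ℕ) : Bool :=
  if h : j < k + 2^k*ℓ + 2^ℓ then a ⟨j, h⟩ else false

lemma ext_eq_of_lt (a : Fin (nn k ℓ) → Bool) {j : ℕ} (h : j < k + 2^k*ℓ + 2^ℓ) :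
    ext a j = a ⟨j, h⟩ := dif_pos h

def val (a : Fin (nn k ℓ) → Bool) (s m : ℕ) : ℕ :=
  ∑ i ∈ Finset.range m, if ext a (s+i) = true then 2^(m-1-i) else 0

lemma val_zero (a : Fin (nn k ℓ) → Bool) (s : ℕ) : val a s 0 = 0 := by
  simp [val]

lemma val_succ (a : Fin (nn k ℓ) → Bool) (s m : ℕ) :
    val a s (m+1) = (if ext a s = true then 2^m else 0) + val a (s+1) m := by
  unfold val
  rw [Finset.sum_range_succ']
  have h1 : ∀ i ∈ Finset.range m,
      (if ext a (s+(i+1)) = true then 2^(m+1-1-(i+1)) else 0)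
        = (if ext a (s+1+i) = true then 2^(m-1-i) else 0) := by
    intro i _
    rw [show s+(i+1) = s+1+i by omega, show m+1-1-(i+1) = m-1-i by omega]
  rw [Finset.sum_congr rfl h1]
  simp only [Nat.add_zero, Nat.add_sub_cancel, Nat.sub_zero]
  omega

lemma val_lt (a : Fin (nn k ℓ) → Bool) (s m : ℕ) : val a s m < 2^m := by
  induction m generalizing s with
  | zero => simp [val_zero]
  | succ m ih =>
      rw [val_succ]
      have := ih (s+1)
      have hp : 2^(m+1) = 2^m*2 := pow_succ 2 m
      split <;> omega

lemma val_append (a : Fin (nn k ℓ) → Bool) (s m1 m2 : ℕ) :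
    val a s (m1+m2) = val a s m1 * 2^m2 + val a (s+m1) m2 := by
  induction m1 generalizing s with
  | zero => simp [val_zero]
  | succ m1 ih =>
      rw [show m1+1+m2 = (m1+m2)+1 by omega, val_succ, ih (s+1), val_succ,
        show s+1+m1 = s+(m1+1) by omega]
      cases hbit : ext a s <;> simp [pow_add] <;> ring

lemma val_iff (a : Fin (nn k ℓ) → Bool) (s m : ℕ) {r : ℕ} (hr : r < 2^(m+1)) :
    r = val a s (m+1) ↔
      (ext a s = decide (2^m ≤ r) ∧ r % 2^m = val a (s+1) m) := by
  have hlt := val_lt a (s+1) m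
  have hp : 2^(m+1) = 2^m*2 := pow_succ 2 m
  rw [val_succ]
  by_cases hbit : ext a s = true
  · rw [if_pos hbit, hbit]
    constructor
    · rintro rfl
      refine ⟨(decide_eq_true (Nat.le_add_right _ _)).symm, ?_⟩
      rw [Nat.add_mod_left, Nat.mod_eq_of_lt hlt]
    · rintro ⟨h1, h2⟩
      have hle : 2^m ≤ r := of_decide_eq_true h1.symm
      rw [Nat.mod_eq_sub_mod hle, Nat.mod_eq_of_lt (by omega)] at h2
      omega
  · have hb : ext a s = false := by simpa using hbit
    rw [if_neg hbit, hb]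
    constructor
    · rintro rfl
      refine ⟨(decide_eq_false (by omega)).symm, ?_⟩
      rw [Nat.zero_add, Nat.mod_eq_of_lt hlt]
    · rintro ⟨h1, h2⟩
      have hle : ¬ (2^m ≤ r) := of_decide_eq_false h1.symm
      rw [Nat.mod_eq_of_lt (by omega)] at h2
      omega

/-! ### the invariant -/

def Addr (a : Fin (nn k ℓ) → Bool) : ℕ := val a 0 k

lemma Addr_lt (a : Fin (nn k ℓ) → Bool) : Addr a < 2^k := val_lt a 0 k

def B2v (a : Fin (nn k ℓ) → Bool) : ℕ := val a (k + ℓ*(Addr a) + L1 ℓ) (L2 ℓ)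

lemma B2v_lt (a : Fin (nn k ℓ) → Bool) : B2v a < 2^(L2 ℓ) := val_lt a _ _

def OUT (a : Fin (nn k ℓ) → Bool) (β : ℕ) : Prop := ext a (k + ℓ*2^k + β) = true

open St in
def cond (a : Fin (nn k ℓ) → Bool) : St k ℓ ⊕ Bool → Prop
  | Sum.inr b => b = true
  | Sum.inl (rdA j p) =>
      OUT a (val a (k + ℓ*((p:ℕ) * 2^(k-(j:ℕ)) + val a (j:ℕ) (k-(j:ℕ)))) (L1 ℓ)
        * 2^(L2 ℓ) + B2v a)
  | Sum.inl (rdB α j p) =>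
      OUT a (((p:ℕ) * 2^(L1 ℓ - (j:ℕ)) + val a (k + ℓ*(α:ℕ) + (j:ℕ)) (L1 ℓ - (j:ℕ)))
        * 2^(L2 ℓ) + B2v a)
  | Sum.inl (outp β) => OUT a (β:ℕ) ∧ (β:ℕ) % 2^(L2 ℓ) = B2v a
  | Sum.inl (vB α j r) =>
      (r:ℕ) = val a (k + ℓ*(α:ℕ) + (L1 ℓ + (j:ℕ))) (L2 ℓ - (j:ℕ)) ∧ (α:ℕ) = Addr a
  | Sum.inl (vA j r) => (r:ℕ) = val a (j:ℕ) (k - (j:ℕ))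

lemma prefix_step (a : Fin (nn k ℓ) → Bool) {w pos p : ℕ} (hw : 0 < w) :
    p * 2^w + val a pos w
      = (2*p + (ext a pos).toNat) * 2^(w-1) + val a (pos+1) (w-1) := by
  rw [show w = (w-1)+1 by omega, val_succ]
  rw [show (w-1)+1-1 = w-1 by omega]
  cases hbit : ext a pos <;> simp [hbit, pow_succ] <;> ring

open St in
lemma step_exists (hk : 0 < k) (hℓ : 0 < ℓ) (a : Fin (nn k ℓ) → Bool) (s : St k ℓ) :
    cond a (Sum.inl s) ↔ ∃ t, Step hk hℓ (a (varOf s)) s t ∧ cond a t := by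
  have hread : ∀ s : St k ℓ, a (varOf s) = ext a ((varOf s : Fin (nn k ℓ)) : ℕ) :=
    fun s => (ext_eq_of_lt a (varOf s).isLt).symm
  cases s with
  | rdA j p =>
      have hb : a (varOf (rdA j p)) = ext a (j:ℕ) := hread _
      rw [hb]
      have hjk := j.isLt
      by_cases hs : (j:ℕ)+1 < k
      · simp only [Step, dif_pos hs, exists_eq_left', exists_eq_left, cond]
        have e1 : k - ((j:ℕ)+1) = (k - (j:ℕ)) - 1 := by omega
        have hkey := prefix_step a (w := k - (j:ℕ)) (pos := (j:ℕ)) (p := (p:ℕ)) (by omega)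
        rw [e1, hkey]
      · simp only [Step, dif_neg hs, exists_eq_left', exists_eq_left, cond]
        have hkey := prefix_step a (w := k - (j:ℕ)) (pos := (j:ℕ)) (p := (p:ℕ)) (by omega)
        rw [hkey]
        have e1 : k - (j:ℕ) - 1 = 0 := by omega
        rw [e1]
        simp only [pow_zero, mul_one, val_zero, Nat.add_zero, Nat.zero_mul, Nat.sub_zero,
          Nat.zero_add]
  | rdB α j p =>
      have hb : a (varOf (rdB α j p)) = ext a (k + ℓ*(α:ℕ) + (j:ℕ)) := hread _
      rw [hb]
      have hjl := j.isLt
      by_cases hs : (j:ℕ)+1 < L1 ℓ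
      · simp only [Step, dif_pos hs, exists_eq_left', exists_eq_left, cond]
        have e1 : L1 ℓ - ((j:ℕ)+1) = (L1 ℓ - (j:ℕ)) - 1 := by omega
        have e2 : k + ℓ*(α:ℕ) + ((j:ℕ)+1) = (k + ℓ*(α:ℕ) + (j:ℕ)) + 1 := by omega
        have hkey := prefix_step a (w := L1 ℓ - (j:ℕ)) (pos := k + ℓ*(α:ℕ) + (j:ℕ))
          (p := (p:ℕ)) (by omega)
        rw [e1, e2, hkey]
      · -- last bit of the first half: guess β2
        simp only [Step, dif_neg hs, cond]
        have hkey := prefix_step a (w := L1 ℓ - (j:ℕ)) (pos := k + ℓ*(α:ℕ) + (j:ℕ))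
          (p := (p:ℕ)) (by omega)
        have e1 : L1 ℓ - (j:ℕ) - 1 = 0 := by omega
        rw [e1] at hkey
        simp only [pow_zero, mul_one, val_zero, Nat.add_zero] at hkey
        constructor
        · intro hc
          rw [hkey] at hc
          refine ⟨_, ⟨⟨B2v a, B2v_lt a⟩, rfl⟩, ?_⟩
          simp only [cond]
          exact ⟨hc, by rw [Nat.mul_add_mod', Nat.mod_eq_of_lt (B2v_lt a)]⟩
        · rintro ⟨t, ⟨β2, rfl⟩, hc⟩
          simp only [cond] at hc
          obtain ⟨h1, h2⟩ := hc
          rw [Nat.mul_add_mod', Nat.mod_eq_of_lt β2.isLt] at h2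
          rw [hkey, ← h2]
          exact h1
  | outp β =>
      have hb : a (varOf (outp β)) = ext a (k + ℓ*2^k + (β:ℕ)) := hread _
      rw [hb]
      simp only [Step, cond]
      constructor
      · rintro ⟨h1, h2⟩
        refine ⟨_, ⟨h1, ⟨⟨Addr a, Addr_lt a⟩, rfl⟩⟩, ?_⟩
        by_cases hL2 : 0 < L2 ℓ
        · rw [dif_pos hL2]
          simp only [cond]
          refine ⟨?_, trivial⟩
          rw [h2, B2v]
          norm_num
        · rw [dif_neg hL2]
          simp only [cond]
          norm_num
          rfl
      · rintro ⟨t, ⟨h1, α', rfl⟩, hc⟩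
        refine ⟨h1, ?_⟩
        by_cases hL2 : 0 < L2 ℓ
        · rw [dif_pos hL2] at hc
          simp only [cond] at hc
          obtain ⟨h2, h3⟩ := hc
          rw [h2, h3, B2v]
          norm_num
        · rw [dif_neg hL2] at hc
          have h0 : L2 ℓ = 0 := by omega
          rw [h0]
          simp only [pow_zero, Nat.mod_one, B2v, h0, val_zero]
  | vB α j r =>
      have hb : a (varOf (vB α j r)) = ext a (k + ℓ*(α:ℕ) + (L1 ℓ + (j:ℕ))) := hread _
      rw [hb]
      have hjl := j.isLt
      have hrlt : (r:ℕ) < 2^((L2 ℓ - (j:ℕ) - 1)+1) := by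
        have h := r.isLt
        rw [show (L2 ℓ - (j:ℕ) - 1)+1 = L2 ℓ - (j:ℕ) by omega]
        exact h
      have hiff := val_iff a (k + ℓ*(α:ℕ) + (L1 ℓ + (j:ℕ))) (L2 ℓ - (j:ℕ) - 1) hrlt
      by_cases hs : (j:ℕ)+1 < L2 ℓ
      · simp only [Step, dif_pos hs, cond, and_assoc, exists_and_left, exists_eq_left]
        have e2 : L2 ℓ - ((j:ℕ)+1) = L2 ℓ - (j:ℕ) - 1 := by omega
        have e3 : k + ℓ*(α:ℕ) + (L1 ℓ + ((j:ℕ)+1)) = (k + ℓ*(α:ℕ) + (L1 ℓ + (j:ℕ))) + 1 := by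
          omega
        rw [show (L2 ℓ - (j:ℕ) - 1)+1 = L2 ℓ - (j:ℕ) by omega] at hiff
        rw [e2, e3, hiff]
        tauto
      · simp only [Step, dif_neg hs, cond, and_assoc, exists_and_left, exists_eq_left]
        rw [show (L2 ℓ - (j:ℕ) - 1)+1 = L2 ℓ - (j:ℕ) by omega] at hiff
        rw [hiff]
        have e4 : L2 ℓ - (j:ℕ) - 1 = 0 := by omega
        rw [e4]
        simp only [pow_zero, Nat.mod_one, val_zero, Nat.sub_zero]
        unfold Addr
        tauto
  | vA j r =>
      have hb : a (varOf (vA j r)) = ext a (j:ℕ) := hread _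
      rw [hb]
      have hjl := j.isLt
      have hrlt : (r:ℕ) < 2^((k - (j:ℕ) - 1)+1) := by
        have h := r.isLt
        rw [show (k - (j:ℕ) - 1)+1 = k - (j:ℕ) by omega]
        exact h
      have hiff := val_iff a (j:ℕ) (k - (j:ℕ) - 1) hrlt
      by_cases hs : (j:ℕ)+1 < k
      · simp only [Step, dif_pos hs, cond, and_assoc, exists_and_left, exists_eq_left]
        have e2 : k - ((j:ℕ)+1) = k - (j:ℕ) - 1 := by omega
        rw [show (k - (j:ℕ) - 1)+1 = k - (j:ℕ) by omega] at hiff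
        rw [e2, hiff]
      · simp only [Step, dif_neg hs, cond, and_assoc, exists_and_left, exists_eq_left]
        rw [show (k - (j:ℕ) - 1)+1 = k - (j:ℕ) by omega] at hiff
        rw [hiff]
        have e4 : k - (j:ℕ) - 1 = 0 := by omega
        rw [e4]
        simp only [pow_zero, val_zero, true_and, iff_true, and_true]
        constructor
        · rintro ⟨h1, h2⟩; exact h1
        · intro h1; exact ⟨h1, by omega⟩

open St in
lemma step_unique (hk : 0 < k) (hℓ : 0 < ℓ) (a : Fin (nn k ℓ) → Bool) (s : St k ℓ)
    {t₁ t₂ : St k ℓ ⊕ Bool}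
    (h₁ : Step hk hℓ (a (varOf s)) s t₁) (c₁ : cond a t₁)
    (h₂ : Step hk hℓ (a (varOf s)) s t₂) (c₂ : cond a t₂) : t₁ = t₂ := by
  cases s with
  | rdA j p =>
      simp only [Step] at h₁ h₂
      by_cases hs : (j:ℕ)+1 < k
      · rw [dif_pos hs] at h₁ h₂; rw [h₁, h₂]
      · rw [dif_neg hs] at h₁ h₂; rw [h₁, h₂]
  | rdB α j p =>
      simp only [Step] at h₁ h₂
      by_cases hs : (j:ℕ)+1 < L1 ℓ
      · rw [dif_pos hs] at h₁ h₂; rw [h₁, h₂]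
      · rw [dif_neg hs] at h₁ h₂
        obtain ⟨β2, rfl⟩ := h₁
        obtain ⟨β2', rfl⟩ := h₂
        simp only [cond] at c₁ c₂
        have e1 := c₁.2
        have e2 := c₂.2
        rw [Nat.mul_add_mod', Nat.mod_eq_of_lt β2.isLt] at e1
        rw [Nat.mul_add_mod', Nat.mod_eq_of_lt β2'.isLt] at e2
        simp only [Sum.inl.injEq, St.outp.injEq, Fin.mk.injEq]
        omega
  | outp β =>
      obtain ⟨hb₁, α₁', rfl⟩ := h₁
      obtain ⟨hb₂, α₂', rfl⟩ := h₂
      by_cases hL2 : 0 < L2 ℓ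
      · rw [dif_pos hL2] at c₁ c₂
        simp only [cond] at c₁ c₂
        have h : α₁' = α₂' := Fin.ext (c₁.2.trans c₂.2.symm)
        rw [h]
      · rw [dif_neg hL2] at c₁ c₂
        simp only [cond] at c₁ c₂
        have h : α₁' = α₂' := Fin.ext (c₁.trans c₂.symm)
        rw [h]
  | vB α j r =>
      obtain ⟨hb₁, h₁⟩ := h₁
      obtain ⟨hb₂, h₂⟩ := h₂
      by_cases hs : (j:ℕ)+1 < L2 ℓ
      · rw [dif_pos hs] at h₁ h₂; rw [h₁, h₂]
      · rw [dif_neg hs] at h₁ h₂; rw [h₁, h₂]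
  | vA j r =>
      obtain ⟨hb₁, h₁⟩ := h₁
      obtain ⟨hb₂, h₂⟩ := h₂
      by_cases hs : (j:ℕ)+1 < k
      · rw [dif_pos hs] at h₁ h₂; rw [h₁, h₂]
      · rw [dif_neg hs] at h₁ h₂; rw [h₁, h₂]

/-! ### paths -/

def Paths (hk : 0 < k) (hℓ : 0 < ℓ) (a : Fin (nn k ℓ) → Bool) (s : St k ℓ ⊕ Bool) :
    Set (List (St k ℓ ⊕ Bool)) :=
  {l | l.Chain' (Arc hk hℓ a) ∧ l.head? = some s ∧ l.getLast? = some (Sum.inr true)}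

lemma arc_rank {hk : 0 < k} {hℓ : 0 < ℓ} {a : Fin (nn k ℓ) → Bool}
    {s t : St k ℓ ⊕ Bool} (h : Arc hk hℓ a s t) : rank t = rank s + 1 := by
  cases s with
  | inl s => exact rank_step (hk := hk) (hℓ := hℓ) h
  | inr b => exact absurd h id

end ISAproof
namespace ISAproof

/-- total number of levels -/
def RR (k ℓ : ℕ) : ℕ := k + L1 ℓ + 1 + L2 ℓ + k

variable {k ℓ : ℕ}

lemma rank_lt_RR (s : St k ℓ) : rank (Sum.inl s) < RR k ℓ := by
  have hK := k
  cases s with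
  | rdA j p => have := j.isLt; simp only [rank, RR]; omega
  | rdB α j p => have := j.isLt; simp only [rank, RR]; omega
  | outp β => simp only [rank, RR]; omega
  | vB α j r => have := j.isLt; simp only [rank, RR]; omega
  | vA j r => have := j.isLt; simp only [rank, RR]; omega

lemma rank_inr (b : Bool) : rank (Sum.inr b : St k ℓ ⊕ Bool) = RR k ℓ := rfl

lemma paths_inr (hk : 0 < k) (hℓ : 0 < ℓ) (a : Fin (nn k ℓ) → Bool) (b : Bool) :
    Paths hk hℓ a (Sum.inr b) = if b = true then {[Sum.inr true]} else ∅ := by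
  ext l
  constructor
  · rintro ⟨hc, hh, hl⟩
    cases l with
    | nil => simp at hh
    | cons x l' =>
        have hx : x = Sum.inr b := by simpa using hh
        subst hx
        cases l' with
        | nil =>
            have hb : b = true := by simpa using hl
            subst hb
            simp
        | cons y l'' =>
            rw [List.Chain', List.isChain_cons_cons] at hc
            exact absurd hc.1 id
  · intro hl
    by_cases hb : b = true
    · rw [if_pos hb] at hl
      subst hb
      rw [hl]
      exact ⟨List.IsChain.singleton _, by simp, by simp⟩
    · rw [if_neg hb] at hl
      exact absurd hl (by simp)

lemma paths_inl (hk : 0 < k) (hℓ : 0 < ℓ) (a : Fin (nn k ℓ) → Bool) (s : St k ℓ)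
    (l : List (St k ℓ ⊕ Bool)) :
    l ∈ Paths hk hℓ a (Sum.inl s) ↔
      ∃ t l', Arc hk hℓ a (Sum.inl s) t ∧ l = (Sum.inl s)::l' ∧ l' ∈ Paths hk hℓ a t := by
  constructor
  · rintro ⟨hc, hh, hl⟩
    cases l with
    | nil => simp at hh
    | cons x l' =>
        have hx : x = Sum.inl s := by simpa using hh
        subst hx
        cases l' with
        | nil => simp at hl
        | cons y l'' =>
            rw [List.Chain', List.isChain_cons_cons] at hc
            rw [List.getLast?_cons_cons] at hl
            exact ⟨y, y::l'', hc.1, rfl, hc.2, by simp, hl⟩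
  · rintro ⟨t, l', harc, rfl, hc, hh, hl⟩
    refine ⟨?_, by simp, ?_⟩
    · cases l' with
      | nil => simp at hh
      | cons y l'' =>
          have hy : y = t := by simpa using hh
          subst hy
          exact List.isChain_cons_cons.mpr ⟨harc, hc⟩
    · cases l' with
      | nil => simp at hh
      | cons y l'' => rw [List.getLast?_cons_cons]; exact hl

lemma paths_main (hk : 0 < k) (hℓ : 0 < ℓ) (a : Fin (nn k ℓ) → Bool) :
    ∀ (d : ℕ) (s : St k ℓ ⊕ Bool), RR k ℓ - rank s ≤ d →
      (¬ cond a s → Paths hk hℓ a s = ∅) ∧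
      (cond a s → ∃ l, Paths hk hℓ a s = {l}) := by
  intro d
  induction d with
  | zero =>
      intro s hd
      cases s with
      | inl s => exact absurd hd (by have := rank_lt_RR s; omega)
      | inr b =>
          rw [paths_inr]
          constructor
          · intro hnc
            have hb : b ≠ true := fun h => hnc h
            rw [if_neg hb]
          · intro hc
            rw [if_pos (show b = true from hc)]
            exact ⟨_, rfl⟩
  | succ d ih =>
      intro s hd
      cases s with
      | inr b =>
          rw [paths_inr]
          constructor
          · intro hnc
            have hb : b ≠ true := fun h => hnc h
            rw [if_neg hb]
          · intro hc
            rw [if_pos (show b = true from hc)]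
            exact ⟨_, rfl⟩
      | inl s =>
          have hstep := step_exists hk hℓ a s
          constructor
          · intro hnc
            ext l
            simp only [Set.mem_empty_iff_false, iff_false]
            intro hl
            rw [paths_inl] at hl
            obtain ⟨t, l', harc, rfl, hl'⟩ := hl
            have hrt : rank t = rank (Sum.inl s) + 1 := arc_rank (hk := hk) (hℓ := hℓ) harc
            have hnct : ¬ cond a t := fun hct => hnc (hstep.mpr ⟨t, harc, hct⟩)
            have := (ih t (by omega)).1 hnct
            rw [this] at hl'
            exact hl'
          · intro hc
            obtain ⟨t, harc, hct⟩ := hstep.mp hc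
            have hrt : rank t = rank (Sum.inl s) + 1 := arc_rank (hk := hk) (hℓ := hℓ) harc
            obtain ⟨l₀, hl₀⟩ := (ih t (by omega)).2 hct
            refine ⟨(Sum.inl s)::l₀, ?_⟩
            ext l
            rw [paths_inl]
            constructor
            · rintro ⟨t', l', harc', rfl, hl'⟩
              by_cases hct' : cond a t'
              · have ht' : t' = t := step_unique hk hℓ a s harc' hct' harc hct
                subst ht'
                rw [hl₀, Set.mem_singleton_iff] at hl'
                rw [hl']
                exact rfl
              · have hrt' : rank t' = rank (Sum.inl s) + 1 := arc_rank (hk := hk) (hℓ := hℓ) harc'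
                have := (ih t' (by omega)).1 hct'
                rw [this] at hl'
                exact absurd hl' id
            · intro hl
              rw [Set.mem_singleton_iff] at hl
              subst hl
              exact ⟨t, l₀, harc, rfl, by rw [hl₀]; rfl⟩

lemma paths_main' (hk : 0 < k) (hℓ : 0 < ℓ) (a : Fin (nn k ℓ) → Bool) (s : St k ℓ ⊕ Bool) :
    (¬ cond a s → Paths hk hℓ a s = ∅) ∧
    (cond a s → ∃ l, Paths hk hℓ a s = {l}) :=
  paths_main hk hℓ a (RR k ℓ) s (Nat.sub_le _ _)

lemma reach_iff (hk : 0 < k) (hℓ : 0 < ℓ) (a : Fin (nn k ℓ) → Bool) (s : St k ℓ ⊕ Bool) :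
    Relation.ReflTransGen (Arc hk hℓ a) s (Sum.inr true) ↔ cond a s := by
  constructor
  · intro h
    obtain ⟨l, hchain, hlast⟩ := List.exists_isChain_cons_of_relationReflTransGen h
    by_contra hnc
    have hP := (paths_main' hk hℓ a s).1 hnc
    have hmem : (s::l) ∈ Paths hk hℓ a s := by
      refine ⟨hchain, by simp, ?_⟩
      rw [List.getLast?_eq_getLast (List.cons_ne_nil _ _)]
      exact congrArg some hlast
    rw [hP] at hmem
    exact hmem
  · intro hc
    obtain ⟨l, hl⟩ := (paths_main' hk hℓ a s).2 hc
    have hmem : l ∈ Paths hk hℓ a s := by rw [hl]; rfl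
    obtain ⟨hchain, hhead, hlast⟩ := hmem
    cases l with
    | nil => simp at hhead
    | cons x rest =>
        have hx : x = s := by simpa using hhead
        subst hx
        refine List.relationReflTransGen_of_exists_isChain_cons rest
          hchain ?_
        rw [List.getLast?_eq_getLast (List.cons_ne_nil _ _)] at hlast
        exact Option.some.inj hlast

lemma nodup_of_chain' (hk : 0 < k) (hℓ : 0 < ℓ) (a : Fin (nn k ℓ) → Bool)
    {l : List (St k ℓ ⊕ Bool)} (h : l.Chain' (Arc hk hℓ a)) : l.Nodup := by
  have h2 : l.Chain' (fun x y => rank x < rank y) := by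
    refine List.IsChain.imp ?_ h
    intro x y hxy
    have := arc_rank hxy
    omega
  haveI : IsTrans (St k ℓ ⊕ Bool) (fun x y => rank x < rank y) :=
    ⟨fun a b c h1 h2 => by omega⟩
  have h3 : l.Pairwise (fun x y => rank x < rank y) :=
    List.isChain_iff_pairwise.mp h2
  refine List.Pairwise.imp ?_ h3
  intro x y hxy
  intro hxyeq
  subst hxyeq
  omega

variable (k ℓ : ℕ)

/-! ### relating to ISA -/

def st0 (hk : 0 < k) : St k ℓ := St.rdA ⟨0, hk⟩ ⟨0, Nat.two_pow_pos 0⟩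

lemma ISA_eq (a : Fin (nn k ℓ) → Bool) :
    ISA k ℓ a = ext a (k + ℓ*2^k + val a (k + ℓ*(Addr a)) ℓ) := by
  have h0 : Addr a = ∑ i ∈ Finset.range k, (if ext a i = true then 2^(k-1-i) else 0) := by
    unfold Addr val
    exact Finset.sum_congr rfl (fun i _ => by rw [Nat.zero_add])
  rw [h0]
  rfl

lemma cond_st0 (hk : 0 < k) (hℓ : 0 < ℓ) (a : Fin (nn k ℓ) → Bool) :
    cond a (Sum.inl (st0 k ℓ hk)) ↔ ISA k ℓ a = true := by
  rw [ISA_eq]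
  simp only [cond, st0, OUT]
  have e4 : (0:ℕ) * 2^(k-0) + val a 0 (k-0) = Addr a := by
    simp only [Nat.zero_mul, Nat.zero_add, Nat.sub_zero, Addr]
  rw [e4]
  have e5 : val a (k + ℓ*(Addr a)) ℓ
      = val a (k + ℓ*(Addr a)) (L1 ℓ) * 2^(L2 ℓ) + B2v a := by
    have h := val_append a (k + ℓ*(Addr a)) (L1 ℓ) (L2 ℓ)
    rw [show L1 ℓ + L2 ℓ = ℓ by simp only [L1, L2]; omega] at h
    exact h
  rw [e5]

lemma step_ne_st0 (hk : 0 < k) (hℓ : 0 < ℓ) {b : Bool} {s : St k ℓ} {t : St k ℓ ⊕ Bool}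
    (h : Step hk hℓ b s t) : t ≠ Sum.inl (st0 k ℓ hk) := by
  have hrank := rank_step (hk := hk) (hℓ := hℓ) h
  intro heq
  rw [heq] at hrank
  have h0 : rank (Sum.inl (st0 k ℓ hk) : St k ℓ ⊕ Bool) = 0 := rfl
  omega

/-! ### the branching program -/

noncomputable def eqv : St k ℓ ≃ Fin (NN k ℓ) := Fintype.equivFin _

noncomputable def Fm : (St k ℓ ⊕ Bool) → (Fin (NN k ℓ) ⊕ Bool) := Sum.map (eqv k ℓ) id
noncomputable def Gm : (Fin (NN k ℓ) ⊕ Bool) → (St k ℓ ⊕ Bool) := Sum.map (eqv k ℓ).symm id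

lemma GF (x : St k ℓ ⊕ Bool) : Gm k ℓ (Fm k ℓ x) = x := by
  rcases x with u | b <;> simp [Fm, Gm]

lemma FG (x : Fin (NN k ℓ) ⊕ Bool) : Fm k ℓ (Gm k ℓ x) = x := by
  rcases x with u | b <;> simp [Fm, Gm]

variable {k ℓ}

noncomputable def prog (hk : 0 < k) (hℓ : 0 < ℓ) : BranchProg (nn k ℓ) where
  size := NN k ℓ
  start := Sum.inl (eqv k ℓ (st0 k ℓ hk))
  A0 u v := Step hk hℓ false ((eqv k ℓ).symm u) (Gm k ℓ v)
  A1 u v := Step hk hℓ true ((eqv k ℓ).symm u) (Gm k ℓ v)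
  var u := varOf ((eqv k ℓ).symm u)
  A0_ne_start := by
    intro u v h hv
    subst hv
    exact step_ne_st0 k ℓ hk hℓ h (by simp [Gm])
  A1_ne_start := by
    intro u v h hv
    subst hv
    exact step_ne_st0 k ℓ hk hℓ h (by simp [Gm])

lemma arc_iff (hk : 0 < k) (hℓ : 0 < ℓ) (a : Fin (nn k ℓ) → Bool)
    (x y : Fin (NN k ℓ) ⊕ Bool) :
    (prog hk hℓ).arc a x y ↔ Arc hk hℓ a (Gm k ℓ x) (Gm k ℓ y) := by
  rcases x with u | b
  · show (a (varOf ((eqv k ℓ).symm u)) = false ∧ _) ∨ (a (varOf ((eqv k ℓ).symm u)) = true ∧ _) ↔ _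
    have hG : Gm k ℓ (Sum.inl u) = Sum.inl ((eqv k ℓ).symm u) := rfl
    rw [hG]
    show _ ↔ Step hk hℓ (a (varOf ((eqv k ℓ).symm u))) ((eqv k ℓ).symm u) (Gm k ℓ y)
    cases hb : a (varOf ((eqv k ℓ).symm u)) <;> simp only [hb] <;>
      simp only [Bool.false_eq_true, false_and, false_or, Bool.true_eq_false, or_false] <;>
      rw [true_and] <;> exact Iff.rfl
  · exact Iff.rfl

lemma arc_fwd (hk : 0 < k) (hℓ : 0 < ℓ) (a : Fin (nn k ℓ) → Bool)
    {x y : St k ℓ ⊕ Bool} (h : Arc hk hℓ a x y) :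
    (prog hk hℓ).arc a (Fm k ℓ x) (Fm k ℓ y) := by
  rw [arc_iff hk hℓ a, GF, GF]
  exact h

lemma computes_NBP (hk : 0 < k) (hℓ : 0 < ℓ) : (prog hk hℓ).ComputesNBP (ISA k ℓ) := by
  intro a
  rw [← cond_st0 k ℓ hk hℓ a, ← reach_iff hk hℓ a]
  constructor
  · intro h
    have h2 := Relation.ReflTransGen.lift (Fm k ℓ) (fun x y hxy => arc_fwd hk hℓ a hxy) _ _ h
    exact h2
  · intro h
    have h2 := Relation.ReflTransGen.lift (Gm k ℓ)
      (fun x y hxy => (arc_iff hk hℓ a x y).mp hxy) _ _ h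
    have e1 : Gm k ℓ ((prog hk hℓ).start) = Sum.inl (st0 k ℓ hk) := by simp [prog, Gm]
    change Relation.ReflTransGen (Arc hk hℓ a) (Gm k ℓ (prog hk hℓ).start) (Gm k ℓ (Sum.inr true)) at h2
    rw [e1] at h2
    exact h2

lemma Fm_inj : Function.Injective (Fm k ℓ) := fun x y hxy => by
  have := congrArg (Gm k ℓ) hxy
  rwa [GF, GF] at this

lemma accPaths_eq (hk : 0 < k) (hℓ : 0 < ℓ) (a : Fin (nn k ℓ) → Bool) :
    (prog hk hℓ).accPaths a
      = (List.map (Fm k ℓ)) '' (Paths hk hℓ a (Sum.inl (st0 k ℓ hk))) := by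
  ext l
  constructor
  · rintro ⟨hnd, hch, hh, hl⟩
    refine ⟨l.map (Gm k ℓ), ⟨?_, ?_, ?_⟩, ?_⟩
    · exact List.isChain_map_of_isChain _ (fun x y hxy => (arc_iff hk hℓ a x y).mp hxy) hch
    · erw [List.head?_map, hh]
      have e1 : Gm k ℓ ((prog hk hℓ).start) = Sum.inl (st0 k ℓ hk) := by simp [prog, Gm]
      erw [Option.map_some, e1]
    · erw [List.getLast?_map, hl]
      rfl
    · erw [List.map_map]
      have : (Fm k ℓ) ∘ (Gm k ℓ) = id := funext (FG k ℓ)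
      erw [this, List.map_id]
  · rintro ⟨l₀, ⟨hch, hh, hl⟩, rfl⟩
    refine ⟨?_, ?_, ?_, ?_⟩
    · exact (nodup_of_chain' hk hℓ a hch).map Fm_inj
    · exact List.isChain_map_of_isChain _ (fun x y hxy => arc_fwd hk hℓ a hxy) hch
    · erw [List.head?_map, hh]
      rfl
    · erw [List.getLast?_map, hl]
      rfl

lemma computes_PBP (hk : 0 < k) (hℓ : 0 < ℓ) : (prog hk hℓ).ComputesPBP (ISA k ℓ) := by
  intro a
  rw [accPaths_eq hk hℓ a, ← cond_st0 k ℓ hk hℓ a]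
  by_cases hc : cond a (Sum.inl (st0 k ℓ hk))
  · obtain ⟨l, hl⟩ := (paths_main' hk hℓ a _).2 hc
    erw [hl, Set.image_singleton, Set.ncard_singleton]
    simpa using hc
  · rw [(paths_main' hk hℓ a _).1 hc, Set.image_empty]
    erw [Set.ncard_empty]
    simp only [Nat.odd_iff, Nat.zero_mod]
    constructor
    · intro h; exact absurd h hc
    · intro h; omega

/-! ### the size bound over the reals -/

lemma half_bound (hℓ : 0 < ℓ) :
    (2:ℝ)^(L1 ℓ) + 2^(L2 ℓ + 1) ≤ 3 * 2^((ℓ:ℝ)/2) := by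
  rcases Nat.even_or_odd ℓ with ⟨m, hm⟩ | ⟨m, hm⟩
  · have h1 : L1 ℓ = m := by simp only [L1]; omega
    have h2 : L2 ℓ = m := by simp only [L2]; omega
    have h3 : (ℓ:ℝ)/2 = (m:ℕ) := by
      have : (ℓ:ℝ) = 2*m := by rw [hm]; push_cast; ring
      rw [this]; push_cast; ring
    rw [h1, h2, h3, Real.rpow_natCast]
    rw [pow_succ]
    ring_nf
    norm_num
  · have h1 : L1 ℓ = m + 1 := by simp only [L1]; omega
    have h2 : L2 ℓ = m := by simp only [L2]; omega
    have h3 : (ℓ:ℝ)/2 = (m:ℕ) + 1/2 := by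
      have : (ℓ:ℝ) = 2*m+1 := by rw [hm]; push_cast; ring
      rw [this]; push_cast; ring
    rw [h1, h2, h3, Real.rpow_add (by norm_num), Real.rpow_natCast]
    set x := (2:ℝ)^((1:ℝ)/2) with hx
    have hx2 : x^(2:ℕ) = 2 := by
      rw [hx, ← Real.rpow_natCast ((2:ℝ)^((1:ℝ)/2)) 2, ← Real.rpow_mul (by norm_num)]
      norm_num
    have hxpos : 0 < x := Real.rpow_pos_of_pos (by norm_num) _
    have hpm : (0:ℝ) < 2^m := by positivity
    have h34 : 4 ≤ 3*x := by nlinarith [hx2, hxpos]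
    have : (2:ℝ)^(m+1) + 2^(m+1) = 4 * 2^m := by rw [pow_succ]; ring
    rw [this]
    calc (4:ℝ) * 2^m ≤ (3*x) * 2^m := by nlinarith
    _ = 3 * (2^m * x) := by ring

lemma NN_real (hk : 0 < k) (hℓ : 0 < ℓ) :
    (NN k ℓ : ℝ) ≤ 3 * 2^((k:ℝ) + (ℓ:ℝ)/2) + 2^(ℓ:ℝ) := by
  have h1 := NN_le k ℓ
  have h2 : (NN k ℓ : ℝ) ≤ ((2^(k + L1 ℓ) + 2^(k + L2 ℓ + 1) + 2^ℓ : ℕ) : ℝ) :=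
    Nat.cast_le.mpr h1
  have h3 : ((2^(k + L1 ℓ) + 2^(k + L2 ℓ + 1) + 2^ℓ : ℕ) : ℝ)
      = (2:ℝ)^(k + L1 ℓ) + 2^(k + L2 ℓ + 1) + 2^ℓ := by push_cast; ring
  rw [h3] at h2
  have h4 : (2:ℝ)^((k:ℝ) + (ℓ:ℝ)/2) = 2^k * 2^((ℓ:ℝ)/2) := by
    rw [Real.rpow_add (by norm_num), Real.rpow_natCast]
  have h5 : (2:ℝ)^(ℓ:ℝ) = 2^ℓ := Real.rpow_natCast 2 ℓ
  rw [h4, h5]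
  have h6 : (2:ℝ)^(k + L1 ℓ) + 2^(k + L2 ℓ + 1)
      = 2^k * ((2:ℝ)^(L1 ℓ) + 2^(L2 ℓ + 1)) := by
    rw [pow_add, show k + L2 ℓ + 1 = k + (L2 ℓ + 1) by omega, pow_add]
    ring
  have h7 := half_bound (ℓ := ℓ) hℓ
  have h8 : (0:ℝ) < 2^k := by positivity
  nlinarith [h2, h6, h7, h8]

end ISAproof

theorem stmt15 (k ℓ : ℕ) (hk : 1 ≤ k) (hℓ : 1 ≤ ℓ) :
    (NBPc (ISA k ℓ) : ℝ) ≤ 3 * 2^((k:ℝ) + (ℓ:ℝ)/2) + 2^(ℓ:ℝ) ∧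
    (PBPc (ISA k ℓ) : ℝ) ≤ 3 * 2^((k:ℝ) + (ℓ:ℝ)/2) + 2^(ℓ:ℝ) := by
  have hk' : 0 < k := hk
  have hl' : 0 < ℓ := hℓ
  have hN : NBPc (ISA k ℓ) ≤ ISAproof.NN k ℓ :=
    Nat.sInf_le ⟨ISAproof.prog hk' hl', rfl, ISAproof.computes_NBP hk' hl'⟩
  have hP : PBPc (ISA k ℓ) ≤ ISAproof.NN k ℓ :=
    Nat.sInf_le ⟨ISAproof.prog hk' hl', rfl, ISAproof.computes_PBP hk' hl'⟩
  have hreal := ISAproof.NN_real hk' hl'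
  constructor
  · exact le_trans (Nat.cast_le.mpr hN) hreal
  · exact le_trans (Nat.cast_le.mpr hP) hreal
end

section
/- For all k, ℓ ∈ ℕ with k, ℓ ≥ 1, BF(ISA_{k,ℓ}) ≤ 7·2^k·2^ℓ. -/
inductive Formula (n : ℕ) : Type where
  | const : Bool → Formula n
  | lit : Fin n → Bool → Formula n
  | node : (Bool → Bool → Bool) → Formula n → Formula n → Formula n

namespace Formula

def eval {n : ℕ} : Formula n → (Fin n → Bool) → Bool
  | const b, _ => b
  | lit i pos, a => if pos then a i else !(a i)
  | node g φ ψ, a => g (φ.eval a) (ψ.eval a)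

def size {n : ℕ} : Formula n → ℕ
  | const _ => 0
  | lit _ _ => 1
  | node _ φ ψ => φ.size + ψ.size

end Formula

def bval (d : ℕ) (b : ℕ → Bool) : ℕ :=
  ∑ i ∈ Finset.range d, if b i then 2^(d-1-i) else 0

lemma bval_congr {d : ℕ} {b c : ℕ → Bool} (h : ∀ i < d, b i = c i) :
    bval d b = bval d c := by
  unfold bval
  exact Finset.sum_congr rfl fun i hi => by rw [h i (Finset.mem_range.mp hi)]

lemma bval_succ (d : ℕ) (b : ℕ → Bool) :
    bval (d+1) b = (if b 0 then 2^d else 0) + bval d (fun i => b (i+1)) := by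
  unfold bval
  rw [Finset.sum_range_succ']
  have e1 : (∑ i ∈ Finset.range d, if b (i + 1) = true then 2 ^ (d + 1 - 1 - (i + 1)) else 0)
      = ∑ i ∈ Finset.range d, if b (i + 1) = true then 2 ^ (d - 1 - i) else 0 :=
    Finset.sum_congr rfl fun i _ => by
      have h : d + 1 - 1 - (i + 1) = d - 1 - i := by omega
      rw [h]
  have e2 : d + 1 - 1 - 0 = d := by omega
  rw [e1, e2, Nat.add_comm]

lemma bval_lt (d : ℕ) (b : ℕ → Bool) : bval d b < 2^d := by
  induction d generalizing b with
  | zero => simp [bval]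
  | succ d ih =>
    rw [bval_succ]
    have := ih (fun i => b (i+1))
    have h2 : 2^(d+1) = 2^d + 2^d := by rw [pow_succ]; ring
    split <;> omega

def sel {n : ℕ} : ℕ → (ℕ → Fin n) → (ℕ → Formula n) → Formula n
  | 0, _, leaf => leaf 0
  | d+1, addr, leaf =>
    .node (fun s t => s || t)
      (.node (fun s t => s && t) (.lit (addr 0) true)
        (sel d (fun i => addr (i+1)) (fun j => leaf (2^d + j))))
      (.node (fun s t => s && t) (.lit (addr 0) false)
        (sel d (fun i => addr (i+1)) leaf))

lemma sel_eval {n : ℕ} (a : Fin n → Bool) :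
    ∀ (d : ℕ) (addr : ℕ → Fin n) (leaf : ℕ → Formula n),
    (sel d addr leaf).eval a = (leaf (bval d (fun i => a (addr i)))).eval a := by
  intro d
  induction d with
  | zero => intro addr leaf; simp [sel, bval]
  | succ d ih =>
    intro addr leaf
    rw [bval_succ]
    simp only [sel, Formula.eval, ih]
    cases h : a (addr 0) <;> simp [h, Nat.add_comm]

lemma sel_size {n : ℕ} (L : ℕ) :
    ∀ (d : ℕ) (addr : ℕ → Fin n) (leaf : ℕ → Formula n),
    (∀ m, (leaf m).size ≤ L) → (sel d addr leaf).size ≤ 2^d * (L + 2) - 2 := by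
  intro d
  induction d with
  | zero =>
    intro addr leaf h
    simp only [sel, pow_zero, one_mul]
    have := h 0
    omega
  | succ d ih =>
    intro addr leaf h
    have h1 := ih (fun i => addr (i+1)) (fun j => leaf (2^d + j)) (fun m => h _)
    have h2 := ih (fun i => addr (i+1)) leaf h
    have hp : 1 ≤ 2^d := Nat.one_le_two_pow
    have e : 2^(d+1) * (L+2) = 2^d * (L+2) + 2^d * (L+2) := by rw [pow_succ]; ring
    have hq : 2 ≤ 2^d * (L+2) := by
      calc 2 = 1 * 2 := by ring
        _ ≤ 2^d * (L+2) := Nat.mul_le_mul hp (by omega)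
    simp only [sel, Formula.size]
    omega

noncomputable def BFc {n : ℕ} (f : (Fin n → Bool) → Bool) : ℕ :=
  sInf {s | ∃ φ : Formula n, φ.size = s ∧ ∀ a, φ.eval a = f a}

theorem stmt16 (k ℓ : ℕ) (hk : 1 ≤ k) (hℓ : 1 ≤ ℓ) :
    BFc (ISA k ℓ) ≤ 7 * 2^k * 2^ℓ := by
  have hn0 : 0 < k + 2^k*ℓ + 2^ℓ := by positivity
  set idx : ℕ → Fin (k + 2^k*ℓ + 2^ℓ) :=
    fun j => if h : j < k + 2^k*ℓ + 2^ℓ then ⟨j, h⟩ else ⟨0, hn0⟩ with hidx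
  set φ : Formula (k + 2^k*ℓ + 2^ℓ) :=
    sel k idx (fun m => sel ℓ (fun i => idx (k + ℓ*m + i))
      (fun j => Formula.lit (idx (k + ℓ*2^k + j)) true)) with hφ
  have hinner : ∀ m, (sel ℓ (fun i => idx (k + ℓ*m + i))
      (fun j => Formula.lit (idx (k + ℓ*2^k + j)) true)).size ≤ 2^ℓ * (1 + 2) - 2 :=
    fun m => sel_size 1 ℓ _ _ (fun j => le_refl 1)
  have houter := sel_size (2^ℓ * (1 + 2) - 2) k idx _ hinner
  have hq : 2 ≤ 2^ℓ * (1 + 2) := by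
    have : 1 ≤ 2^ℓ := Nat.one_le_two_pow
    omega
  have hL : (2^ℓ * (1 + 2) - 2) + 2 = 2^ℓ * 3 := by omega
  rw [hL, ← hφ] at houter
  have hbig : 2^k * (2^ℓ * 3) ≤ 7 * 2^k * 2^ℓ := by
    calc 2^k * (2^ℓ * 3) = 3 * (2^k * 2^ℓ) := by ring
      _ ≤ 7 * (2^k * 2^ℓ) := Nat.mul_le_mul_right _ (by norm_num)
      _ = 7 * 2^k * 2^ℓ := by ring
  have hsize : φ.size ≤ 7 * 2^k * 2^ℓ := by omega
  have hcomm : 2^k * ℓ = ℓ * 2^k := Nat.mul_comm _ _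
  have heval : ∀ a, φ.eval a = ISA k ℓ a := by
    intro a
    set b : ℕ → Bool :=
      fun j => if h : j < k + 2^k*ℓ + 2^ℓ then a ⟨j, h⟩ else false with hb
    have hba : ∀ j, j < k + 2^k*ℓ + 2^ℓ → b j = a (idx j) := by
      intro j hj
      simp [hb, hidx, hj]
    have hISA : ISA k ℓ a
        = b (k + ℓ*2^k + bval ℓ (fun i => b (k + ℓ*(bval k b) + i))) := rfl
    have hα : bval k (fun i => a (idx i)) = bval k b := by
      apply bval_congr
      intro i hi
      exact (hba i (by omega)).symm
    have hαlt : bval k b < 2^k := bval_lt k b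
    have hmul : ℓ * (bval k b) + ℓ ≤ ℓ * 2^k := by
      calc ℓ * (bval k b) + ℓ = ℓ * (bval k b + 1) := by ring
        _ ≤ ℓ * 2^k := Nat.mul_le_mul_left _ hαlt
    have hβ : bval ℓ (fun i => a (idx (k + ℓ*(bval k b) + i)))
        = bval ℓ (fun i => b (k + ℓ*(bval k b) + i)) := by
      apply bval_congr
      intro i hi
      exact (hba _ (by omega)).symm
    have hβlt : bval ℓ (fun i => b (k + ℓ*(bval k b) + i)) < 2^ℓ := bval_lt _ _
    rw [hφ, sel_eval, sel_eval, hα, hβ, hISA]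
    simp only [Formula.eval, if_true]
    exact (hba _ (by omega)).symm
  have hmem : φ.size ∈ {s | ∃ ψ : Formula (k + 2^k*ℓ + 2^ℓ),
      ψ.size = s ∧ ∀ a, ψ.eval a = ISA k ℓ a} := ⟨φ, rfl, heval⟩
  exact le_trans (Nat.sInf_le hmem) hsize
end

section
/- For every family of Boolean functions F = {f_n}_{n∈ℕ} (f_n of arity n), there is a constant c > 0 such that for all n ≥ 8, NeciporukLB^{NBP}_F(n) ≤ c·n^(3/2)/log₂ n and NeciporukLB^{⊕BP}_F(n) ≤ c·n^(3/2)/log₂ n; in particular both are in O(n^(3/2)/log₂ n). -/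
def IsPartition {n p : ℕ} (V : Fin p → Finset (Fin n)) : Prop :=
  (∀ i, (V i).Nonempty) ∧ (∀ i j, i ≠ j → Disjoint (V i) (V j)) ∧ ∀ x : Fin n, ∃ i, x ∈ V i
def IsNeciporuk (M : ∀ n : ℕ, ((Fin n → Bool) → Bool) → ℕ) (b : ℕ → ℕ) : Prop :=
  (∀ m m' : ℕ, 0 < m → m ≤ m' → b m ≤ b m') ∧
  ∀ (n p : ℕ) (f : (Fin n → Bool) → Bool) (V : Fin p → Finset (Fin n)),
    IsPartition V → (∑ i, b (numSubfuns f (V i))) ≤ M n f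


namespace S17
variable {μ : ℕ}
abbrev Bm (μ : ℕ) := Fin (μ+1) → Bool
abbrev VarIdx (μ : ℕ) := Fin (μ+1) ⊕ ((Bm μ × Bool × Fin (μ+1)) ⊕ (Bm μ × Bm μ))
def vs (t : Fin (μ+1)) : VarIdx μ := Sum.inl t
def vx (σ : Bm μ) (φ : Bool) (t : Fin (μ+1)) : VarIdx μ := Sum.inr (Sum.inl (σ, φ, t))
def vy (a b : Bm μ) : VarIdx μ := Sum.inr (Sum.inr (a, b))
inductive Q (μ : ℕ) where
  | st : Q μ
  | sel (σ : Bm μ) (t : Fin (μ+1)) : Q μ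
  | fu (σ : Bm μ) (j : Fin (μ+1)) (w : Fin j → Bool) : Q μ
  | mid (a b : Bm μ) : Q μ
  | es (b : Bm μ) (j : Fin (μ+1)) (w : Fin j → Bool) : Q μ
  | rv (σ : Bm μ) (j : Fin (μ+1)) (w : Fin (j+1) → Bool) : Q μ
abbrev z0 : Fin (μ+1) := ⟨0, Nat.succ_pos μ⟩
def varQ : Q μ → VarIdx μ
  | .st => vs z0
  | .sel _ t => vs t
  | .fu σ j _ => vx σ false j
  | .mid a b => vy a b
  | .es _ j _ => vs j
  | .rv σ j _ => vx σ true ⟨μ - j.val, by omega⟩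
def ext1 {k : ℕ} (w : Fin k → Bool) (c : Bool) : Fin (k+1) → Bool :=
  fun t => if h : t.val < k then w ⟨t.val, h⟩ else c
def padF (j : Fin (μ+1)) (w : Fin j → Bool) (c : Bool) : Bm μ :=
  fun t => if h : t.val < j.val then w ⟨t.val, h⟩ else c
def padW (j : Fin (μ+1)) (w : Fin j → Bool) (g : Bm μ) : Bm μ :=
  fun t => if h : t.val < j.val then w ⟨t.val, h⟩ else g t
def stepc : Q μ → Bool → (Q μ ⊕ Bool) → Prop
  | .st, _, v => ∃ σ, v = .inl (.sel σ z0)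
  | .sel σ t, c, v =>
      c = σ t ∧
      (if h : t.val + 1 < μ+1 then v = .inl (.sel σ ⟨t.val+1, h⟩)
       else v = .inl (.fu σ z0 Fin.elim0))
  | .fu σ j w, c, v =>
      (if h : j.val + 1 < μ+1 then v = .inl (.fu σ ⟨j.val+1, h⟩ (ext1 w c))
       else ∃ b, v = .inl (.mid (padF j w c) b))
  | .mid _ b, c, v => c = true ∧ v = .inl (.es b z0 Fin.elim0)
  | .es b j w, c, v =>
      (if h : j.val + 1 < μ+1 then v = .inl (.es b ⟨j.val+1, h⟩ (ext1 w c))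
       else v = .inl (.rv (padF j w c) ⟨μ, by omega⟩ b))
  | .rv σ j w, c, v =>
      c = w ⟨0, Nat.succ_pos _⟩ ∧
      (match j, w with
       | ⟨0, _⟩, _ => v = .inr true
       | ⟨j'+1, h⟩, w => v = .inl (.rv σ ⟨j', by omega⟩ (fun t => w t.succ)))
def rel (α : VarIdx μ → Bool) : (Q μ ⊕ Bool) → (Q μ ⊕ Bool) → Prop
  | .inl q, v => stepc q (α (varQ q)) v
  | .inr _, _ => False
def sigSt (α : VarIdx μ → Bool) : Bm μ := fun t => α (vs t)
def uSt (α : VarIdx μ → Bool) : Bm μ := fun t => α (vx (sigSt α) false t)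
def vSt (α : VarIdx μ → Bool) : Bm μ := fun t => α (vx (sigSt α) true t)
def Hfun (α : VarIdx μ → Bool) : Bool := α (vy (uSt α) (vSt α))
def RT (α : VarIdx μ → Bool) (q : Q μ) : Prop :=
  Relation.ReflTransGen (rel α) (.inl q) (.inr true)

-- helpers
lemma fmk {a b : ℕ} (ha : a < μ+1) (hb : b < μ+1) (h : a = b) :
    (⟨a, ha⟩ : Fin (μ+1)) = ⟨b, hb⟩ := by subst h; rfl

lemma RT_iff_step (α : VarIdx μ → Bool) (q : Q μ) :
    RT α q ↔ ∃ v, rel α (.inl q) v ∧ Relation.ReflTransGen (rel α) v (.inr true) := by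
  constructor
  · intro h
    rcases h.cases_head with h' | ⟨c, hc, hr⟩
    · simp at h'
    · exact ⟨c, hc, hr⟩
  · rintro ⟨v, h1, h2⟩; exact Relation.ReflTransGen.head h1 h2

lemma RTv_inr (α : VarIdx μ → Bool) (b : Bool) :
    Relation.ReflTransGen (rel α) (.inr b) (.inr true) ↔ b = true := by
  constructor
  · intro h
    rcases h.cases_head with h' | ⟨c, hc, _⟩
    · simpa using h'
    · exact absurd hc (by simp [rel])
  · rintro rfl; exact Relation.ReflTransGen.refl

lemma RT_inl_aux (α : VarIdx μ → Bool) (q : Q μ) :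
    Relation.ReflTransGen (rel α) (.inl q) (.inr true) ↔ RT α q := Iff.rfl

lemma C_rv (α : VarIdx μ → Bool) : ∀ (jv : ℕ) (hj : jv < μ+1) (σ : Bm μ)
    (w : Fin (jv+1) → Bool),
    RT α (.rv σ ⟨jv, hj⟩ w) ↔
      ∀ t : Fin (jv+1), α (vx σ true ⟨μ - jv + t.val, by omega⟩) = w t := by
  intro jv
  induction jv with
  | zero =>
    intro hj σ w
    rw [RT_iff_step]
    constructor
    · rintro ⟨v, ⟨hc, hv⟩, _⟩
      intro t
      have e1 : (⟨μ - 0 + t.val, by omega⟩ : Fin (μ+1)) = ⟨μ - 0, by omega⟩ :=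
        fmk _ _ (by omega)
      have e2 : t = ⟨0, Nat.succ_pos _⟩ := Fin.ext (by omega)
      rw [e1, e2]
      exact hc
    · intro h
      refine ⟨.inr true, ⟨?_, rfl⟩, Relation.ReflTransGen.refl⟩
      have := h ⟨0, Nat.succ_pos _⟩
      rw [show (⟨μ - 0 + 0, by omega⟩ : Fin (μ+1)) = ⟨μ - 0, by omega⟩ from fmk _ _ (by omega)] at this
      exact this
  | succ j' IH =>
    intro hj σ w
    rw [RT_iff_step]
    have hj' : j' < μ + 1 := by omega
    constructor
    · rintro ⟨v, ⟨hc, hv⟩, hr⟩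
      rw [hv] at hr
      rw [RT_inl_aux, IH hj' σ _] at hr
      intro t
      rcases Nat.eq_zero_or_pos t.val with h0 | hpos
      · have e1 : (⟨μ - (j'+1) + t.val, by omega⟩ : Fin (μ+1)) = ⟨μ - (j'+1), by omega⟩ :=
          fmk _ _ (by omega)
        have e2 : t = ⟨0, Nat.succ_pos _⟩ := Fin.ext (by simpa using h0)
        rw [e1, e2]
        exact hc
      · have := hr ⟨t.val - 1, by omega⟩
        have hsucc : (⟨t.val - 1, by omega⟩ : Fin (j'+1)).succ = t := by
          apply Fin.ext; simp; omega
        rw [hsucc] at this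
        rw [show (⟨μ - (j'+1) + t.val, by omega⟩ : Fin (μ+1))
             = ⟨μ - j' + (t.val - 1), by omega⟩ from fmk _ _ (by omega)]
        exact this
    · intro h
      refine ⟨.inl (.rv σ ⟨j', by omega⟩ (fun t => w t.succ)), ⟨?_, rfl⟩, ?_⟩
      · have := h ⟨0, Nat.succ_pos _⟩
        rw [show (⟨μ - (j'+1) + 0, by omega⟩ : Fin (μ+1)) = ⟨μ - (j'+1), by omega⟩ from fmk _ _ (by omega)] at this
        exact this
      · rw [RT_inl_aux, IH hj' σ _]
        intro t
        have := h t.succ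
        rw [show (⟨μ - (j'+1) + t.succ.val, by omega⟩ : Fin (μ+1))
             = ⟨μ - j' + t.val, by omega⟩ from fmk _ _ (by simp; omega)] at this
        exact this

-- evaluation lemmas
lemma padW_lt {j : Fin (μ+1)} {w : Fin j → Bool} {g : Bm μ} {t : Fin (μ+1)}
    (h : t.val < j.val) : padW j w g t = w ⟨t.val, h⟩ := dif_pos h
lemma padW_ge {j : Fin (μ+1)} {w : Fin j → Bool} {g : Bm μ} {t : Fin (μ+1)}
    (h : ¬ t.val < j.val) : padW j w g t = g t := dif_neg h
lemma padF_lt {j : Fin (μ+1)} {w : Fin j → Bool} {c : Bool} {t : Fin (μ+1)}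
    (h : t.val < j.val) : padF j w c t = w ⟨t.val, h⟩ := dif_pos h
lemma padF_ge {j : Fin (μ+1)} {w : Fin j → Bool} {c : Bool} {t : Fin (μ+1)}
    (h : ¬ t.val < j.val) : padF j w c t = c := dif_neg h
lemma ext1_lt {k : ℕ} {w : Fin k → Bool} {c : Bool} {t : Fin (k+1)}
    (h : t.val < k) : ext1 w c t = w ⟨t.val, h⟩ := dif_pos h
lemma ext1_ge {k : ℕ} {w : Fin k → Bool} {c : Bool} {t : Fin (k+1)}
    (h : ¬ t.val < k) : ext1 w c t = c := dif_neg h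

lemma padW_ext {g : Bm μ} {jv : ℕ} (hj : jv < μ+1) (hj1 : jv+1 < μ+1)
    (w : Fin jv → Bool) {c : Bool} (hc : g ⟨jv, hj⟩ = c) :
    padW (⟨jv+1, hj1⟩ : Fin (μ+1)) (ext1 w c) g = padW ⟨jv, hj⟩ w g := by
  funext t
  rcases lt_trichotomy t.val jv with h | h | h
  · rw [padW_lt (j := ⟨jv+1, hj1⟩) (show t.val < jv+1 by omega),
      padW_lt (j := ⟨jv, hj⟩) (show t.val < jv from h),
      ext1_lt (t := (⟨t.val, by omega⟩ : Fin (jv+1))) (show t.val < jv from h)]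
  · rw [padW_lt (j := ⟨jv+1, hj1⟩) (show t.val < jv+1 by omega),
      padW_ge (j := ⟨jv, hj⟩) (show ¬ t.val < jv by omega),
      ext1_ge (t := (⟨t.val, by omega⟩ : Fin (jv+1))) (show ¬ t.val < jv by omega), ← hc]
    congr 1
    exact Fin.ext h.symm
  · rw [padW_ge (j := ⟨jv+1, hj1⟩) (show ¬ t.val < jv+1 by omega),
      padW_ge (j := ⟨jv, hj⟩) (show ¬ t.val < jv by omega)]

lemma padF_leaf {g : Bm μ} {jv : ℕ} (hj : jv < μ+1) (hμ : jv = μ)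
    (w : Fin jv → Bool) {c : Bool} (hc : g ⟨jv, hj⟩ = c) :
    padF (⟨jv, hj⟩ : Fin (μ+1)) w c = padW ⟨jv, hj⟩ w g := by
  funext t
  by_cases h : t.val < jv
  · rw [padF_lt (j := ⟨jv, hj⟩) (show t.val < jv from h),
      padW_lt (j := ⟨jv, hj⟩) (show t.val < jv from h)]
  · rw [padF_ge (j := ⟨jv, hj⟩) (show ¬ t.val < jv from h),
      padW_ge (j := ⟨jv, hj⟩) (show ¬ t.val < jv from h), ← hc]
    congr 1
    exact Fin.ext (show jv = t.val by omega)

-- rel-shape lemmas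
section relshape
variable {α : VarIdx μ → Bool} {v : Q μ ⊕ Bool}

lemma rel_st : rel α (.inl .st) v ↔ ∃ σ, v = .inl (.sel σ z0) := Iff.rfl

lemma rel_sel {σ : Bm μ} {jv : ℕ} {hj : jv < μ+1} (hj1 : jv+1 < μ+1) :
    rel α (.inl (.sel σ ⟨jv, hj⟩)) v ↔
      (α (vs ⟨jv, hj⟩) = σ ⟨jv, hj⟩ ∧ v = .inl (.sel σ ⟨jv+1, hj1⟩)) := by
  simp only [rel, stepc, varQ]
  rw [dif_pos hj1]

lemma rel_sel_leaf {σ : Bm μ} {jv : ℕ} {hj : jv < μ+1} (hμ : ¬ (jv+1 < μ+1)) :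
    rel α (.inl (.sel σ ⟨jv, hj⟩)) v ↔
      (α (vs ⟨jv, hj⟩) = σ ⟨jv, hj⟩ ∧ v = .inl (.fu σ z0 Fin.elim0)) := by
  simp only [rel, stepc, varQ]
  rw [dif_neg hμ]

lemma rel_fu {σ : Bm μ} {jv : ℕ} {hj : jv < μ+1} {w : Fin jv → Bool} (hj1 : jv+1 < μ+1) :
    rel α (.inl (.fu σ ⟨jv, hj⟩ w)) v ↔
      v = .inl (.fu σ ⟨jv+1, hj1⟩ (ext1 w (α (vx σ false ⟨jv, hj⟩)))) := by
  simp only [rel, stepc, varQ]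
  rw [dif_pos hj1]

lemma rel_fu_leaf {σ : Bm μ} {jv : ℕ} {hj : jv < μ+1} {w : Fin jv → Bool}
    (hμ : ¬ (jv+1 < μ+1)) :
    rel α (.inl (.fu σ ⟨jv, hj⟩ w)) v ↔
      ∃ b, v = .inl (.mid (padF ⟨jv, hj⟩ w (α (vx σ false ⟨jv, hj⟩))) b) := by
  simp only [rel, stepc, varQ]
  rw [dif_neg hμ]

lemma rel_mid {a b : Bm μ} :
    rel α (.inl (.mid a b)) v ↔ (α (vy a b) = true ∧ v = .inl (.es b z0 Fin.elim0)) :=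
  Iff.rfl

lemma rel_es {b : Bm μ} {jv : ℕ} {hj : jv < μ+1} {w : Fin jv → Bool} (hj1 : jv+1 < μ+1) :
    rel α (.inl (.es b ⟨jv, hj⟩ w)) v ↔
      v = .inl (.es b ⟨jv+1, hj1⟩ (ext1 w (α (vs ⟨jv, hj⟩)))) := by
  simp only [rel, stepc, varQ]
  rw [dif_pos hj1]

lemma rel_es_leaf {b : Bm μ} {jv : ℕ} {hj : jv < μ+1} {w : Fin jv → Bool}
    (hμ : ¬ (jv+1 < μ+1)) :
    rel α (.inl (.es b ⟨jv, hj⟩ w)) v ↔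
      v = .inl (.rv (padF ⟨jv, hj⟩ w (α (vs ⟨jv, hj⟩))) ⟨μ, by omega⟩ b) := by
  simp only [rel, stepc, varQ]
  rw [dif_neg hμ]

end relshape

lemma C_mid (α : VarIdx μ → Bool) (a b : Bm μ) :
    RT α (.mid a b) ↔ α (vy a b) = true ∧ RT α (.es b z0 Fin.elim0) := by
  rw [RT_iff_step]
  constructor
  · rintro ⟨v, hv, hr⟩
    rw [rel_mid] at hv
    rw [hv.2] at hr
    exact ⟨hv.1, hr⟩
  · rintro ⟨hc, hr⟩
    exact ⟨_, rel_mid.mpr ⟨hc, rfl⟩, hr⟩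

lemma C_es (α : VarIdx μ → Bool) : ∀ (d jv : ℕ) (hd : jv + d = μ) (hj : jv < μ+1)
    (b : Bm μ) (w : Fin jv → Bool),
    RT α (.es b ⟨jv, hj⟩ w) ↔
      ∀ t, α (vx (padW ⟨jv, hj⟩ w (sigSt α)) true t) = b t := by
  intro d
  induction d with
  | zero =>
    intro jv hd hj b w
    have hμ : ¬ (jv+1 < μ+1) := by omega
    have hpad : padF (⟨jv, hj⟩ : Fin (μ+1)) w (α (vs ⟨jv, hj⟩)) = padW ⟨jv, hj⟩ w (sigSt α) :=
      padF_leaf hj (by omega) w rfl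
    rw [RT_iff_step]
    constructor
    · rintro ⟨v, hv, hr⟩
      rw [rel_es_leaf hμ] at hv
      rw [hv] at hr
      rw [RT_inl_aux, C_rv α μ (by omega)] at hr
      intro t
      have := hr ⟨t.val, by omega⟩
      rw [show (⟨μ - μ + (⟨t.val, by omega⟩ : Fin (μ+1)).val, by omega⟩ : Fin (μ+1)) = t
        from Fin.ext (show μ - μ + t.val = t.val by omega)] at this
      rw [show (⟨t.val, by omega⟩ : Fin (μ+1)) = t from Fin.ext rfl] at this
      rw [← hpad]
      exact this
    · intro h
      refine ⟨_, (rel_es_leaf hμ).mpr rfl, ?_⟩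
      rw [RT_inl_aux, C_rv α μ (by omega)]
      intro t
      have := h ⟨t.val, by omega⟩
      rw [← hpad] at this
      rw [show (⟨μ - μ + t.val, by omega⟩ : Fin (μ+1)) = ⟨t.val, by omega⟩
        from Fin.ext (show μ - μ + t.val = t.val by omega)]
      exact this
  | succ d IH =>
    intro jv hd hj b w
    have hj1 : jv + 1 < μ+1 := by omega
    have hpad := padW_ext (g := sigSt α) hj hj1 w (c := α (vs ⟨jv, hj⟩)) rfl
    rw [RT_iff_step]
    constructor
    · rintro ⟨v, hv, hr⟩
      rw [rel_es hj1] at hv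
      rw [hv] at hr
      rw [RT_inl_aux, IH (jv+1) (by omega) hj1 b _] at hr
      rw [← hpad]
      exact hr
    · intro h
      refine ⟨_, (rel_es hj1).mpr rfl, ?_⟩
      rw [RT_inl_aux, IH (jv+1) (by omega) hj1 b _, hpad]
      exact h

lemma C_fu (α : VarIdx μ → Bool) : ∀ (d jv : ℕ) (hd : jv + d = μ) (hj : jv < μ+1)
    (σ : Bm μ) (w : Fin jv → Bool),
    RT α (.fu σ ⟨jv, hj⟩ w) ↔
      ∃ b, α (vy (padW ⟨jv, hj⟩ w (fun t => α (vx σ false t))) b) = true ∧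
        RT α (.es b z0 Fin.elim0) := by
  intro d
  induction d with
  | zero =>
    intro jv hd hj σ w
    have hμ : ¬ (jv+1 < μ+1) := by omega
    have hpad : padF (⟨jv, hj⟩ : Fin (μ+1)) w (α (vx σ false ⟨jv, hj⟩)) =
        padW ⟨jv, hj⟩ w (fun t => α (vx σ false t)) :=
      padF_leaf hj (by omega) w rfl
    rw [RT_iff_step]
    constructor
    · rintro ⟨v, hv, hr⟩
      rw [rel_fu_leaf hμ] at hv
      obtain ⟨b, rfl⟩ := hv
      rw [RT_inl_aux, C_mid] at hr
      exact ⟨b, by rw [← hpad]; exact hr.1, hr.2⟩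
    · rintro ⟨b, hy, hr⟩
      refine ⟨_, (rel_fu_leaf hμ).mpr ⟨b, rfl⟩, ?_⟩
      rw [RT_inl_aux, C_mid]
      exact ⟨by rw [hpad]; exact hy, hr⟩
  | succ d IH =>
    intro jv hd hj σ w
    have hj1 : jv + 1 < μ+1 := by omega
    have hpad := padW_ext (g := fun t => α (vx σ false t)) hj hj1 w
      (c := α (vx σ false ⟨jv, hj⟩)) rfl
    rw [RT_iff_step]
    constructor
    · rintro ⟨v, hv, hr⟩
      rw [rel_fu hj1] at hv
      rw [hv] at hr
      rw [RT_inl_aux, IH (jv+1) (by omega) hj1 σ _] at hr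
      rw [← hpad]
      exact hr
    · intro h
      refine ⟨_, (rel_fu hj1).mpr rfl, ?_⟩
      rw [RT_inl_aux, IH (jv+1) (by omega) hj1 σ _, hpad]
      exact h

lemma C_sel (α : VarIdx μ → Bool) : ∀ (d jv : ℕ) (hd : jv + d = μ) (hj : jv < μ+1)
    (σ : Bm μ),
    RT α (.sel σ ⟨jv, hj⟩) ↔
      (∀ t : Fin (μ+1), jv ≤ t.val → α (vs t) = σ t) ∧ RT α (.fu σ z0 Fin.elim0) := by
  intro d
  induction d with
  | zero =>
    intro jv hd hj σ
    have hμ : ¬ (jv+1 < μ+1) := by omega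
    rw [RT_iff_step]
    constructor
    · rintro ⟨v, hv, hr⟩
      rw [rel_sel_leaf hμ] at hv
      rw [hv.2] at hr
      refine ⟨?_, hr⟩
      intro t ht
      have : t = (⟨jv, hj⟩ : Fin (μ+1)) := Fin.ext (show t.val = jv by omega)
      rw [this]
      exact hv.1
    · rintro ⟨hσ, hr⟩
      exact ⟨_, (rel_sel_leaf hμ).mpr ⟨hσ ⟨jv, hj⟩ (le_refl _), rfl⟩, hr⟩
  | succ d IH =>
    intro jv hd hj σ
    have hj1 : jv + 1 < μ+1 := by omega
    rw [RT_iff_step]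
    constructor
    · rintro ⟨v, hv, hr⟩
      rw [rel_sel hj1] at hv
      rw [hv.2] at hr
      rw [RT_inl_aux, IH (jv+1) (by omega) hj1 σ] at hr
      refine ⟨?_, hr.2⟩
      intro t ht
      rcases Nat.lt_or_ge jv t.val with h | h
      · exact hr.1 t (by omega)
      · have : t = (⟨jv, hj⟩ : Fin (μ+1)) := Fin.ext (show t.val = jv by omega)
        rw [this]
        exact hv.1
    · rintro ⟨hσ, hr⟩
      refine ⟨_, (rel_sel hj1).mpr ⟨hσ ⟨jv, hj⟩ (le_refl _), rfl⟩, ?_⟩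
      rw [RT_inl_aux, IH (jv+1) (by omega) hj1 σ]
      exact ⟨fun t ht => hσ t (by omega), hr⟩

lemma C_st (α : VarIdx μ → Bool) :
    RT α .st ↔ ∃ σ, RT α (.sel σ z0) := by
  rw [RT_iff_step]
  constructor
  · rintro ⟨v, hv, hr⟩
    rw [rel_st] at hv
    obtain ⟨σ, rfl⟩ := hv
    exact ⟨σ, hr⟩
  · rintro ⟨σ, hr⟩
    exact ⟨_, rel_st.mpr ⟨σ, rfl⟩, hr⟩

lemma padW_z0 {h0 : 0 < μ+1} {w : Fin 0 → Bool} {g : Bm μ} :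
    padW (⟨0, h0⟩ : Fin (μ+1)) w g = g := by
  funext t
  exact padW_ge (j := (⟨0, h0⟩ : Fin (μ+1))) (show ¬ t.val < 0 by omega)

lemma C_es_root (α : VarIdx μ → Bool) (b : Bm μ) :
    RT α (.es b z0 Fin.elim0) ↔ b = vSt α := by
  have h := C_es α μ 0 (by omega) (Nat.succ_pos μ) b Fin.elim0
  rw [padW_z0] at h
  rw [h]
  constructor
  · intro h
    funext t
    exact (h t).symm
  · rintro rfl t
    rfl

lemma C_fu_root (α : VarIdx μ → Bool) (σ : Bm μ) :
    RT α (.fu σ z0 Fin.elim0) ↔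
      ∃ b, α (vy (fun t => α (vx σ false t)) b) = true ∧ RT α (.es b z0 Fin.elim0) := by
  have h := C_fu α μ 0 (by omega) (Nat.succ_pos μ) σ Fin.elim0
  rw [padW_z0] at h
  rw [h]

lemma C_sel_root (α : VarIdx μ → Bool) (σ : Bm μ) :
    RT α (.sel σ z0) ↔
      (∀ t : Fin (μ+1), α (vs t) = σ t) ∧ RT α (.fu σ z0 Fin.elim0) := by
  have h := C_sel α μ 0 (by omega) (Nat.succ_pos μ) σ
  rw [h]
  constructor
  · rintro ⟨h1, h2⟩; exact ⟨fun t => h1 t (by omega), h2⟩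
  · rintro ⟨h1, h2⟩; exact ⟨fun t _ => h1 t, h2⟩

lemma T1 (α : VarIdx μ → Bool) : RT α .st ↔ Hfun α = true := by
  rw [C_st]
  constructor
  · rintro ⟨σ, hσ⟩
    rw [C_sel_root] at hσ
    obtain ⟨h1, h2⟩ := hσ
    have hσeq : σ = sigSt α := by funext t; exact (h1 t).symm
    subst hσeq
    rw [C_fu_root] at h2
    obtain ⟨b, hy, hes⟩ := h2
    rw [C_es_root] at hes
    subst hes
    exact hy
  · intro h
    refine ⟨sigSt α, ?_⟩
    rw [C_sel_root]
    refine ⟨fun t => rfl, ?_⟩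
    rw [C_fu_root]
    exact ⟨vSt α, h, (C_es_root α _).mpr rfl⟩


-- rv shape lemmas
lemma rel_rv_zero {α : VarIdx μ → Bool} {v : Q μ ⊕ Bool} {σ : Bm μ} {hj : 0 < μ+1}
    {w : Fin ((⟨0, hj⟩ : Fin (μ+1)).val + 1) → Bool} :
    rel α (.inl (.rv σ ⟨0, hj⟩ w)) v ↔
      (α (vx σ true ⟨μ - 0, by omega⟩) = w ⟨0, Nat.succ_pos _⟩ ∧ v = .inr true) :=
  Iff.rfl

lemma rel_rv_succ {α : VarIdx μ → Bool} {v : Q μ ⊕ Bool} {σ : Bm μ} {jv : ℕ}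
    {hj : jv + 1 < μ+1} {w : Fin ((⟨jv+1, hj⟩ : Fin (μ+1)).val + 1) → Bool} :
    rel α (.inl (.rv σ ⟨jv+1, hj⟩ w)) v ↔
      (α (vx σ true ⟨μ - (jv+1), by omega⟩) = w ⟨0, Nat.succ_pos _⟩ ∧
        v = .inl (.rv σ ⟨jv, by omega⟩ (fun t => w t.succ))) :=
  Iff.rfl

lemma force2 (α : VarIdx μ → Bool) (q : Q μ) (v1 v2 : Q μ ⊕ Bool)
    (h1 : rel α (.inl q) v1) (h2 : rel α (.inl q) v2)
    (r1 : Relation.ReflTransGen (rel α) v1 (.inr true))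
    (r2 : Relation.ReflTransGen (rel α) v2 (.inr true)) : v1 = v2 := by
  cases q with
  | st =>
    rw [rel_st] at h1 h2
    obtain ⟨σ1, rfl⟩ := h1
    obtain ⟨σ2, rfl⟩ := h2
    rw [RT_inl_aux, C_sel_root] at r1 r2
    have : σ1 = σ2 := by
      funext t
      rw [← r1.1 t, ← r2.1 t]
    rw [this]
  | sel σ t =>
    obtain ⟨jv, hj⟩ := t
    by_cases hj1 : jv + 1 < μ+1
    · rw [rel_sel hj1] at h1 h2
      rw [h1.2, h2.2]
    · rw [rel_sel_leaf hj1] at h1 h2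
      rw [h1.2, h2.2]
  | fu σ j w =>
    obtain ⟨jv, hj⟩ := j
    by_cases hj1 : jv + 1 < μ+1
    · rw [rel_fu hj1] at h1 h2
      rw [h1, h2]
    · rw [rel_fu_leaf hj1] at h1 h2
      obtain ⟨b1, rfl⟩ := h1
      obtain ⟨b2, rfl⟩ := h2
      rw [RT_inl_aux, C_mid] at r1 r2
      have e1 := (C_es_root α b1).mp r1.2
      have e2 := (C_es_root α b2).mp r2.2
      rw [e1, e2]
  | mid a b =>
    rw [rel_mid] at h1 h2
    rw [h1.2, h2.2]
  | es b j w =>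
    obtain ⟨jv, hj⟩ := j
    by_cases hj1 : jv + 1 < μ+1
    · rw [rel_es hj1] at h1 h2
      rw [h1, h2]
    · rw [rel_es_leaf hj1] at h1 h2
      rw [h1, h2]
  | rv σ j w =>
    obtain ⟨jv, hj⟩ := j
    cases jv with
    | zero =>
      rw [rel_rv_zero] at h1 h2
      rw [h1.2, h2.2]
    | succ jv' =>
      rw [rel_rv_succ] at h1 h2
      rw [h1.2, h2.2]

lemma rtg_of_chain (α : VarIdx μ → Bool) :
    ∀ (l : List (Q μ ⊕ Bool)) (x y : Q μ ⊕ Bool), l.Chain' (rel α) →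
      l.head? = some x → l.getLast? = some y → Relation.ReflTransGen (rel α) x y := by
  intro l
  induction l with
  | nil => intro x y _ hh _; simp at hh
  | cons a t IH =>
    intro x y hc hh hl
    have hax : a = x := by simpa using hh
    subst hax
    cases t with
    | nil =>
      have : a = y := by simpa using hl
      rw [this]
    | cons b t' =>
      simp only [List.Chain', List.isChain_cons_cons] at hc
      rw [List.getLast?_cons_cons] at hl
      exact Relation.ReflTransGen.head hc.1 (IH b y hc.2 rfl hl)

lemma uniq (α : VarIdx μ → Bool) :
    ∀ (l1 l2 : List (Q μ ⊕ Bool)) (x : Q μ ⊕ Bool),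
      l1.Chain' (rel α) → l2.Chain' (rel α) → l1.head? = some x → l2.head? = some x →
      l1.getLast? = some (.inr true) → l2.getLast? = some (.inr true) → l1 = l2 := by
  intro l1
  induction l1 with
  | nil => intro l2 x _ _ hh1 _ _ _; simp at hh1
  | cons a t1 IH =>
    intro l2 x hc1 hc2 hh1 hh2 hl1 hl2
    cases l2 with
    | nil => simp at hh2
    | cons a2 t2 =>
      have e1 : a = x := by simpa using hh1
      have e2 : a2 = x := by simpa using hh2
      rw [e1] at hc1 hl1
      rw [e2] at hc2 hl2
      rw [e1, e2]
      cases t1 with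
      | nil =>
        have ha : x = .inr true := by simpa using hl1
        cases t2 with
        | nil => rfl
        | cons b2 t2' =>
          exfalso
          simp only [List.Chain', List.isChain_cons_cons] at hc2
          have := hc2.1
          rw [ha] at this
          exact this
      | cons b1 t1' =>
        simp only [List.Chain', List.isChain_cons_cons] at hc1
        rw [List.getLast?_cons_cons] at hl1
        cases t2 with
        | nil =>
          exfalso
          have ha : x = .inr true := by simpa using hl2
          have := hc1.1
          rw [ha] at this
          exact this
        | cons b2 t2' =>
          simp only [List.Chain', List.isChain_cons_cons] at hc2
          rw [List.getLast?_cons_cons] at hl2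
          have rt1 : Relation.ReflTransGen (rel α) b1 (.inr true) :=
            rtg_of_chain α (b1 :: t1') b1 _ hc1.2 rfl hl1
          have rt2 : Relation.ReflTransGen (rel α) b2 (.inr true) :=
            rtg_of_chain α (b2 :: t2') b2 _ hc2.2 rfl hl2
          have hb : b1 = b2 := by
            cases x with
            | inr c => exact hc1.1.elim
            | inl q => exact force2 α q b1 b2 hc1.1 hc2.1 rt1 rt2
          subst hb
          have := IH (b1 :: t2') b1 hc1.2 hc2.2 rfl rfl hl1 hl2
          rw [this]

def lev : Q μ ⊕ Bool → ℕ
  | .inl .st => 0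
  | .inl (.sel _ t) => 1 + t.val
  | .inl (.fu _ j _) => μ + 2 + j.val
  | .inl (.mid _ _) => 2*μ + 3
  | .inl (.es _ j _) => 2*μ + 4 + j.val
  | .inl (.rv _ j _) => 4*μ + 5 - j.val
  | .inr _ => 4*μ + 6

lemma lev_lt (α : VarIdx μ → Bool) (x y : Q μ ⊕ Bool) (h : rel α x y) :
    lev x < lev y := by
  cases x with
  | inr b => exact h.elim
  | inl q =>
    cases q with
    | st =>
      rw [rel_st] at h
      obtain ⟨σ, rfl⟩ := h
      simp only [lev]
      omega
    | sel σ t =>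
      obtain ⟨jv, hj⟩ := t
      by_cases hj1 : jv + 1 < μ+1
      · rw [rel_sel hj1] at h
        rw [h.2]
        simp only [lev]
        omega
      · rw [rel_sel_leaf hj1] at h
        rw [h.2]
        simp only [lev]
        omega
    | fu σ j w =>
      obtain ⟨jv, hj⟩ := j
      by_cases hj1 : jv + 1 < μ+1
      · rw [rel_fu hj1] at h
        rw [h]
        simp only [lev]
        omega
      · rw [rel_fu_leaf hj1] at h
        obtain ⟨b, rfl⟩ := h
        simp only [lev]
        omega
    | mid a b =>
      rw [rel_mid] at h
      rw [h.2]
      simp only [lev]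
      omega
    | es b j w =>
      obtain ⟨jv, hj⟩ := j
      by_cases hj1 : jv + 1 < μ+1
      · rw [rel_es hj1] at h
        rw [h]
        simp only [lev]
        omega
      · rw [rel_es_leaf hj1] at h
        rw [h]
        simp only [lev]
        omega
    | rv σ j w =>
      obtain ⟨jv, hj⟩ := j
      cases jv with
      | zero =>
        rw [rel_rv_zero] at h
        rw [h.2]
        simp only [lev]
        omega
      | succ jv' =>
        rw [rel_rv_succ] at h
        rw [h.2]
        simp only [lev]
        omega

lemma chain_nodup (α : VarIdx μ → Bool) {l : List (Q μ ⊕ Bool)}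
    (hc : l.Chain' (rel α)) : l.Nodup := by
  haveI : IsTrans (Q μ ⊕ Bool) (fun x y => lev x < lev y) :=
    ⟨fun a b c h1 h2 => lt_trans h1 h2⟩
  have h2 : l.Chain' (fun x y => lev x < lev y) := hc.imp (fun {a b} h => lev_lt α a b h)
  have h3 := List.isChain_iff_pairwise.mp h2
  exact h3.imp (fun {a b} h => fun e => by subst e; exact lt_irrefl _ h)

lemma exists_acc_list (α : VarIdx μ → Bool) {x : Q μ ⊕ Bool}
    (h : Relation.ReflTransGen (rel α) x (.inr true)) :
    ∃ l : List (Q μ ⊕ Bool), l.Chain' (rel α) ∧ l.head? = some x ∧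
      l.getLast? = some (.inr true) := by
  obtain ⟨l, hch, hlast⟩ := List.exists_isChain_cons_of_relationReflTransGen h
  refine ⟨x :: l, hch, rfl, ?_⟩
  rw [List.getLast?_eq_getLast (l := x :: l) (by simp)]
  rw [hlast]

def accQ (α : VarIdx μ → Bool) : Set (List (Q μ ⊕ Bool)) :=
  {l | l.Nodup ∧ l.Chain' (rel α) ∧ l.head? = some (.inl .st) ∧
    l.getLast? = some (.inr true)}

lemma accQ_card (α : VarIdx μ → Bool) :
    (accQ α).ncard = if Hfun α = true then 1 else 0 := by
  by_cases h : Hfun α = true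
  · rw [if_pos h]
    obtain ⟨l, hc, hh, hl⟩ := exists_acc_list α ((T1 α).mpr h)
    rw [Set.ncard_eq_one]
    refine ⟨l, Set.eq_singleton_iff_unique_mem.mpr ⟨⟨chain_nodup α hc, hc, hh, hl⟩, ?_⟩⟩
    rintro l' ⟨_, hc', hh', hl'⟩
    exact uniq α l' l _ hc' hc hh' hh hl' hl
  · rw [if_neg h]
    have : accQ α = ∅ := by
      rw [Set.eq_empty_iff_forall_notMem]
      rintro l ⟨_, hc, hh, hl⟩
      exact h ((T1 α).mp (rtg_of_chain α l _ _ hc hh hl))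
    rw [this]
    simp


-- Fintype for Q
abbrev TreeF (μ : ℕ) := (j : Fin (μ+1)) × (Fin (j:ℕ) → Bool)
abbrev TreeR (μ : ℕ) := (j : Fin (μ+1)) × (Fin ((j:ℕ)+1) → Bool)

def QS (μ : ℕ) :=
  Unit ⊕ ((Bm μ × Fin (μ+1)) ⊕ ((Bm μ × TreeF μ) ⊕ ((Bm μ × Bm μ) ⊕
    ((Bm μ × TreeF μ) ⊕ (Bm μ × TreeR μ)))))

instance : Fintype (QS μ) := by unfold QS; infer_instance

def qEquiv : Q μ ≃ QS μ where
  toFun q := match q with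
    | .st => .inl ()
    | .sel σ t => .inr (.inl (σ, t))
    | .fu σ j w => .inr (.inr (.inl (σ, ⟨j, w⟩)))
    | .mid a b => .inr (.inr (.inr (.inl (a, b))))
    | .es b j w => .inr (.inr (.inr (.inr (.inl (b, ⟨j, w⟩)))))
    | .rv σ j w => .inr (.inr (.inr (.inr (.inr (σ, ⟨j, w⟩)))))
  invFun x := match x with
    | .inl () => .st
    | .inr (.inl (σ, t)) => .sel σ t
    | .inr (.inr (.inl (σ, jw))) => .fu σ jw.1 jw.2
    | .inr (.inr (.inr (.inl (a, b)))) => .mid a b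
    | .inr (.inr (.inr (.inr (.inl (b, jw))))) => .es b jw.1 jw.2
    | .inr (.inr (.inr (.inr (.inr (σ, jw))))) => .rv σ jw.1 jw.2
  left_inv q := by cases q <;> rfl
  right_inv x := by
    rcases x with _ | (⟨σ, t⟩ | (⟨σ, j, w⟩ | (⟨a, b⟩ | (⟨b, j, w⟩ | ⟨σ, j, w⟩)))) <;> rfl

noncomputable instance : Fintype (Q μ) := Fintype.ofEquiv _ (qEquiv (μ := μ)).symm

lemma sum_range_two_pow (m : ℕ) : ∑ j ∈ Finset.range m, 2^j ≤ 2^m := by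
  induction m with
  | zero => simp
  | succ m IH =>
    rw [Finset.sum_range_succ]
    have : (2:ℕ)^(m+1) = 2^m + 2^m := by ring
    omega

lemma card_Q_le : Fintype.card (Q μ) ≤ 6 * (2^(μ+1) * 2^(μ+1)) := by
  rw [Fintype.card_congr (qEquiv (μ := μ))]
  have hTF : Fintype.card (TreeF μ) ≤ 2^(μ+1) := by
    rw [Fintype.card_sigma]
    have : ∀ j : Fin (μ+1), Fintype.card (Fin (j:ℕ) → Bool) = 2^(j:ℕ) := by
      intro j; simp [Fintype.card_fun]
    calc ∑ j : Fin (μ+1), Fintype.card (Fin (j:ℕ) → Bool)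
        = ∑ j : Fin (μ+1), 2^(j:ℕ) := by simp [this]
      _ = ∑ j ∈ Finset.range (μ+1), 2^j := Fin.sum_univ_eq_sum_range _ _
      _ ≤ 2^(μ+1) := sum_range_two_pow _
  have hTR : Fintype.card (TreeR μ) ≤ 2 * 2^(μ+1) := by
    rw [Fintype.card_sigma]
    have : ∀ j : Fin (μ+1), Fintype.card (Fin ((j:ℕ)+1) → Bool) = 2^((j:ℕ)+1) := by
      intro j; simp [Fintype.card_fun]
    calc ∑ j : Fin (μ+1), Fintype.card (Fin ((j:ℕ)+1) → Bool)
        = ∑ j : Fin (μ+1), 2 * 2^(j:ℕ) := by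
          simp only [this]; congr 1; funext j; ring
      _ = 2 * ∑ j ∈ Finset.range (μ+1), 2^j := by
          rw [← Finset.mul_sum, Fin.sum_univ_eq_sum_range]
      _ ≤ 2 * 2^(μ+1) := by
          have := sum_range_two_pow (μ+1); omega
  have hBm : Fintype.card (Bm μ) = 2^(μ+1) := by simp [Fintype.card_fun]
  unfold QS
  simp only [Fintype.card_sum, Fintype.card_prod, Fintype.card_unit, Fintype.card_fin, hBm]
  have hx : μ + 2 ≤ 2^(μ+1) := by have := Nat.lt_two_pow_self (n := μ+1); omega
  have key : 1 + 2^(μ+1) * (μ+1) ≤ 2^(μ+1) * 2^(μ+1) := by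
    have h1 : (1:ℕ) ≤ 2^(μ+1) := Nat.one_le_two_pow
    have h2 : 2^(μ+1) * (μ+2) ≤ 2^(μ+1) * 2^(μ+1) := Nat.mul_le_mul_left _ hx
    nlinarith
  have e2 : 2^(μ+1) * Fintype.card (TreeF μ) ≤ 2^(μ+1) * 2^(μ+1) :=
    Nat.mul_le_mul_left _ hTF
  have e3 : 2^(μ+1) * Fintype.card (TreeR μ) ≤ 2^(μ+1) * (2 * 2^(μ+1)) :=
    Nat.mul_le_mul_left _ hTR
  nlinarith [key, e2, e3]

-- program
section prog
variable (μ : ℕ)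

noncomputable def nV : ℕ := Fintype.card (VarIdx μ)
noncomputable def ev : VarIdx μ ≃ Fin (nV μ) := Fintype.equivFin _
noncomputable def eqQ : Q μ ≃ Fin (Fintype.card (Q μ)) := Fintype.equivFin _

noncomputable def fM : (Fin (nV μ) → Bool) → Bool := fun a => Hfun (fun z => a (ev μ z))

noncomputable def emb : Fin (Fintype.card (Q μ)) ⊕ Bool → Q μ ⊕ Bool :=
  Sum.map (eqQ μ).symm id
noncomputable def emb2 : Q μ ⊕ Bool → Fin (Fintype.card (Q μ)) ⊕ Bool :=
  Sum.map (eqQ μ) id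

lemma emb_emb2 (x : Q μ ⊕ Bool) : emb μ (emb2 μ x) = x := by
  cases x <;> simp [emb, emb2]

lemma emb_inj : Function.Injective (emb μ) :=
  Function.Injective.sumMap (eqQ μ).symm.injective (fun _ _ h => h)

lemma step_ne_st {α : VarIdx μ → Bool} {x v : Q μ ⊕ Bool} (h : rel α x v) :
    v ≠ .inl .st := by
  intro hv
  subst hv
  have := lev_lt α x _ h
  simp [lev] at this

noncomputable def prog : BranchProg (nV μ) where
  size := Fintype.card (Q μ)
  start := .inl (eqQ μ .st)
  A0 := fun u v => stepc ((eqQ μ).symm u) false (emb μ v)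
  A1 := fun u v => stepc ((eqQ μ).symm u) true (emb μ v)
  var := fun u => ev μ (varQ ((eqQ μ).symm u))
  A0_ne_start := by
    intro u v h hv
    subst hv
    have h' : rel (fun _ => false) (.inl ((eqQ μ).symm u)) (emb μ (.inl (eqQ μ .st))) := h
    have := step_ne_st μ h'
    simp [emb] at this
  A1_ne_start := by
    intro u v h hv
    subst hv
    have h' : rel (fun _ => true) (.inl ((eqQ μ).symm u)) (emb μ (.inl (eqQ μ .st))) := h
    have := step_ne_st μ h'
    simp [emb] at this

lemma prog_size : (prog μ).size = Fintype.card (Q μ) := rfl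
lemma prog_start : (prog μ).start = .inl (eqQ μ .st) := rfl
lemma prog_var (u) : (prog μ).var u = ev μ (varQ ((eqQ μ).symm u)) := rfl
lemma prog_A0 (u v) : (prog μ).A0 u v ↔ stepc ((eqQ μ).symm u) false (emb μ v) := Iff.rfl
lemma prog_A1 (u v) : (prog μ).A1 u v ↔ stepc ((eqQ μ).symm u) true (emb μ v) := Iff.rfl

lemma arc_iff (a : Fin (nV μ) → Bool) (x y : Fin ((prog μ).size) ⊕ Bool) :
    (prog μ).arc a x y ↔ rel (fun z => a (ev μ z)) (emb μ x) (emb μ y) := by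
  cases x with
  | inr b =>
    constructor
    · intro h; exact h.elim
    · intro h; exact h.elim
  | inl u =>
    show ((a ((prog μ).var u) = false ∧ (prog μ).A0 u y) ∨
      (a ((prog μ).var u) = true ∧ (prog μ).A1 u y)) ↔ _
    show _ ↔ stepc ((eqQ μ).symm u) (a (ev μ (varQ ((eqQ μ).symm u)))) (emb μ y)
    rw [prog_var]
    rcases hval : a (ev μ (varQ ((eqQ μ).symm u))) with _ | _ <;>
      simp [hval, prog_A0, prog_A1]

lemma arc_of_rel {a : Fin (nV μ) → Bool} {x y : Q μ ⊕ Bool}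
    (h : rel (fun z => a (ev μ z)) x y) :
    (prog μ).arc a (emb2 μ x) (emb2 μ y) := by
  exact (arc_iff μ a _ _).mpr (by rw [emb_emb2, emb_emb2]; exact h)

lemma prog_computes_NBP : (prog μ).ComputesNBP (fM μ) := by
  intro a
  constructor
  · intro h
    have hrt : RT (fun z => a (ev μ z)) .st := (T1 _).mpr h
    have := Relation.ReflTransGen.lift (emb2 μ) (fun x y hr => arc_of_rel μ hr) _ _ hrt
    simp [Function.onFun, emb2, prog_start] at this
    exact this
  · intro h
    have := Relation.ReflTransGen.lift (emb μ) (fun x y hr => (arc_iff μ a x y).mp hr) _ _ h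
    have h2 : RT (fun z => a (ev μ z)) .st := by
      have e1 : emb μ (prog μ).start = .inl .st := by
        show emb μ (.inl (eqQ μ .st)) = _
        simp [emb]
      have e2 : emb μ (Sum.inr true) = .inr true := rfl
      simp only [Function.onFun] at this
      rw [e1] at this
      exact this
    exact (T1 _).mp h2

lemma prog_accPaths (a : Fin (nV μ) → Bool) :
    (List.map (emb μ)) '' ((prog μ).accPaths a) = accQ (fun z => a (ev μ z)) := by
  ext l
  constructor
  · rintro ⟨l0, ⟨hnd, hch, hh, hl⟩, rfl⟩
    refine ⟨hnd.map (emb_inj μ), ?_, ?_, ?_⟩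
    · exact (List.isChain_map (emb μ)).mpr (hch.imp (fun {x y} h => (arc_iff μ a x y).mp h))
    · rw [List.head?_map, show l0.head? = _ from hh]
      show some (emb μ (.inl (eqQ μ .st))) = _
      simp [emb]
    · rw [List.getLast?_map, show l0.getLast? = _ from hl]
      rfl
  · rintro ⟨hnd, hch, hh, hl⟩
    have hid : (emb μ) ∘ (emb2 μ) = id := funext (fun x => emb_emb2 μ x)
    refine ⟨l.map (emb2 μ), ⟨?_, ?_, ?_, ?_⟩, ?_⟩
    · exact hnd.map (fun x y h => by
        have := congrArg (emb μ) h
        rwa [emb_emb2, emb_emb2] at this)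
    · exact (List.isChain_map (emb2 μ)).mpr (hch.imp (fun {x y} h => arc_of_rel μ h))
    · show ((List.map (emb2 μ) l).head? : Option (Fin (Fintype.card (Q μ)) ⊕ Bool)) = some (.inl (eqQ μ .st))
      rw [List.head?_map, hh]
      simp [emb2]
    · show ((List.map (emb2 μ) l).getLast? : Option (Fin (Fintype.card (Q μ)) ⊕ Bool)) = some (.inr true)
      rw [List.getLast?_map, hl]
      simp [emb2]
    · rw [List.map_map, hid, List.map_id]

lemma prog_computes_PBP : (prog μ).ComputesPBP (fM μ) := by
  intro a
  have hcard : ((prog μ).accPaths a).ncard = (accQ (fun z => a (ev μ z))).ncard := by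
    rw [← prog_accPaths μ a]
    exact (Set.ncard_image_of_injective _ (List.map_injective_iff.mpr (emb_inj μ))).symm
  rw [hcard, accQ_card]
  unfold fM
  by_cases h : Hfun (fun z => a (ev μ z)) = true
  · simp [h]
  · simp [h]

lemma NBPc_fM_le : NBPc (fM μ) ≤ 6 * (2^(μ+1) * 2^(μ+1)) :=
  le_trans (Nat.sInf_le ⟨prog μ, rfl, prog_computes_NBP μ⟩) card_Q_le

lemma PBPc_fM_le : PBPc (fM μ) ≤ 6 * (2^(μ+1) * 2^(μ+1)) :=
  le_trans (Nat.sInf_le ⟨prog μ, rfl, prog_computes_PBP μ⟩) card_Q_le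

end prog
-- partition and subfunction counting
section nec
variable (μ : ℕ)

def Bidx (μ : ℕ) := Bm μ ⊕ (Fin (μ+1) ⊕ (Bm μ × Bm μ))
instance : Fintype (Bidx μ) := by unfold Bidx; infer_instance

def cls : VarIdx μ → Bidx μ
  | .inl t => .inr (.inl t)
  | .inr (.inl (σ, _, _)) => .inl σ
  | .inr (.inr ab) => .inr (.inr ab)

noncomputable def nB : ℕ := Fintype.card (Bidx μ)
noncomputable def eB : Bidx μ ≃ Fin (nB μ) := Fintype.equivFin _

noncomputable def part : Fin (nB μ) → Finset (Fin (nV μ)) :=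
  fun i => Finset.univ.filter (fun x => eB μ (cls μ ((ev μ).symm x)) = i)

lemma mem_part {x : Fin (nV μ)} {i : Fin (nB μ)} :
    x ∈ part μ i ↔ eB μ (cls μ ((ev μ).symm x)) = i := by
  simp [part]

def wit : Bidx μ → VarIdx μ
  | .inl σ => vx σ false z0
  | .inr (.inl t) => vs t
  | .inr (.inr (a, b)) => vy a b

lemma cls_wit (x : Bidx μ) : cls μ (wit μ x) = x := by
  rcases x with σ | (t | ⟨a, b⟩) <;> rfl

lemma part_isPartition : IsPartition (part μ) := by
  refine ⟨?_, ?_, ?_⟩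
  · intro i
    refine ⟨ev μ (wit μ ((eB μ).symm i)), ?_⟩
    rw [mem_part]
    simp [cls_wit]
  · intro i j hij
    rw [Finset.disjoint_left]
    intro x hx hx'
    rw [mem_part] at hx hx'
    exact hij (hx ▸ hx')
  · intro x
    exact ⟨eB μ (cls μ ((ev μ).symm x)), by rw [mem_part]⟩

noncomputable def blockOf (σ : Bm μ) : Finset (Fin (nV μ)) := part μ (eB μ (.inl σ))

lemma mem_block {σ : Bm μ} {x : Fin (nV μ)} :
    x ∈ blockOf μ σ ↔ cls μ ((ev μ).symm x) = .inl σ := by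
  rw [blockOf, mem_part]
  exact ⟨fun h => (eB μ).injective h, fun h => by rw [h]⟩

noncomputable def rhoY (σ : Bm μ) (Y : Bm μ × Bm μ → Bool) :
    {i : Fin (nV μ) // i ∉ blockOf μ σ} → Bool :=
  fun p => match (ev μ).symm p.1 with
    | .inl t => σ t
    | .inr (.inl _) => false
    | .inr (.inr ab) => Y ab

noncomputable def zeta (σ a b : Bm μ) : {i : Fin (nV μ) // i ∈ blockOf μ σ} → Bool :=
  fun p => match (ev μ).symm p.1 with
    | .inr (.inl (_, φ, t)) => if φ then b t else a t
    | _ => false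

lemma subfun_eval (σ : Bm μ) (Y : Bm μ × Bm μ → Bool) (a b : Bm μ) :
    subfun (fM μ) (blockOf μ σ) (rhoY μ σ Y) (zeta μ σ a b) = Y (a, b) := by
  unfold subfun fM
  set A : Fin (nV μ) → Bool :=
    fun i => if h : i ∈ blockOf μ σ then zeta μ σ a b ⟨i, h⟩ else rhoY μ σ Y ⟨i, h⟩ with hA
  set α : VarIdx μ → Bool := fun z => A (ev μ z) with hα
  have h1 : ∀ t, α (vs t) = σ t := by
    intro t
    have hm : ev μ (vs t) ∉ blockOf μ σ := by
      rw [mem_block]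
      simp [cls, vs]
    rw [hα]
    simp only [hA, dif_neg hm]
    show rhoY μ σ Y ⟨ev μ (vs t), hm⟩ = σ t
    unfold rhoY
    simp [vs]
  have hsig : sigSt α = σ := funext h1
  have h2 : ∀ (φ : Bool) t, α (vx σ φ t) = (if φ then b t else a t) := by
    intro φ t
    have hm : ev μ (vx σ φ t) ∈ blockOf μ σ := by
      rw [mem_block]
      simp [cls, vx]
      rfl
    rw [hα]
    simp only [hA, dif_pos hm]
    show zeta μ σ a b ⟨ev μ (vx σ φ t), hm⟩ = _
    unfold zeta
    simp [vx]
  have h3 : ∀ p q, α (vy p q) = Y (p, q) := by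
    intro p q
    have hm : ev μ (vy p q) ∉ blockOf μ σ := by
      rw [mem_block]
      simp [cls, vy]
    rw [hα]
    simp only [hA, dif_neg hm]
    show rhoY μ σ Y ⟨ev μ (vy p q), hm⟩ = _
    unfold rhoY
    simp [vy]
  show Hfun α = Y (a, b)
  have hu : uSt α = a := by
    funext t
    rw [uSt, hsig, h2]
    simp
  have hv : vSt α = b := by
    funext t
    rw [vSt, hsig, h2]
    simp
  rw [Hfun, hu, hv, h3]

lemma numSubfuns_block_ge (σ : Bm μ) :
    2^(2^(μ+1) * 2^(μ+1)) ≤ numSubfuns (fM μ) (blockOf μ σ) := by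
  classical
  set g : (Bm μ × Bm μ → Bool) → (({i : Fin (nV μ) // i ∈ blockOf μ σ} → Bool) → Bool) :=
    fun Y => subfun (fM μ) (blockOf μ σ) (rhoY μ σ Y) with hg
  have hinj : Function.Injective g := by
    intro Y Y' h
    funext p
    obtain ⟨a, b⟩ := p
    have := congrFun h (zeta μ σ a b)
    rw [hg] at this
    simp only at this
    rw [subfun_eval, subfun_eval] at this
    exact this
  have hsub : Set.range g ⊆ Set.range (subfun (fM μ) (blockOf μ σ)) := by
    rintro _ ⟨Y, rfl⟩
    exact ⟨rhoY μ σ Y, rfl⟩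
  have hcard : (Set.range g).ncard = 2^(2^(μ+1) * 2^(μ+1)) := by
    rw [← Set.image_univ, Set.ncard_image_of_injective _ hinj, Set.ncard_univ,
      Nat.card_eq_fintype_card]
    simp [Fintype.card_fun]
  calc 2^(2^(μ+1) * 2^(μ+1)) = (Set.range g).ncard := hcard.symm
    _ ≤ (Set.range (subfun (fM μ) (blockOf μ σ))).ncard :=
        Set.ncard_le_ncard hsub (Set.toFinite _)
    _ = numSubfuns (fM μ) (blockOf μ σ) := rfl

lemma key_count (b : ℕ → ℕ)
    (hmono : ∀ m m' : ℕ, 0 < m → m ≤ m' → b m ≤ b m')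
    (hap : (∑ i, b (numSubfuns (fM μ) (part μ i))) ≤ 6 * (2^(μ+1) * 2^(μ+1))) :
    b (2^(2^(μ+1) * 2^(μ+1))) ≤ 6 * 2^(μ+1) := by
  classical
  set N := 2^(2^(μ+1) * 2^(μ+1)) with hN
  have hg : Function.Injective (fun σ : Bm μ => eB μ (.inl σ)) := by
    intro x y h
    have := (eB μ).injective h
    exact Sum.inl.inj this
  have hsub : ∑ σ : Bm μ, b (numSubfuns (fM μ) (blockOf μ σ)) ≤
      ∑ i, b (numSubfuns (fM μ) (part μ i)) := by
    have himg := Finset.sum_image (f := fun i => b (numSubfuns (fM μ) (part μ i)))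
      (g := fun σ : Bm μ => eB μ (.inl σ)) (s := Finset.univ) (fun x _ y _ h => hg h)
    calc ∑ σ : Bm μ, b (numSubfuns (fM μ) (blockOf μ σ))
        = ∑ i ∈ Finset.univ.image (fun σ : Bm μ => eB μ (.inl σ)),
            b (numSubfuns (fM μ) (part μ i)) := himg.symm
      _ ≤ _ := Finset.sum_le_sum_of_subset (Finset.subset_univ _)
  have hterm : ∀ σ : Bm μ, b N ≤ b (numSubfuns (fM μ) (blockOf μ σ)) := by
    intro σ
    exact hmono N _ (Nat.pow_pos (by norm_num)) (numSubfuns_block_ge μ σ)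
  have hcount : 2^(μ+1) * b N ≤ 6 * (2^(μ+1) * 2^(μ+1)) := by
    calc 2^(μ+1) * b N = ∑ _σ : Bm μ, b N := by
          rw [Finset.sum_const, Finset.card_univ]
          simp [Fintype.card_fun, mul_comm]
      _ ≤ ∑ σ : Bm μ, b (numSubfuns (fM μ) (blockOf μ σ)) := Finset.sum_le_sum (fun σ _ => hterm σ)
      _ ≤ ∑ i, b (numSubfuns (fM μ) (part μ i)) := hsub
      _ ≤ 6 * (2^(μ+1) * 2^(μ+1)) := hap
  have h6 : 6 * (2^(μ+1) * 2^(μ+1)) = 2^(μ+1) * (6 * 2^(μ+1)) := by ring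
  rw [h6] at hcount
  exact Nat.le_of_mul_le_mul_left hcount (Nat.pow_pos (by norm_num))

end nec
end S17

section analytic

lemma numSubfuns_pos {n : ℕ} (f : (Fin n → Bool) → Bool) (V : Finset (Fin n)) :
    0 < numSubfuns f V := by
  rw [numSubfuns, Set.ncard_pos (Set.toFinite _)]
  exact Set.range_nonempty _

lemma numSubfuns_le_funcs {n : ℕ} (f : (Fin n → Bool) → Bool) (V : Finset (Fin n)) :
    numSubfuns f V ≤ 2^(2^V.card) := by
  rw [numSubfuns]
  calc (Set.range (subfun f V)).ncard ≤ (Set.univ : Set (({i : Fin n // i ∈ V} → Bool) → Bool)).ncard :=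
        Set.ncard_le_ncard (Set.subset_univ _) Set.finite_univ
    _ = Fintype.card (({i : Fin n // i ∈ V} → Bool) → Bool) := by
        rw [Set.ncard_univ, Nat.card_eq_fintype_card]
    _ = 2^(2^V.card) := by
        rw [Fintype.card_fun, Fintype.card_fun, Fintype.card_bool, Fintype.card_coe]

lemma numSubfuns_le_two_pow {n : ℕ} (f : (Fin n → Bool) → Bool) (V : Finset (Fin n)) :
    numSubfuns f V ≤ 2^n := by
  rw [numSubfuns, ← Set.image_univ]
  calc (subfun f V '' Set.univ).ncard ≤ (Set.univ : Set ({i : Fin n // i ∉ V} → Bool)).ncard :=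
        Set.ncard_image_le Set.finite_univ
    _ = Fintype.card ({i : Fin n // i ∉ V} → Bool) := by
        rw [Set.ncard_univ, Nat.card_eq_fintype_card]
    _ = 2^(Fintype.card {i : Fin n // i ∉ V}) := by
        rw [Fintype.card_fun, Fintype.card_bool]
    _ ≤ 2^n := by
        apply Nat.pow_le_pow_right (by norm_num)
        calc Fintype.card {i : Fin n // i ∉ V} ≤ Fintype.card (Fin n) :=
              Fintype.card_subtype_le _
          _ = n := Fintype.card_fin n

lemma partition_card_sum {n p : ℕ} {V : Fin p → Finset (Fin n)} (hV : IsPartition V) :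
    ∑ i, (V i).card = n := by
  classical
  have huniv : (Finset.univ : Finset (Fin n)) = Finset.univ.biUnion V := by
    ext x
    simp only [Finset.mem_univ, Finset.mem_biUnion, true_iff]
    obtain ⟨i, hi⟩ := hV.2.2 x
    exact ⟨i, trivial, hi⟩
  have := Finset.card_biUnion (s := (Finset.univ : Finset (Fin p))) (t := V)
    (fun i _ j _ hij => hV.2.1 i j hij)
  rw [← huniv] at this
  simpa using this.symm

lemma two_rpow_half_le_two : (2:ℝ)^((1:ℝ)/2) ≤ 2 := by
  calc (2:ℝ)^((1:ℝ)/2) ≤ (2:ℝ)^((1:ℝ)) :=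
        Real.rpow_le_rpow_of_exponent_le (by norm_num) (by norm_num)
    _ = 2 := Real.rpow_one 2

lemma exp_bound_aux {x : ℝ} (hx : 0 ≤ x) : 1 + x/3 ≤ (2:ℝ)^(x/2) := by
  have hlog : (0.6931471803:ℝ) < Real.log 2 := Real.log_two_gt_d9
  have h1 := Real.add_one_le_exp (x/2 * Real.log 2)
  have hrw : (2:ℝ)^(x/2) = Real.exp (x/2 * Real.log 2) := by
    rw [Real.rpow_def_of_pos (by norm_num), mul_comm]
  rw [hrw]
  have h2 : x/3 ≤ x/2 * Real.log 2 := by nlinarith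
  linarith

set_option maxHeartbeats 1000000 in
lemma main_bound (b : ℕ → ℕ)
    (hmono : ∀ m m' : ℕ, 0 < m → m ≤ m' → b m ≤ b m')
    (hb : ∀ μ : ℕ, b (2^(2^(μ+1) * 2^(μ+1))) ≤ 6 * 2^(μ+1))
    {n p : ℕ} (hn : 8 ≤ n) (f : (Fin n → Bool) → Bool) (V : Fin p → Finset (Fin n))
    (hV : IsPartition V) :
    ((∑ i, b (numSubfuns f (V i)) : ℕ) : ℝ) ≤ 36 * (n : ℝ)^((3:ℝ)/2) / Real.logb 2 (n : ℝ) := by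
  set L : ℝ := Real.logb 2 (n:ℝ) with hLdef
  have hn1 : (1:ℝ) < (n:ℝ) := by exact_mod_cast (by omega : 1 < n)
  have hnpos : (0:ℝ) < (n:ℝ) := by linarith
  have hLpos : 0 < L := Real.logb_pos (by norm_num) hn1
  set K : ℕ := Nat.log 2 n + 1 with hKdef
  have hKL : L < (K:ℝ) := by
    have h1 : n < 2^K := Nat.lt_pow_succ_log_self (by norm_num) n
    have h2 : (n:ℝ) < (2:ℝ)^((K:ℕ):ℝ) := by
      rw [Real.rpow_natCast]
      exact_mod_cast h1
    calc L < Real.logb 2 ((2:ℝ)^((K:ℕ):ℝ)) := by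
          apply Real.logb_lt_logb (by norm_num) hnpos h2
      _ = (K:ℝ) := Real.logb_rpow (by norm_num) (by norm_num)
  have hsq : (n:ℝ)^((1:ℝ)/2) = (2:ℝ)^(L/2) := by
    rw [show L/2 = L * (1/2) by ring, Real.rpow_mul (by norm_num : (0:ℝ) ≤ 2),
      Real.rpow_logb (by norm_num) (by norm_num) hnpos]
  have hsqpos : 0 < (n:ℝ)^((1:ℝ)/2) := Real.rpow_pos_of_pos hnpos _
  -- per block bound
  have block : ∀ i, ((b (numSubfuns f (V i)) : ℕ) : ℝ) ≤
      36 * ((V i).card : ℝ) * (n:ℝ)^((1:ℝ)/2) / L := by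
    intro i
    set v : ℕ := (V i).card with hvdef
    have hv1 : 1 ≤ v := Finset.card_pos.mpr (hV.1 i)
    set r : ℕ := numSubfuns f (V i) with hrdef
    have hr1 : 0 < r := numSubfuns_pos f (V i)
    set t : ℕ := min v K with htdef
    have ht1 : 1 ≤ t := le_min hv1 (by omega)
    have hrle : r ≤ 2^(2^t) := by
      rcases le_or_gt v K with h | h
      · rw [htdef, min_eq_left h]
        exact numSubfuns_le_funcs f (V i)
      · rw [htdef, min_eq_right h.le]
        calc r ≤ 2^n := numSubfuns_le_two_pow f (V i)
          _ ≤ 2^(2^K) := Nat.pow_le_pow_right (by norm_num)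
              (le_of_lt (Nat.lt_pow_succ_log_self (by norm_num) n))
    set m1 : ℕ := (t+1)/2 with hm1def
    have hm1pos : 1 ≤ m1 := by omega
    have h2m : t ≤ 2 * m1 := by omega
    have hbapp : b (2^(2^m1 * 2^m1)) ≤ 6 * 2^m1 := by
      have := hb (m1 - 1)
      rwa [show m1 - 1 + 1 = m1 by omega] at this
    have hble : b r ≤ 6 * 2^m1 := by
      refine le_trans (hmono r _ hr1 ?_) hbapp
      refine le_trans hrle ?_
      apply Nat.pow_le_pow_right (by norm_num)
      rw [← pow_add]
      exact Nat.pow_le_pow_right (by norm_num) (by omega : t ≤ m1 + m1)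
    have hcast : ((b r : ℕ) : ℝ) ≤ 6 * (2:ℝ)^((m1:ℕ):ℝ) := by
      rw [Real.rpow_natCast]
      exact_mod_cast hble
    have hm1le : ((m1:ℕ):ℝ) ≤ ((t:ℝ)+1)/2 := by
      rw [hm1def]
      calc (((t+1)/2 : ℕ) : ℝ) ≤ ((t+1 : ℕ):ℝ)/((2:ℕ):ℝ) := Nat.cast_div_le
        _ = ((t:ℝ)+1)/2 := by push_cast; ring
    have hp2 : (2:ℝ)^((m1:ℕ):ℝ) ≤ (2:ℝ)^(((t:ℝ)+1)/2) :=
      Real.rpow_le_rpow_of_exponent_le (by norm_num) hm1le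
    -- main claim
    have claim : (2:ℝ)^(((t:ℝ)+1)/2) ≤ 6 * (v:ℝ) * (n:ℝ)^((1:ℝ)/2) / L := by
      have hv1' : (1:ℝ) ≤ (v:ℝ) := by exact_mod_cast hv1
      rcases le_or_gt K v with hKv | hvK
      · -- t = K
        have ht : t = K := by rw [htdef, min_eq_right hKv]
        have h2K : (2:ℝ)^((K:ℕ):ℝ) ≤ 2*(n:ℝ) := by
          have hnat : (2:ℕ)^K ≤ 2*n := by
            rw [hKdef, pow_succ]
            have := Nat.pow_log_le_self 2 (show n ≠ 0 by omega)
            omega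
          rw [Real.rpow_natCast]
          exact_mod_cast hnat
        have hup : (2:ℝ)^(((t:ℝ)+1)/2) ≤ 2 * (n:ℝ)^((1:ℝ)/2) := by
          have e1 : (2:ℝ)^(((t:ℝ)+1)/2) = ((2:ℝ)^((t:ℝ)+1))^((1:ℝ)/2) := by
            rw [← Real.rpow_mul (by norm_num : (0:ℝ) ≤ 2)]
            congr 1
            ring
          have e2 : (2:ℝ)^((t:ℝ)+1) ≤ 4*(n:ℝ) := by
            rw [Real.rpow_add (by norm_num), Real.rpow_one, ht]
            nlinarith [h2K]
          rw [e1]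
          calc ((2:ℝ)^((t:ℝ)+1))^((1:ℝ)/2) ≤ (4*(n:ℝ))^((1:ℝ)/2) :=
                Real.rpow_le_rpow (Real.rpow_nonneg (by norm_num) _) e2 (by norm_num)
            _ = (4:ℝ)^((1:ℝ)/2) * (n:ℝ)^((1:ℝ)/2) :=
                Real.mul_rpow (by norm_num) (le_of_lt hnpos)
            _ = 2 * (n:ℝ)^((1:ℝ)/2) := by
                congr 1
                rw [← Real.sqrt_eq_rpow]
                rw [show (4:ℝ) = 2^2 by norm_num]
                exact Real.sqrt_sq (by norm_num)
        have hLv : L ≤ (v:ℝ) := by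
          have : (K:ℝ) ≤ (v:ℝ) := by exact_mod_cast hKv
          linarith
        rw [le_div_iff₀ hLpos]
        have p1 : (2:ℝ)^(((t:ℝ)+1)/2) * L ≤ (2*(n:ℝ)^((1:ℝ)/2)) * L :=
          mul_le_mul_of_nonneg_right hup hLpos.le
        have p2 : (2*(n:ℝ)^((1:ℝ)/2)) * L ≤ (2*(n:ℝ)^((1:ℝ)/2)) * (v:ℝ) :=
          mul_le_mul_of_nonneg_left hLv (by positivity)
        have p3 : (0:ℝ) ≤ (n:ℝ)^((1:ℝ)/2) * (v:ℝ) := by positivity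
        linarith
      · -- t = v ≤ L
        have ht : t = v := by rw [htdef, min_eq_left hvK.le]
        have hvL : (v:ℝ) ≤ L := by
          have h2v : (2:ℕ)^v ≤ n := by
            have hv' : v ≤ Nat.log 2 n := by omega
            exact le_trans (Nat.pow_le_pow_right (by norm_num) hv') (Nat.pow_log_le_self 2 (by omega))
          have h2v' : (2:ℝ)^((v:ℕ):ℝ) ≤ (n:ℝ) := by
            rw [Real.rpow_natCast]
            exact_mod_cast h2v
          calc (v:ℝ) = Real.logb 2 ((2:ℝ)^((v:ℕ):ℝ)) := (Real.logb_rpow (by norm_num) (by norm_num)).symm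
            _ ≤ L := Real.logb_le_logb_of_le (by norm_num) (Real.rpow_pos_of_pos (by norm_num) _) h2v'
        rw [le_div_iff₀ hLpos, ht, hsq]
        -- goal : 2^((v+1)/2) * L ≤ 6 * v * 2^(L/2)
        have e1 : (2:ℝ)^(((v:ℝ)+1)/2) = (2:ℝ)^((v:ℝ)/2) * (2:ℝ)^((1:ℝ)/2) := by
          rw [← Real.rpow_add (by norm_num)]
          congr 1
          ring
        have e2 : (2:ℝ)^(L/2) = (2:ℝ)^((v:ℝ)/2) * (2:ℝ)^((L-(v:ℝ))/2) := by
          rw [← Real.rpow_add (by norm_num)]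
          congr 1
          ring
        have hexp : 1 + (L-(v:ℝ))/3 ≤ (2:ℝ)^((L-(v:ℝ))/2) := exp_bound_aux (by linarith)
        have hred : (2:ℝ)^((1:ℝ)/2) * L ≤ 6 * (v:ℝ) * (2:ℝ)^((L-(v:ℝ))/2) := by
          have hs2 : (2:ℝ)^((1:ℝ)/2) ≤ 2 := two_rpow_half_le_two
          have hs2pos : (0:ℝ) < (2:ℝ)^((1:ℝ)/2) := Real.rpow_pos_of_pos (by norm_num) _
          have key1 : 6*(v:ℝ)*(1 + (L-(v:ℝ))/3) ≤ 6*(v:ℝ)*((2:ℝ)^((L-(v:ℝ))/2)) :=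
            mul_le_mul_of_nonneg_left hexp (by linarith)
          have key2 : 2*L ≤ 6*(v:ℝ)*(1 + (L-(v:ℝ))/3) := by
            nlinarith [mul_nonneg (sub_nonneg.mpr hv1') (sub_nonneg.mpr hvL)]
          have key3 : (2:ℝ)^((1:ℝ)/2) * L ≤ 2 * L :=
            mul_le_mul_of_nonneg_right hs2 hLpos.le
          linarith
        have hvpos : (0:ℝ) < (2:ℝ)^((v:ℝ)/2) := Real.rpow_pos_of_pos (by norm_num) _
        rw [e1, e2]
        nlinarith [mul_le_mul_of_nonneg_left hred hvpos.le]
    calc ((b r : ℕ) : ℝ) ≤ 6 * (2:ℝ)^((m1:ℕ):ℝ) := hcast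
      _ ≤ 6 * (2:ℝ)^(((t:ℝ)+1)/2) := by linarith [hp2]
      _ ≤ 6 * (6 * (v:ℝ) * (n:ℝ)^((1:ℝ)/2) / L) := by linarith [claim]
      _ = 36 * (v:ℝ) * (n:ℝ)^((1:ℝ)/2) / L := by ring
  -- sum up
  have hsum : ((∑ i, b (numSubfuns f (V i)) : ℕ) : ℝ) = ∑ i, ((b (numSubfuns f (V i)) : ℕ) : ℝ) := by
    push_cast
    rfl
  rw [hsum]
  have hcards : ∑ i, (((V i).card : ℕ) : ℝ) = (n:ℝ) := by
    rw [← Nat.cast_sum]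
    exact_mod_cast congrArg (Nat.cast : ℕ → ℝ) (partition_card_sum hV)
  calc ∑ i, ((b (numSubfuns f (V i)) : ℕ) : ℝ)
      ≤ ∑ i, 36 * ((V i).card : ℝ) * (n:ℝ)^((1:ℝ)/2) / L := Finset.sum_le_sum (fun i _ => block i)
    _ = (36 * (n:ℝ)^((1:ℝ)/2) / L) * ∑ i, (((V i).card : ℕ) : ℝ) := by
        rw [Finset.mul_sum]
        apply Finset.sum_congr rfl
        intro i _
        push_cast
        ring
    _ = 36 * ((n:ℝ)^((1:ℝ)/2) * (n:ℝ)) / L := by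
        rw [hcards]
        ring
    _ = 36 * (n:ℝ)^((3:ℝ)/2) / L := by
        have h32 : (n:ℝ)^((1:ℝ)/2) * (n:ℝ) = (n:ℝ)^((3:ℝ)/2) := by
          calc (n:ℝ)^((1:ℝ)/2) * (n:ℝ) = (n:ℝ)^((1:ℝ)/2) * (n:ℝ)^(1:ℝ) := by
                rw [Real.rpow_one]
            _ = (n:ℝ)^((1:ℝ)/2 + 1) := (Real.rpow_add hnpos _ _).symm
            _ = (n:ℝ)^((3:ℝ)/2) := by norm_num
        rw [h32]

end analytic

lemma key_NBP (b : ℕ → ℕ) (h : IsNeciporuk (fun _ f => NBPc f) b) (μ : ℕ) :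
    b (2^(2^(μ+1) * 2^(μ+1))) ≤ 6 * 2^(μ+1) := by
  apply S17.key_count μ b h.1
  calc ∑ i, b (numSubfuns (S17.fM μ) (S17.part μ i))
      ≤ NBPc (S17.fM μ) :=
        h.2 (S17.nV μ) (S17.nB μ) (S17.fM μ) (S17.part μ) (S17.part_isPartition μ)
    _ ≤ 6 * (2^(μ+1) * 2^(μ+1)) := S17.NBPc_fM_le μ

lemma key_PBP (b : ℕ → ℕ) (h : IsNeciporuk (fun _ f => PBPc f) b) (μ : ℕ) :
    b (2^(2^(μ+1) * 2^(μ+1))) ≤ 6 * 2^(μ+1) := by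
  apply S17.key_count μ b h.1
  calc ∑ i, b (numSubfuns (S17.fM μ) (S17.part μ i))
      ≤ PBPc (S17.fM μ) :=
        h.2 (S17.nV μ) (S17.nB μ) (S17.fM μ) (S17.part μ) (S17.part_isPartition μ)
    _ ≤ 6 * (2^(μ+1) * 2^(μ+1)) := S17.PBPc_fM_le μ

theorem stmt17 (F : ∀ n : ℕ, (Fin n → Bool) → Bool) :
    ∃ c : ℝ, 0 < c ∧ ∀ n : ℕ, 8 ≤ n →
      (∀ b : ℕ → ℕ, IsNeciporuk (fun _ f => NBPc f) b →
        ∀ (p : ℕ) (V : Fin p → Finset (Fin n)), IsPartition V →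
          ((∑ i, b (numSubfuns (F n) (V i)) : ℕ) : ℝ)
            ≤ c * (n : ℝ)^((3:ℝ)/2) / Real.logb 2 (n : ℝ)) ∧
      (∀ b : ℕ → ℕ, IsNeciporuk (fun _ f => PBPc f) b →
        ∀ (p : ℕ) (V : Fin p → Finset (Fin n)), IsPartition V →
          ((∑ i, b (numSubfuns (F n) (V i)) : ℕ) : ℝ)
            ≤ c * (n : ℝ)^((3:ℝ)/2) / Real.logb 2 (n : ℝ)) := by
  refine ⟨36, by norm_num, ?_⟩
  intro n hn
  constructor
  · intro b hb p V hV
    exact main_bound b hb.1 (key_NBP b hb) hn (F n) V hV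
  · intro b hb p V hV
    exact main_bound b hb.1 (key_PBP b hb) hn (F n) V hV
end

section
/- For every family of Boolean functions F = {f_n}_{n∈ℕ} (f_n of arity n), there exist a constant c > 0 and n₀ ∈ ℕ such that for all n ≥ n₀, NeciporukLB^{BP}_F(n) ≤ c·n²/(log₂ n)²; i.e. NeciporukLB^{BP}_F(n) ∈ O(n²/log₂² n). -/
namespace S18

abbrev Vec (u : ℕ) := Fin u → Bool

abbrev Pre (u : ℕ) := Σ β : Fin u, (Fin (β : ℕ) → Bool)

abbrev Nd (u : ℕ) :=
  (Vec u × Fin (2*u+1) × Vec u) ⊕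
  ((Fin (2*u) × Vec u × Bool × Pre u) ⊕
  ((Fin (2*u) × Vec u × Pre u) ⊕ (Pre u)))

variable {u : ℕ}

def nChase (i : Vec u) (ℓ : Fin (2*u+1)) (x : Vec u) : Nd u := Sum.inl (i, ℓ, x)
def nSrc (ℓ : Fin (2*u)) (x : Vec u) (b : Bool) (t : Pre u) : Nd u :=
  Sum.inr (Sum.inl (ℓ, x, b, t))
def nExit (ℓ : Fin (2*u)) (y : Vec u) (t : Pre u) : Nd u :=
  Sum.inr (Sum.inr (Sum.inl (ℓ, y, t)))
def nInit (t : Pre u) : Nd u := Sum.inr (Sum.inr (Sum.inr t))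

def root (hu : 0 < u) : Pre u := ⟨⟨0, hu⟩, Fin.elim0⟩

def ext (t : Pre u) (c : Bool) : Pre u ⊕ Vec u :=
  if h : (t.1 : ℕ) + 1 < u then
    Sum.inl ⟨⟨(t.1 : ℕ) + 1, h⟩, (Fin.snoc t.2 c : Fin ((t.1 : ℕ) + 1) → Bool)⟩
  else
    Sum.inr (fun j =>
      (Fin.snoc t.2 c : Fin ((t.1 : ℕ) + 1) → Bool)
        (Fin.cast (by omega : u = (t.1 : ℕ) + 1) j))

def pre (v : Vec u) (β : Fin u) : Pre u :=
  ⟨β, fun j => v (Fin.castLE β.isLt.le j)⟩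

lemma root_eq_pre (hu : 0 < u) (v : Vec u) : root hu = pre v ⟨0, hu⟩ := by
  unfold root pre
  exact congrArg (Sigma.mk _) (funext fun j => j.elim0)

lemma ext_pre (v : Vec u) (β : Fin u) :
    ext (pre v β) (v β) =
      if h : (β : ℕ) + 1 < u then Sum.inl (pre v ⟨(β : ℕ) + 1, h⟩) else Sum.inr v := by
  unfold ext pre
  by_cases h : (β : ℕ) + 1 < u
  · simp only [dif_pos h]
    refine congrArg Sum.inl (congrArg (Sigma.mk _) ?_)
    funext j
    induction j using Fin.lastCases with
    | last =>
      rw [Fin.snoc_last]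
      congr 1
    | cast jj =>
      rw [Fin.snoc_castSucc]
      rfl
  · simp only [dif_neg h, Sum.inr.injEq]
    funext j
    have hβ : (β : ℕ) + 1 = u := by omega
    by_cases hj : (j : ℕ) < (β : ℕ)
    · have hcast : (Fin.cast (by omega : u = (β : ℕ) + 1) j) =
        Fin.castSucc ⟨(j : ℕ), hj⟩ := by apply Fin.ext; rfl
      rw [hcast, Fin.snoc_castSucc]
      rfl
    · have hj' : (j : ℕ) = (β : ℕ) := by
        have := j.isLt; omega
      have hcast : (Fin.cast (by omega : u = (β : ℕ) + 1) j) = Fin.last (β : ℕ) := by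
        apply Fin.ext; simpa using hj'
      rw [hcast, Fin.snoc_last]
      congr 1
      apply Fin.ext; exact hj'.symm

end S18

namespace S18

variable {u : ℕ}

/-- start cell -/
def x0 : Vec u := fun _ => false

/-- successor of a node when the queried bit has value `c`. -/
def nsucc (hu : 0 < u) : Nd u → Bool → Nd u ⊕ Bool
  | Sum.inl (i, ℓ, x), c =>
      if h : (ℓ : ℕ) < 2*u then Sum.inl (nSrc ⟨(ℓ : ℕ), h⟩ x c (root hu))
      else Sum.inr c
  | Sum.inr (Sum.inl (ℓ, x, b, t)), c =>
      match ext t c with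
      | Sum.inl t' => Sum.inl (nSrc ℓ x b t')
      | Sum.inr y => Sum.inl (nExit ℓ y (root hu))
  | Sum.inr (Sum.inr (Sum.inl (ℓ, y, t))), c =>
      match ext t c with
      | Sum.inl t' => Sum.inl (nExit ℓ y t')
      | Sum.inr j => Sum.inl (nChase j ⟨(ℓ : ℕ) + 1, by omega⟩ y)
  | Sum.inr (Sum.inr (Sum.inr t)), c =>
      match ext t c with
      | Sum.inl t' => Sum.inl (nInit t')
      | Sum.inr j => Sum.inl (nChase j ⟨0, by omega⟩ x0)

/-- level function, strictly increasing along arcs. -/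
def lvl : Nd u → ℕ
  | Sum.inl (_, ℓ, _) => u + (ℓ : ℕ) * (2*u+1)
  | Sum.inr (Sum.inl (ℓ, _, _, t)) => u + (ℓ : ℕ) * (2*u+1) + 1 + (t.1 : ℕ)
  | Sum.inr (Sum.inr (Sum.inl (ℓ, _, t))) => u + (ℓ : ℕ) * (2*u+1) + 1 + u + (t.1 : ℕ)
  | Sum.inr (Sum.inr (Sum.inr t)) => (t.1 : ℕ)

lemma ext_fst {t : Pre u} {c : Bool} {t' : Pre u} (h : ext t c = Sum.inl t') :
    (t'.1 : ℕ) = (t.1 : ℕ) + 1 := by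
  unfold ext at h
  by_cases hc : (t.1 : ℕ) + 1 < u
  · rw [dif_pos hc] at h
    cases h
    rfl
  · rw [dif_neg hc] at h
    cases h

lemma lvl_succ (hu : 0 < u) {nd nd' : Nd u} {c : Bool}
    (h : nsucc hu nd c = Sum.inl nd') : lvl nd' = lvl nd + 1 := by
  rcases nd with ⟨i, ℓ, x⟩ | ⟨ℓ, x, b, t⟩ | ⟨ℓ, y, t⟩ | t
  · simp only [nsucc] at h
    by_cases hl : (ℓ : ℕ) < 2*u
    · rw [dif_pos hl] at h
      cases h
      simp [lvl, nSrc, root]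
    · rw [dif_neg hl] at h
      cases h
  · simp only [nsucc] at h
    rcases he : ext t c with t' | y
    · rw [he] at h
      cases h
      have := ext_fst he
      simp only [lvl, nSrc]
      omega
    · rw [he] at h
      cases h
      have hfull : (t.1 : ℕ) + 1 = u := by
        unfold ext at he
        by_cases hc : (t.1 : ℕ) + 1 < u
        · rw [dif_pos hc] at he; cases he
        · omega
      simp only [lvl, nExit, root]
      omega
  · simp only [nsucc] at h
    rcases he : ext t c with t' | j
    · rw [he] at h
      cases h
      have := ext_fst he
      simp only [lvl, nExit]
      omega
    · rw [he] at h
      cases h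
      have hfull : (t.1 : ℕ) + 1 = u := by
        unfold ext at he
        by_cases hc : (t.1 : ℕ) + 1 < u
        · rw [dif_pos hc] at he; cases he
        · omega
      simp only [lvl, nChase]
      have hr : ((ℓ : ℕ) + 1) * (2*u+1) = (ℓ : ℕ) * (2*u+1) + (2*u+1) := by ring
      omega
  · simp only [nsucc] at h
    rcases he : ext t c with t' | j
    · rw [he] at h
      cases h
      have := ext_fst he
      simp only [lvl, nInit]
      omega
    · rw [he] at h
      cases h
      have hfull : (t.1 : ℕ) + 1 = u := by
        unfold ext at he
        by_cases hc : (t.1 : ℕ) + 1 < u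
        · rw [dif_pos hc] at he; cases he
        · omega
      simp only [lvl, nChase]
      omega

lemma lvl_nsucc_pos (hu : 0 < u) {nd nd' : Nd u} {c : Bool}
    (h : nsucc hu nd c = Sum.inl nd') : 0 < lvl nd' := by
  rw [lvl_succ hu h]; omega

end S18

namespace S18

noncomputable def NN (u : ℕ) : ℕ := Fintype.card (Nd u)

noncomputable def ee (u : ℕ) : Nd u ≃ Fin (NN u) := Fintype.equivFin _

noncomputable def lift (u : ℕ) : Nd u ⊕ Bool → Fin (NN u) ⊕ Bool := Sum.map (ee u) id

lemma lift_inl (u : ℕ) (nd : Nd u) : lift u (Sum.inl nd) = Sum.inl (ee u nd) := rfl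
lemma lift_inr (u : ℕ) (b : Bool) : lift u (Sum.inr b) = Sum.inr b := rfl

lemma lift_eq_inr_iff (u : ℕ) (z : Nd u ⊕ Bool) (b : Bool) :
    lift u z = Sum.inr b ↔ z = Sum.inr b := by
  cases z <;> simp [lift]

variable (u : ℕ) (hu : 0 < u)

noncomputable def Prog : BranchProg (NN u) where
  size := NN u
  start := Sum.inl (ee u (nInit (root hu)))
  A0 := fun v w => w = lift u (nsucc hu ((ee u).symm v) false)
  A1 := fun v w => w = lift u (nsucc hu ((ee u).symm v) true)
  var := id
  A0_ne_start := by
    intro v w h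
    rcases hs : nsucc hu ((ee u).symm v) false with nd' | c
    · rw [hs] at h; subst h
      simp only [lift_inl, ne_eq, Sum.inl.injEq]
      intro hcon
      have hnd : nd' = nInit (root hu) := (ee u).injective hcon
      have h1 := lvl_succ hu hs
      rw [hnd] at h1
      simp [lvl, nInit, root] at h1
    · rw [hs] at h; subst h; simp [lift]
  A1_ne_start := by
    intro v w h
    rcases hs : nsucc hu ((ee u).symm v) true with nd' | c
    · rw [hs] at h; subst h
      simp only [lift_inl, ne_eq, Sum.inl.injEq]
      intro hcon
      have hnd : nd' = nInit (root hu) := (ee u).injective hcon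
      have h1 := lvl_succ hu hs
      rw [hnd] at h1
      simp [lvl, nInit, root] at h1
    · rw [hs] at h; subst h; simp [lift]

lemma prog_step {x y : Fin (NN u) ⊕ Bool} (h : (Prog u hu).rawArc x y) :
    (∃ b, y = Sum.inr b) ∨
    (∃ v w, x = Sum.inl v ∧ y = Sum.inl w ∧
      lvl ((ee u).symm v) < lvl ((ee u).symm w)) := by
  rcases x with v | b
  · have h' : y = lift u (nsucc hu ((ee u).symm v) false) ∨
        y = lift u (nsucc hu ((ee u).symm v) true) := h
    rcases h' with h' | h'
    · rcases hs : nsucc hu ((ee u).symm v) false with nd' | c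
      · rw [hs] at h'
        refine Or.inr ⟨v, ee u nd', rfl, h', ?_⟩
        rw [Equiv.symm_apply_apply, lvl_succ hu hs]; omega
      · rw [hs] at h'; exact Or.inl ⟨c, h'⟩
    · rcases hs : nsucc hu ((ee u).symm v) true with nd' | c
      · rw [hs] at h'
        refine Or.inr ⟨v, ee u nd', rfl, h', ?_⟩
        rw [Equiv.symm_apply_apply, lvl_succ hu hs]; omega
      · rw [hs] at h'; exact Or.inl ⟨c, h'⟩
  · exact absurd h (by simp [BranchProg.rawArc])

lemma prog_det : (Prog u hu).Deterministic := by
  refine ⟨fun v => ⟨_, rfl, fun w h => h⟩, fun v => ⟨_, rfl, fun w h => h⟩, ?_⟩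
  have main : ∀ x y : Fin (NN u) ⊕ Bool, Relation.TransGen ((Prog u hu).rawArc) x y →
      ∀ v, x = Sum.inl v →
      (∃ b, y = Sum.inr b) ∨
      (∃ w, y = Sum.inl w ∧ lvl ((ee u).symm v) < lvl ((ee u).symm w)) := by
    intro x y h
    induction h with
    | single h1 =>
      intro v hv
      subst hv
      rcases prog_step u hu h1 with ⟨b, hb⟩ | ⟨v', w, hv', hw, hlt⟩
      · exact Or.inl ⟨b, hb⟩
      · obtain rfl : v = v' := by injection hv'
        exact Or.inr ⟨w, hw, hlt⟩
    | tail h1 h2 ih =>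
      intro v hv
      rcases ih v hv with ⟨b, hb⟩ | ⟨w, hw, hlt⟩
      · subst hb
        exact absurd h2 (by simp [BranchProg.rawArc])
      · subst hw
        rcases prog_step u hu h2 with ⟨b, hb⟩ | ⟨v', w', hv', hw', hlt'⟩
        · exact Or.inl ⟨b, hb⟩
        · obtain rfl : w = v' := by injection hv'
          exact Or.inr ⟨w', hw', lt_trans hlt hlt'⟩
  intro x hx
  rcases x with v | b
  · rcases main _ _ hx v rfl with ⟨b, hb⟩ | ⟨w, hw, hlt⟩
    · cases hb
    · obtain rfl : v = w := by injection hw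
      omega
  · obtain ⟨c, hc, -⟩ := Relation.TransGen.head'_iff.mp hx
    exact absurd hc (by simp [BranchProg.rawArc])

open Classical in
noncomputable def ff : (Fin (NN u) → Bool) → Bool :=
  fun a => decide (Relation.ReflTransGen ((Prog u hu).arc a) (Prog u hu).start (Sum.inr true))

lemma prog_computes : (Prog u hu).ComputesNBP (ff u hu) := by
  intro a
  simp [ff]

/-- step function of the program under input `a` -/
noncomputable def stepF (a : Fin (NN u) → Bool) : (Fin (NN u) ⊕ Bool) → (Fin (NN u) ⊕ Bool)
  | Sum.inl v => lift u (nsucc hu ((ee u).symm v) (a v))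
  | Sum.inr b => Sum.inr b

lemma arc_inl (a : Fin (NN u) → Bool) (v : Fin (NN u)) (w : Fin (NN u) ⊕ Bool) :
    (Prog u hu).arc a (Sum.inl v) w ↔ w = stepF u hu a (Sum.inl v) := by
  have : (Prog u hu).arc a (Sum.inl v) w =
      ((a v = false ∧ w = lift u (nsucc hu ((ee u).symm v) false)) ∨
       (a v = true ∧ w = lift u (nsucc hu ((ee u).symm v) true))) := rfl
  rw [this]
  cases hav : a v <;> simp [stepF, hav]

lemma arc_inr (a : Fin (NN u) → Bool) (b : Bool) (w : Fin (NN u) ⊕ Bool) :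
    ¬ (Prog u hu).arc a (Sum.inr b) w := by
  simp [BranchProg.arc]

lemma reach_iff (a : Fin (NN u) → Bool) (z : Fin (NN u) ⊕ Bool) :
    Relation.ReflTransGen ((Prog u hu).arc a) z (Sum.inr true) ↔
      ∃ t, (stepF u hu a)^[t] z = Sum.inr true := by
  constructor
  · intro h
    induction h using Relation.ReflTransGen.head_induction_on with
    | refl => exact ⟨0, rfl⟩
    | head h' _ ih =>
      rename_i x c _
      obtain ⟨t, ht⟩ := ih
      rcases x with v | b
      · have hc : c = stepF u hu a (Sum.inl v) := (arc_inl u hu a v c).mp h'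
        rw [hc] at ht
        exact ⟨t + 1, by rw [Function.iterate_succ_apply]; exact ht⟩
      · exact absurd h' (arc_inr u hu a b c)
  · rintro ⟨t, ht⟩
    induction t generalizing z with
    | zero =>
      simp only [Function.iterate_zero, id] at ht
      rw [ht]
      exact Relation.ReflTransGen.refl
    | succ t ih =>
      rw [Function.iterate_succ_apply] at ht
      rcases z with v | b
      · exact Relation.ReflTransGen.head ((arc_inl u hu a v _).mpr rfl) (ih _ ht)
      · have hb : (Sum.inr b : Fin (NN u) ⊕ Bool) = Sum.inr true := by
          have : stepF u hu a (Sum.inr b) = Sum.inr b := rfl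
          rw [this] at ht
          have habs : ∀ s, (stepF u hu a)^[s] (Sum.inr b) = Sum.inr b := by
            intro s
            induction s with
            | zero => rfl
            | succ s ihs => rw [Function.iterate_succ_apply, this, ihs]
          rw [habs t] at ht
          exact ht
        rw [hb]
        exact Relation.ReflTransGen.refl

/-- structured step -/
def sstep (A : Nd u → Bool) : Nd u ⊕ Bool → Nd u ⊕ Bool
  | Sum.inl nd => nsucc hu nd (A nd)
  | Sum.inr b => Sum.inr b

lemma stepF_lift (a : Fin (NN u) → Bool) (z : Nd u ⊕ Bool) :
    stepF u hu a (lift u z) = lift u (sstep u hu (fun nd => a (ee u nd)) z) := by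
  cases z with
  | inl nd => simp [stepF, lift, sstep]
  | inr b => rfl

lemma iter_lift (a : Fin (NN u) → Bool) (t : ℕ) (z : Nd u ⊕ Bool) :
    (stepF u hu a)^[t] (lift u z) = lift u ((sstep u hu (fun nd => a (ee u nd)))^[t] z) := by
  induction t generalizing z with
  | zero => rfl
  | succ t ih =>
    rw [Function.iterate_succ_apply, Function.iterate_succ_apply, stepF_lift, ih]

lemma ff_eval (a : Fin (NN u) → Bool) :
    ff u hu a = true ↔
      ∃ t, (sstep u hu (fun nd => a (ee u nd)))^[t] (Sum.inl (nInit (root hu))) = Sum.inr true := by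
  have hstart : (Prog u hu).start = lift u (Sum.inl (nInit (root hu))) := rfl
  rw [show (ff u hu a = true) ↔
      Relation.ReflTransGen ((Prog u hu).arc a) (Prog u hu).start (Sum.inr true) by simp [ff]]
  rw [hstart, reach_iff]
  constructor
  · rintro ⟨t, ht⟩
    rw [iter_lift, lift_eq_inr_iff] at ht
    exact ⟨t, ht⟩
  · rintro ⟨t, ht⟩
    exact ⟨t, by rw [iter_lift, lift_eq_inr_iff]; exact ht⟩

/-- absorption -/
lemma sstep_absorb (A : Nd u → Bool) (t d : ℕ) (z : Nd u ⊕ Bool) (c : Bool)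
    (h : (sstep u hu A)^[t] z = Sum.inr c) :
    (sstep u hu A)^[t + d] z = Sum.inr c := by
  induction d with
  | zero => exact h
  | succ d ih =>
    rw [show t + (d+1) = (t+d) + 1 by omega, Function.iterate_succ_apply', ih]
    rfl

lemma sstep_exists_iff (A : Nd u → Bool) (τ : ℕ) (c : Bool)
    (h : (sstep u hu A)^[τ] (Sum.inl (nInit (root hu))) = Sum.inr c) :
    (∃ t, (sstep u hu A)^[t] (Sum.inl (nInit (root hu))) = Sum.inr true) ↔ c = true := by
  constructor
  · rintro ⟨t, ht⟩
    rcases le_total t τ with hle | hle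
    · have := sstep_absorb u hu A t (τ - t) _ _ ht
      rw [show t + (τ - t) = τ by omega] at this
      rw [this] at h
      injection h with h'
      exact h'.symm
    · have := sstep_absorb u hu A τ (t - τ) _ _ h
      rw [show τ + (t - τ) = t by omega] at this
      rw [this] at ht
      exact Sum.inr.inj ht
  · rintro rfl
    exact ⟨τ, h⟩

end S18

namespace S18

variable {u : ℕ}

/-- free routing maps for rounds u..2u-1 -/
abbrev Hmap (u : ℕ) := Fin u → Vec u → Vec u

/-- the routing function used in the chosen scenario -/
def Gmap (h : Hmap u) (ℓ : Fin (2*u)) (x : Vec u) (b : Bool) : Vec u :=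
  if hl : (ℓ : ℕ) < u then (fun j => if (j : ℕ) = (ℓ : ℕ) then b else x j)
  else (if b then h ⟨(ℓ : ℕ) - u, by omega⟩ x else x)

/-- scenario assignment: part `i` is live with table `T`; all routing encodes `h` and
    returns to part `i`. -/
def scn (i : Vec u) (h : Hmap u) (T : Fin (2*u+1) → Vec u → Bool) : Nd u → Bool
  | Sum.inl (i', ℓ, x) => if i' = i then T ℓ x else false
  | Sum.inr (Sum.inl (ℓ, x, b, t)) => (Gmap h ℓ x b) t.1
  | Sum.inr (Sum.inr (Sum.inl (_, _, t))) => i t.1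
  | Sum.inr (Sum.inr (Sum.inr t)) => i t.1

section walk

variable (hu : 0 < u) (A : Nd u → Bool)

/-- generic tree-walk lemma -/
lemma walk_gen (embed : Pre u → Nd u) (final : Vec u → Nd u) (v : Vec u)
    (hA : ∀ β : Fin u, A (embed (pre v β)) = v β)
    (hstep1 : ∀ (β : Fin u) (h2 : (β : ℕ) + 1 < u),
      nsucc hu (embed (pre v β)) (v β) = Sum.inl (embed (pre v ⟨(β : ℕ) + 1, h2⟩)))
    (hstep2 : ∀ (β : Fin u), (β : ℕ) + 1 = u →
      nsucc hu (embed (pre v β)) (v β) = Sum.inl (final v)) :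
    ∀ (d : ℕ) (β : Fin u), (β : ℕ) + d = u →
      (sstep u hu A)^[d] (Sum.inl (embed (pre v β))) = Sum.inl (final v) := by
  intro d
  induction d with
  | zero => intro β hβ; exact absurd hβ (by have := β.isLt; omega)
  | succ d ih =>
    intro β hβ
    rw [Function.iterate_succ_apply]
    have hs : sstep u hu A (Sum.inl (embed (pre v β))) = nsucc hu (embed (pre v β)) (v β) := by
      simp only [sstep, hA]
    rw [hs]
    by_cases h2 : (β : ℕ) + 1 < u
    · rw [hstep1 β h2]
      exact ih ⟨(β : ℕ) + 1, h2⟩ (by simpa using by omega)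
    · have hful : (β : ℕ) + 1 = u := by have := β.isLt; omega
      have hd0 : d = 0 := by omega
      subst hd0
      rw [hstep2 β hful]
      rfl

end walk

section scenario

variable (hu : 0 < u) (i : Vec u) (h : Hmap u) (T : Fin (2*u+1) → Vec u → Bool)

local notation "A" => scn i h T

lemma scn_chase (i' : Vec u) (ℓ : Fin (2*u+1)) (x : Vec u) :
    (A) (nChase i' ℓ x) = if i' = i then T ℓ x else false := rfl

lemma scn_src (ℓ : Fin (2*u)) (x : Vec u) (b : Bool) (t : Pre u) :
    (A) (nSrc ℓ x b t) = (Gmap h ℓ x b) t.1 := rfl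

lemma scn_exit (ℓ : Fin (2*u)) (y : Vec u) (t : Pre u) :
    (A) (nExit ℓ y t) = i t.1 := rfl

lemma scn_init (t : Pre u) : (A) (nInit t) = i t.1 := rfl

/-- walking a src tree -/
lemma walk_src (ℓ : Fin (2*u)) (x : Vec u) (b : Bool) :
    (sstep u hu (A))^[u] (Sum.inl (nSrc ℓ x b (root hu))) =
      Sum.inl (nExit ℓ (Gmap h ℓ x b) (root hu)) := by
  set v := Gmap h ℓ x b with hv
  conv_lhs => rw [root_eq_pre hu v]
  refine walk_gen hu (A) (nSrc ℓ x b) (fun w => nExit ℓ w (root hu)) v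
    (fun β => rfl) ?_ ?_ u ⟨0, hu⟩ (by simp)
  · intro β h2
    simp only [nsucc, nSrc]
    rw [ext_pre v β, dif_pos h2]
  · intro β hful
    simp only [nsucc, nSrc]
    rw [ext_pre v β, dif_neg (by omega)]

/-- walking an exit tree -/
lemma walk_exit (ℓ : Fin (2*u)) (y : Vec u) :
    (sstep u hu (A))^[u] (Sum.inl (nExit ℓ y (root hu))) =
      Sum.inl (nChase i ⟨(ℓ : ℕ) + 1, by omega⟩ y) := by
  rw [root_eq_pre hu i]
  refine walk_gen hu (A) (nExit ℓ y) (fun w => nChase w ⟨(ℓ : ℕ) + 1, by omega⟩ y) i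
    (fun β => rfl) ?_ ?_ u ⟨0, hu⟩ (by simp)
  · intro β h2
    simp only [nsucc, nExit]
    rw [ext_pre i β, dif_pos h2]
  · intro β hful
    simp only [nsucc, nExit]
    rw [ext_pre i β, dif_neg (by omega)]

/-- walking the init tree -/
lemma walk_init :
    (sstep u hu (A))^[u] (Sum.inl (nInit (root hu))) =
      Sum.inl (nChase i ⟨0, by omega⟩ x0) := by
  rw [root_eq_pre hu i]
  refine walk_gen hu (A) nInit (fun w => nChase w ⟨0, by omega⟩ x0) i
    (fun β => rfl) ?_ ?_ u ⟨0, hu⟩ (by simp)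
  · intro β h2
    simp only [nsucc, nInit]
    rw [ext_pre i β, dif_pos h2]
  · intro β hful
    simp only [nsucc, nInit]
    rw [ext_pre i β, dif_neg (by omega)]

/-- one full round -/
lemma walk_round (ℓ : ℕ) (hl : ℓ < 2*u) (x : Vec u) :
    (sstep u hu (A))^[u + u + 1] (Sum.inl (nChase i ⟨ℓ, by omega⟩ x)) =
      Sum.inl (nChase i ⟨ℓ + 1, by omega⟩
        (Gmap h ⟨ℓ, hl⟩ x (T ⟨ℓ, by omega⟩ x))) := by
  have hstep : sstep u hu (A) (Sum.inl (nChase i ⟨ℓ, by omega⟩ x)) =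
      Sum.inl (nSrc ⟨ℓ, hl⟩ x (T ⟨ℓ, by omega⟩ x) (root hu)) := by
    simp only [sstep, nChase, scn, if_pos rfl, nsucc]
    rw [dif_pos hl]
    simp
  rw [Function.iterate_add_apply, Function.iterate_add_apply,
    Function.iterate_one, hstep, walk_src, walk_exit]

/-- the chase sequence -/
def aSeq (ℓ : ℕ) : Vec u :=
  match ℓ with
  | 0 => x0
  | ℓ + 1 =>
    if hl : ℓ < 2*u then Gmap h ⟨ℓ, hl⟩ (aSeq ℓ) (T ⟨ℓ, by omega⟩ (aSeq ℓ)) else x0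

lemma walk_upto (ℓ : ℕ) (hl : ℓ ≤ 2*u) :
    (sstep u hu (A))^[u + ℓ * (2*u+1)] (Sum.inl (nInit (root hu))) =
      Sum.inl (nChase i ⟨ℓ, by omega⟩ (aSeq h T ℓ)) := by
  induction ℓ with
  | zero =>
    simpa [aSeq] using walk_init hu i h T
  | succ ℓ ih =>
    have hl' : ℓ < 2*u := by omega
    rw [show u + (ℓ+1) * (2*u+1) = (u + u + 1) + (u + ℓ*(2*u+1)) by ring,
      Function.iterate_add_apply, ih (by omega), walk_round hu i h T ℓ hl']
    congr 2
    simp [aSeq, hl']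

/-- full evaluation -/
lemma full_eval :
    (sstep u hu (A))^[u + (2*u) * (2*u+1) + 1] (Sum.inl (nInit (root hu))) =
      Sum.inr (T ⟨2*u, by omega⟩ (aSeq h T (2*u))) := by
  rw [show u + (2*u)*(2*u+1) + 1 = 1 + (u + (2*u)*(2*u+1)) by ring,
    Function.iterate_add_apply, walk_upto hu i h T (2*u) le_rfl]
  simp only [Function.iterate_one, sstep, nChase, scn, if_pos rfl, nsucc]
  rw [dif_neg (by omega)]
  simp

end scenario

end S18

namespace S18

variable {u : ℕ}

lemma bool_eq_of_iff {b c : Bool} (h : b = true ↔ c = true) : b = c := by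
  cases b <;> cases c <;> simp_all

section evalff

variable (hu : 0 < u)

/-- scenario evaluation of `ff` -/
lemma ff_scn (i : Vec u) (h : Hmap u) (T : Fin (2*u+1) → Vec u → Bool)
    (a : Fin (NN u) → Bool) (ha : (fun nd => a (ee u nd)) = scn i h T) :
    ff u hu a = T ⟨2*u, by omega⟩ (aSeq h T (2*u)) := by
  apply bool_eq_of_iff
  rw [ff_eval u hu a, ha]
  exact sstep_exists_iff u hu (scn i h T) _ _ (full_eval hu i h T)

end evalff

/-- part of a node -/
def partOf : Nd u → Option (Vec u)
  | Sum.inl (i, _, _) => some i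
  | _ => none

def ℓOf : Nd u → Fin (2*u+1)
  | Sum.inl (_, ℓ, _) => ℓ
  | _ => ⟨0, by omega⟩

def xOf : Nd u → Vec u
  | Sum.inl (_, _, x) => x
  | _ => x0

noncomputable def W (u : ℕ) (i : Vec u) : Finset (Fin (NN u)) :=
  Finset.univ.filter (fun v => partOf ((ee u).symm v) = some i)

noncomputable def Wfab (u : ℕ) : Finset (Fin (NN u)) :=
  Finset.univ.filter (fun v => partOf ((ee u).symm v) = none)

lemma mem_W (i : Vec u) (v : Fin (NN u)) :
    v ∈ W u i ↔ partOf ((ee u).symm v) = some i := by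
  simp [W]

lemma mem_Wfab (v : Fin (NN u)) :
    v ∈ Wfab u ↔ partOf ((ee u).symm v) = none := by
  simp [Wfab]

lemma chase_mem_W (i : Vec u) (ℓ : Fin (2*u+1)) (x : Vec u) :
    ee u (nChase i ℓ x) ∈ W u i := by
  rw [mem_W, Equiv.symm_apply_apply]
  rfl

section inj

variable (hu : 0 < u) (i : Vec u)

/-- fixed assignment outside part `i`, encoding routing `h` -/
noncomputable def rho (h : Hmap u) : {v : Fin (NN u) // v ∉ W u i} → Bool :=
  fun w => scn i h (fun _ _ => false) ((ee u).symm w.val)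

/-- table built from an assignment on part `i` -/
noncomputable def Tof (y : {v : Fin (NN u) // v ∈ W u i} → Bool) :
    Fin (2*u+1) → Vec u → Bool :=
  fun ℓ x => y ⟨ee u (nChase i ℓ x), chase_mem_W i ℓ x⟩

lemma merged_eq (h : Hmap u) (y : {v : Fin (NN u) // v ∈ W u i} → Bool) :
    (fun nd => (fun v : Fin (NN u) =>
        if hv : v ∈ W u i then y ⟨v, hv⟩ else rho i h ⟨v, hv⟩) (ee u nd))
      = scn i h (Tof i y) := by
  funext nd
  dsimp only
  rcases nd with ⟨i', ℓ, x⟩ | ⟨ℓ, x, b, t⟩ | ⟨ℓ, y', t⟩ | t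
  · by_cases hi : i' = i
    · subst hi
      have hv : ee u (nChase i' ℓ x) ∈ W u i' := chase_mem_W i' ℓ x
      simp only [nChase] at hv
      rw [dif_pos hv]
      show _ = (if i' = i' then Tof i' y ℓ x else false)
      rw [if_pos rfl]
      rfl
    · have hv : ¬ (ee u (Sum.inl (i', ℓ, x)) ∈ W u i) := by
        rw [mem_W, Equiv.symm_apply_apply]
        simp [partOf, hi]
      rw [dif_neg hv]
      show scn i h (fun _ _ => false) ((ee u).symm (ee u (Sum.inl (i', ℓ, x)))) = _
      rw [Equiv.symm_apply_apply]
      show (if i' = i then false else false) = (if i' = i then Tof i y ℓ x else false)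
      rw [if_neg hi, if_neg hi]
  · have hv : ¬ (ee u (nSrc ℓ x b t) ∈ W u i) := by
      rw [mem_W, Equiv.symm_apply_apply]
      simp [partOf, nSrc]
    simp only [nSrc] at hv
    rw [dif_neg hv]
    show scn i h (fun _ _ => false) ((ee u).symm (ee u (nSrc ℓ x b t))) = _
    rw [Equiv.symm_apply_apply]
    rfl
  · have hv : ¬ (ee u (nExit ℓ y' t) ∈ W u i) := by
      rw [mem_W, Equiv.symm_apply_apply]
      simp [partOf, nExit]
    simp only [nExit] at hv
    rw [dif_neg hv]
    show scn i h (fun _ _ => false) ((ee u).symm (ee u (nExit ℓ y' t))) = _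
    rw [Equiv.symm_apply_apply]
    rfl
  · have hv : ¬ (ee u (nInit t) ∈ W u i) := by
      rw [mem_W, Equiv.symm_apply_apply]
      simp [partOf, nInit]
    simp only [nInit] at hv
    rw [dif_neg hv]
    show scn i h (fun _ _ => false) ((ee u).symm (ee u (nInit t))) = _
    rw [Equiv.symm_apply_apply]
    rfl

/-- the subfunction of part `i` under routing `h` -/
lemma subfun_eval (h : Hmap u) (y : {v : Fin (NN u) // v ∈ W u i} → Bool) :
    subfun (ff u hu) (W u i) (rho i h) y =
      Tof i y ⟨2*u, by omega⟩ (aSeq h (Tof i y) (2*u)) := by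
  unfold subfun
  exact ff_scn hu i h (Tof i y) _ (merged_eq i h y)

end inj

end S18

namespace S18

variable {u : ℕ}

def TsepN (ls : Fin u) (xs z : Vec u) : ℕ → Vec u → Bool :=
  fun L x =>
    if hl : L < u then xs ⟨L, hl⟩
    else if L = u + (ls : ℕ) ∧ x = xs then true
    else if L = 2*u ∧ x = z then true
    else false

def Tsep (ls : Fin u) (xs z : Vec u) : Fin (2*u+1) → Vec u → Bool :=
  fun ℓ x => TsepN ls xs z (ℓ : ℕ) x

section sepeval

variable (h : Hmap u) (ls : Fin u) (xs z : Vec u)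

lemma TsepN_lt {L : ℕ} (hl : L < u) (x : Vec u) :
    TsepN ls xs z L x = xs ⟨L, hl⟩ := by
  unfold TsepN; rw [dif_pos hl]

lemma TsepN_off {L : ℕ} (h1 : ¬ L < u) (h2 : L ≠ u + (ls : ℕ)) (h3 : L ≠ 2*u)
    (x : Vec u) : TsepN ls xs z L x = false := by
  unfold TsepN
  rw [dif_neg h1, if_neg (fun hc => h2 hc.1), if_neg (fun hc => h3 hc.1)]

lemma TsepN_fire : TsepN ls xs z (u + (ls : ℕ)) xs = true := by
  unfold TsepN
  rw [dif_neg (by omega), if_pos ⟨rfl, rfl⟩]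

lemma TsepN_read (hu : 0 < u) (w : Vec u) :
    TsepN ls xs z (2*u) w = if w = z then true else false := by
  unfold TsepN
  have hls := ls.isLt
  rw [dif_neg (by omega), if_neg (by omega)]
  by_cases hw : w = z
  · rw [if_pos ⟨rfl, hw⟩, if_pos hw]
  · rw [if_neg (fun hc => hw hc.2), if_neg hw]

lemma aSeq_step (T : Fin (2*u+1) → Vec u → Bool) (ℓ : ℕ) (hl : ℓ < 2*u) :
    aSeq h T (ℓ + 1) = Gmap h ⟨ℓ, hl⟩ (aSeq h T ℓ) (T ⟨ℓ, by omega⟩ (aSeq h T ℓ)) := by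
  simp only [aSeq]
  rw [dif_pos hl]

lemma Tsep_apply (ℓ : ℕ) (hl : ℓ < 2*u + 1) (x : Vec u) :
    Tsep ls xs z ⟨ℓ, hl⟩ x = TsepN ls xs z ℓ x := rfl

lemma aSeq_prefix : ∀ ℓ, ℓ ≤ u →
    aSeq h (Tsep ls xs z) ℓ = fun j : Fin u => if (j : ℕ) < ℓ then xs j else false := by
  intro ℓ
  induction ℓ with
  | zero =>
    intro _
    funext j
    simp [aSeq, x0]
  | succ ℓ ih =>
    intro hl
    have hlu : ℓ < u := by omega
    have hl2 : ℓ < 2*u := by omega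
    rw [aSeq_step h _ ℓ hl2, Tsep_apply, TsepN_lt ls xs z hlu, ih (by omega)]
    funext j
    simp only [Gmap]
    rw [dif_pos hlu]
    by_cases hj : (j : ℕ) = ℓ
    · simp only [if_pos hj, if_pos (by omega : (j : ℕ) < ℓ + 1)]
      congr 1
      exact Fin.ext hj.symm
    · simp only [if_neg hj]
      by_cases hj2 : (j : ℕ) < ℓ
      · rw [if_pos hj2, if_pos (by omega)]
      · rw [if_neg hj2, if_neg (by omega)]

lemma aSeq_at_u : aSeq h (Tsep ls xs z) u = xs := by
  rw [aSeq_prefix h ls xs z u le_rfl]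
  funext j
  rw [if_pos j.isLt]

lemma aSeq_wait : ∀ d, d ≤ (ls : ℕ) → aSeq h (Tsep ls xs z) (u + d) = xs := by
  intro d
  induction d with
  | zero => intro _; exact aSeq_at_u h ls xs z
  | succ d ih =>
    intro hd
    have hls := ls.isLt
    have hl2 : u + d < 2*u := by omega
    rw [show u + (d + 1) = (u + d) + 1 by omega, aSeq_step h _ (u+d) hl2, Tsep_apply,
      ih (by omega), TsepN_off ls xs z (by omega) (by omega) (by omega)]
    simp only [Gmap]
    rw [dif_neg (by omega)]
    simp

lemma aSeq_fire : aSeq h (Tsep ls xs z) (u + (ls : ℕ) + 1) = h ls xs := by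
  have hls := ls.isLt
  have hl2 : u + (ls : ℕ) < 2*u := by omega
  rw [aSeq_step h _ (u + (ls : ℕ)) hl2, Tsep_apply, aSeq_wait h ls xs z (ls : ℕ) le_rfl,
    TsepN_fire]
  simp only [Gmap]
  rw [dif_neg (by omega)]
  have hfin : (⟨u + (ls : ℕ) - u, by omega⟩ : Fin u) = ls := by
    apply Fin.ext; simp
  simp [hfin]

lemma aSeq_tail : ∀ d, u + (ls : ℕ) + 1 + d ≤ 2*u →
    aSeq h (Tsep ls xs z) (u + (ls : ℕ) + 1 + d) = h ls xs := by
  intro d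
  induction d with
  | zero => intro _; exact aSeq_fire h ls xs z
  | succ d ih =>
    intro hd
    have hls := ls.isLt
    have hl2 : u + (ls : ℕ) + 1 + d < 2*u := by omega
    rw [show u + (ls : ℕ) + 1 + (d + 1) = (u + (ls : ℕ) + 1 + d) + 1 by omega,
      aSeq_step h _ _ hl2, Tsep_apply, ih (by omega),
      TsepN_off ls xs z (by omega) (by omega) (by omega)]
    simp only [Gmap]
    rw [dif_neg (by omega)]
    simp

lemma aSeq_final : aSeq h (Tsep ls xs z) (2*u) = h ls xs := by
  have hls := ls.isLt
  have := aSeq_tail h ls xs z (u - (ls : ℕ) - 1) (by omega)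
  rw [show u + (ls : ℕ) + 1 + (u - (ls : ℕ) - 1) = 2*u by omega] at this
  exact this

end sepeval

section injmain

variable (hu : 0 < u) (i : Vec u)

lemma Tof_ysep (ls : Fin u) (xs z : Vec u) :
    Tof i (fun w => Tsep ls xs z (ℓOf ((ee u).symm w.val)) (xOf ((ee u).symm w.val)))
      = Tsep ls xs z := by
  funext ℓ x
  unfold Tof
  dsimp only
  rw [Equiv.symm_apply_apply]
  rfl

lemma Phi_inj : Function.Injective
    (fun h : Hmap u => subfun (ff u hu) (W u i) (rho i h)) := by
  intro h h' heq
  dsimp only at heq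
  funext ls xs
  by_contra hne
  set z := h ls xs with hz
  set ysep : {v : Fin (NN u) // v ∈ W u i} → Bool :=
    fun w => Tsep ls xs z (ℓOf ((ee u).symm w.val)) (xOf ((ee u).symm w.val)) with hysep
  have h1 : subfun (ff u hu) (W u i) (rho i h) ysep = true := by
    rw [subfun_eval hu i h ysep, Tof_ysep i ls xs z]
    rw [show ((⟨2*u, by omega⟩ : Fin (2*u+1))) = (⟨2*u, by omega⟩ : Fin (2*u+1)) from rfl]
    rw [Tsep_apply, aSeq_final h ls xs z, TsepN_read ls xs z hu]
    rw [if_pos rfl]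
  rw [heq] at h1
  rw [subfun_eval hu i h' ysep, Tof_ysep i ls xs z, Tsep_apply,
    aSeq_final h' ls xs z, TsepN_read ls xs z hu] at h1
  by_cases hc : h' ls xs = z
  · exact hne hc.symm
  · rw [if_neg hc] at h1
    exact Bool.noConfusion h1

lemma numSubfuns_lb : 2^(u*u*2^u) ≤ numSubfuns (ff u hu) (W u i) := by
  classical
  haveI : Finite ↥(Set.range (subfun (ff u hu) (W u i))) :=
    (Set.finite_range (subfun (ff u hu) (W u i))).to_subtype
  have hinj : Function.Injective
      (fun h : Hmap u =>
        (⟨subfun (ff u hu) (W u i) (rho i h), ⟨rho i h, rfl⟩⟩ :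
          ↥(Set.range (subfun (ff u hu) (W u i))))) := by
    intro h h' heq
    have hval := congrArg Subtype.val heq
    exact Phi_inj hu i hval
  have hle := Nat.card_le_card_of_injective _ hinj
  rw [Nat.card_coe_set_eq] at hle
  have hcard : Nat.card (Hmap u) = 2^(u*u*2^u) := by
    rw [Nat.card_eq_fintype_card]
    simp only [Fintype.card_fun, Fintype.card_bool, Fintype.card_fin]
    rw [show u*u*2^u = u * 2^u * u by ring, pow_mul, pow_mul]
  rw [hcard] at hle
  unfold numSubfuns
  exact hle

end injmain

end S18

namespace S18

variable {u : ℕ}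

lemma sum_two_pow (n : ℕ) : ∑ i ∈ Finset.range n, 2^i = 2^n - 1 := by
  induction n with
  | zero => simp
  | succ n ih =>
    rw [Finset.sum_range_succ, ih]
    have : 0 < 2^n := Nat.pow_pos (by norm_num)
    have h2 : (2:ℕ)^(n+1) = 2^n + 2^n := by ring
    omega

lemma card_Pre (u : ℕ) : Fintype.card (Pre u) = 2^u - 1 := by
  rw [Fintype.card_sigma]
  have : ∀ β : Fin u, Fintype.card (Fin (β : ℕ) → Bool) = 2^(β : ℕ) := by
    intro β
    simp [Fintype.card_fun]
  calc (∑ β : Fin u, Fintype.card (Fin (β : ℕ) → Bool))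
      = ∑ β : Fin u, 2^(β : ℕ) := by
        exact Finset.sum_congr rfl (fun β _ => this β)
    _ = ∑ i ∈ Finset.range u, 2^i := Fin.sum_univ_eq_sum_range _ u
    _ = 2^u - 1 := sum_two_pow u

lemma four_pow (u : ℕ) : (4:ℕ)^u = 2^u * 2^u := by
  rw [show (4:ℕ) = 2*2 by norm_num, mul_pow]

set_option synthInstance.maxHeartbeats 1000000 in
set_option maxHeartbeats 1000000 in
lemma size_bound (hu : 0 < u) : NN u ≤ 10*u*4^u := by
  unfold NN
  have hcard : Fintype.card (Nd u) =
      (2^u * ((2*u+1) * 2^u)) + ((2*u * (2^u * (2 * (2^u - 1)))) +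
        ((2*u * (2^u * (2^u - 1))) + (2^u - 1))) := by
    unfold Nd
    simp [Fintype.card_sum, Fintype.card_prod, Fintype.card_fun, Fintype.card_bool,
      Fintype.card_fin, card_Pre]
    have hsum2 : (∑ x : Fin u, 2^(x:ℕ)) = 2^u - 1 := by
      rw [Fin.sum_univ_eq_sum_range (fun i => 2^i) u, sum_two_pow]
    rw [hsum2]
  rw [hcard, four_pow]
  have hq : 1 ≤ 2^u := Nat.one_le_two_pow
  set q := 2^u with hqdef
  have h1 : q - 1 ≤ q := Nat.sub_le _ _
  calc (q * ((2*u+1) * q)) + ((2*u * (q * (2 * (q - 1)))) + ((2*u * (q * (q - 1))) + (q - 1)))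
      ≤ (q * ((2*u+1) * q)) + ((2*u * (q * (2 * q))) + ((2*u * (q * q)) + (q*q))) := by
        gcongr <;> nlinarith
    _ = (8*u + 2) * (q * q) := by ring
    _ ≤ 10*u * (q*q) := by
        have : 8*u + 2 ≤ 10*u := by omega
        exact Nat.mul_le_mul_right _ this

noncomputable def evv (u : ℕ) : Vec u ≃ Fin (2^u) :=
  Fintype.equivFinOfCardEq (by simp [Fintype.card_fun])

noncomputable def parts (u : ℕ) : Fin (2^u + 1) → Finset (Fin (NN u)) :=
  fun j => if h : (j : ℕ) < 2^u then W u ((evv u).symm ⟨(j : ℕ), h⟩) else Wfab u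

lemma parts_isPartition (hu : 0 < u) : IsPartition (parts u) := by
  refine ⟨?_, ?_, ?_⟩
  · intro j
    unfold parts
    by_cases h : (j : ℕ) < 2^u
    · rw [dif_pos h]
      exact ⟨ee u (nChase ((evv u).symm ⟨(j : ℕ), h⟩) ⟨0, by omega⟩ x0),
        chase_mem_W _ _ _⟩
    · rw [dif_neg h]
      refine ⟨ee u (nInit (root hu)), ?_⟩
      rw [mem_Wfab, Equiv.symm_apply_apply]
      rfl
  · intro j k hjk
    unfold parts
    by_cases hj : (j : ℕ) < 2^u <;> by_cases hk : (k : ℕ) < 2^u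
    · rw [dif_pos hj, dif_pos hk]
      rw [Finset.disjoint_left]
      intro v hv1 hv2
      rw [mem_W] at hv1 hv2
      rw [hv1] at hv2
      have : ((evv u).symm ⟨(j : ℕ), hj⟩) = ((evv u).symm ⟨(k : ℕ), hk⟩) :=
        Option.some.inj hv2
      have hj' : (⟨(j : ℕ), hj⟩ : Fin (2^u)) = ⟨(k : ℕ), hk⟩ := (evv u).symm.injective this
      have hv := congrArg Fin.val hj'
      exact hjk (Fin.ext hv)
    · rw [dif_pos hj, dif_neg hk, Finset.disjoint_left]
      intro v hv1 hv2
      rw [mem_W] at hv1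
      rw [mem_Wfab] at hv2
      rw [hv1] at hv2
      cases hv2
    · rw [dif_neg hj, dif_pos hk, Finset.disjoint_left]
      intro v hv1 hv2
      rw [mem_Wfab] at hv1
      rw [mem_W] at hv2
      rw [hv1] at hv2
      cases hv2
    · exact absurd (Fin.ext (by omega : (j : ℕ) = (k : ℕ))) hjk
  · intro x
    rcases hp : partOf ((ee u).symm x) with _ | i
    · refine ⟨⟨2^u, by omega⟩, ?_⟩
      unfold parts
      rw [dif_neg (by simp)]
      rw [mem_Wfab]
      exact hp
    · refine ⟨⟨((evv u) i : ℕ), by have := ((evv u) i).isLt; omega⟩, ?_⟩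
      unfold parts
      rw [dif_pos (by simpa using ((evv u) i).isLt)]
      rw [mem_W]
      rw [show (⟨((((evv u) i) : Fin (2^u)) : ℕ), by simpa using ((evv u) i).isLt⟩ : Fin (2^u))
        = (evv u) i from Fin.ext rfl]
      rw [Equiv.symm_apply_apply]
      exact hp

/-- THE FORCING LEMMA: any Nečiporuk function for BPc satisfies
    `b (2^(u²·2^u)) ≤ 10·u·2^u`. -/
theorem forcing (b : ℕ → ℕ) (hb : IsNeciporuk (fun _ f => BPc f) b)
    (hu : 0 < u) : 2^u * b (2^(u*u*2^u)) ≤ 10*u*4^u := by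
  obtain ⟨hmono, hsum⟩ := hb
  have h1 := hsum (NN u) (2^u + 1) (ff u hu) (parts u) (parts_isPartition hu)
  have h2 : BPc (ff u hu) ≤ NN u := by
    apply Nat.sInf_le
    exact ⟨Prog u hu, prog_det u hu, rfl, prog_computes u hu⟩
  have h4 : 2^u * b (2^(u*u*2^u)) ≤ ∑ j, b (numSubfuns (ff u hu) (parts u j)) := by
    rw [Fin.sum_univ_castSucc]
    have hterm : ∀ j : Fin (2^u),
        b (2^(u*u*2^u)) ≤ b (numSubfuns (ff u hu) (parts u (Fin.castSucc j))) := by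
      intro j
      have hjlt : ((Fin.castSucc j : Fin (2^u+1)) : ℕ) < 2^u := j.isLt
      have hpj : parts u (Fin.castSucc j) = W u ((evv u).symm ⟨(j : ℕ), j.isLt⟩) := by
        unfold parts
        rw [dif_pos hjlt]
        rfl
      rw [hpj]
      exact hmono _ _ (Nat.pow_pos (by norm_num)) (numSubfuns_lb hu _)
    calc 2^u * b (2^(u*u*2^u))
        = ∑ _j : Fin (2^u), b (2^(u*u*2^u)) := by
          rw [Finset.sum_const, Finset.card_univ, Fintype.card_fin, smul_eq_mul]
      _ ≤ ∑ j : Fin (2^u), b (numSubfuns (ff u hu) (parts u (Fin.castSucc j))) :=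
          Finset.sum_le_sum (fun j _ => hterm j)
      _ ≤ _ := Nat.le_add_right _ _
  dsimp only at h1
  exact le_trans h4 (le_trans h1 (le_trans h2 (size_bound hu)))

end S18

namespace S18

/-- key arithmetic consequence: `b m · w ≤ 160 · 2^w` whenever `m ≤ 2^(2^w)`. -/
lemma bound_at_scale (b : ℕ → ℕ) (hb : IsNeciporuk (fun _ f => BPc f) b)
    (w : ℕ) (hw : 1 ≤ w) (m : ℕ) (hm1 : 1 ≤ m) (hm : m ≤ 2^(2^w)) :
    b m * w ≤ 160 * 2^w := by
  classical
  have hex : ∃ u : ℕ, 0 < u ∧ 2^w ≤ u*u*2^u := by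
    refine ⟨w, by omega, ?_⟩
    calc 2^w = 1*1*2^w := by ring
      _ ≤ w*w*2^w := by
          apply Nat.mul_le_mul_right
          exact Nat.mul_le_mul hw hw
  obtain ⟨hU0, hUle⟩ := Nat.find_spec hex
  set U := Nat.find hex with hUdef
  -- b m ≤ 10·U·2^U
  have hbm : b m ≤ 10*U*2^U := by
    have hmono := hb.1
    have h1 : b m ≤ b (2^(U*U*2^U)) := by
      apply hmono _ _ hm1
      calc m ≤ 2^(2^w) := hm
        _ ≤ 2^(U*U*2^U) := Nat.pow_le_pow_right (by norm_num) hUle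
    have h2 := forcing b hb hU0
    rw [four_pow] at h2
    have h3 : 2^U * b (2^(U*U*2^U)) ≤ 2^U * (10*U*2^U) := by
      calc 2^U * b (2^(U*U*2^U)) ≤ 10*U*(2^U*2^U) := h2
        _ = 2^U * (10*U*2^U) := by ring
    have h4 := Nat.le_of_mul_le_mul_left h3 (Nat.pow_pos (by norm_num))
    exact le_trans h1 h4
  -- case on U
  rcases Nat.lt_or_ge U 2 with hU2 | hU2
  · -- U = 1
    have hU1 : U = 1 := by omega
    rw [hU1] at hbm
    have : b m * w ≤ 20 * w := by
      calc b m * w ≤ (10*1*2^1) * w := Nat.mul_le_mul_right _ hbm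
        _ = 20 * w := by norm_num
    calc b m * w ≤ 20 * w := this
      _ ≤ 20 * 2^w := Nat.mul_le_mul_left _ (le_of_lt (Nat.lt_two_pow_self))
      _ ≤ 160 * 2^w := Nat.mul_le_mul_right _ (by norm_num)
  · -- U = a + 1, a ≥ 1
    obtain ⟨a, ha⟩ : ∃ a, U = a + 1 := ⟨U - 1, by omega⟩
    rw [ha] at hbm hUle
    have ha1 : 1 ≤ a := by omega
    -- minimality at a
    have hmin : ¬ (0 < a ∧ 2^w ≤ a*a*2^a) := by
      apply Nat.find_min hex
      omega
    have hmin' : a*a*2^a < 2^w := by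
      by_contra hcon
      exact hmin ⟨by omega, by omega⟩
    -- w ≤ 3a + 1
    have hw3 : w ≤ 3*a + 1 := by
      have h1 : (2:ℕ)^w ≤ (a+1)*(a+1)*2^(a+1) := hUle
      have h2 : (a+1) ≤ 2^a := Nat.lt_two_pow_self
      have h3 : (a+1)*(a+1)*2^(a+1) ≤ 2^a * 2^a * 2^(a+1) :=
        Nat.mul_le_mul_right _ (Nat.mul_le_mul h2 h2)
      have h4 : (2:ℕ)^a * 2^a * 2^(a+1) = 2^(3*a+1) := by
        rw [← pow_add, ← pow_add]
        congr 1
        ring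
      have h5 : (2:ℕ)^w ≤ 2^(3*a+1) := by
        rw [← h4]
        exact le_trans h1 h3
      exact (Nat.pow_le_pow_iff_right (by norm_num)).mp h5
    -- conclude
    have hfin : b m * w ≤ 160 * (a*a*2^a) := by
      calc b m * w ≤ (10*(a+1)*2^(a+1)) * w := Nat.mul_le_mul_right _ hbm
        _ ≤ (10*(a+1)*2^(a+1)) * (3*a+1) := Nat.mul_le_mul_left _ hw3
        _ ≤ (10*(2*a)*2^(a+1)) * (4*a) := by
            apply Nat.mul_le_mul
            · apply Nat.mul_le_mul_right
              apply Nat.mul_le_mul_left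
              omega
            · omega
        _ = 160 * (a*a*2^a) := by
            rw [pow_succ]
            ring
    calc b m * w ≤ 160 * (a*a*2^a) := hfin
      _ ≤ 160 * 2^w := Nat.mul_le_mul_left _ (le_of_lt hmin')

/-- generic upper bound on the number of subfunctions (function-space bound) -/
lemma numSubfuns_ub_fun {n : ℕ} (f : (Fin n → Bool) → Bool) (V : Finset (Fin n)) :
    numSubfuns f V ≤ 2^(2^V.card) := by
  classical
  unfold numSubfuns
  calc (Set.range (subfun f V)).ncard
      ≤ (Set.univ : Set (({i : Fin n // i ∈ V} → Bool) → Bool)).ncard :=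
        Set.ncard_le_ncard (Set.subset_univ _) (Set.finite_univ)
    _ = Nat.card (({i : Fin n // i ∈ V} → Bool) → Bool) := Set.ncard_univ _
    _ = 2^(2^V.card) := by
        rw [Nat.card_eq_fintype_card]
        simp [Fintype.card_fun, Fintype.card_coe]

/-- generic upper bound on the number of subfunctions (domain bound) -/
lemma numSubfuns_ub_dom {n : ℕ} (f : (Fin n → Bool) → Bool) (V : Finset (Fin n)) :
    numSubfuns f V ≤ 2^n := by
  classical
  unfold numSubfuns
  calc (Set.range (subfun f V)).ncard
      = (subfun f V '' Set.univ).ncard := by rw [Set.image_univ]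
    _ ≤ (Set.univ : Set ({i : Fin n // i ∉ V} → Bool)).ncard :=
        Set.ncard_image_le (Set.finite_univ)
    _ = Nat.card ({i : Fin n // i ∉ V} → Bool) := Set.ncard_univ _
    _ ≤ 2^n := by
        rw [Nat.card_eq_fintype_card]
        rw [Fintype.card_fun]
        have h1 : Fintype.card {i : Fin n // i ∉ V} ≤ Fintype.card (Fin n) := by
          apply Fintype.card_subtype_le
        rw [Fintype.card_bool]
        calc (2:ℕ)^(Fintype.card {i : Fin n // i ∉ V})
            ≤ 2^(Fintype.card (Fin n)) := Nat.pow_le_pow_right (by norm_num) h1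
          _ = 2^n := by rw [Fintype.card_fin]

lemma numSubfuns_pos {n : ℕ} (f : (Fin n → Bool) → Bool) (V : Finset (Fin n)) :
    1 ≤ numSubfuns f V := by
  classical
  unfold numSubfuns
  rw [Nat.one_le_iff_ne_zero]
  intro hcon
  have hfin : (Set.range (subfun f V)).Finite := Set.toFinite _
  have := (Set.ncard_pos hfin).mpr ⟨subfun f V (fun _ => false), Set.mem_range_self _⟩
  omega

end S18

namespace S18

lemma sq_le_pow (d : ℕ) : (d+1)^2 ≤ 4*2^d ∧ (d+1) ≤ 2^d := by
  induction d with
  | zero => norm_num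
  | succ d ih =>
    obtain ⟨ih1, ih2⟩ := ih
    have h1 : (1:ℕ) ≤ 2^d := Nat.one_le_two_pow
    constructor
    · have : (d+2)^2 = (d+1)^2 + 2*(d+1) + 1 := by ring
      rw [this]
      have : 4*2^(d+1) = 4*2^d + 2*2^d + (2^d + 2^d) := by ring
      rw [this]
      have h2 : 2*(d+1) ≤ 2*2^d := by omega
      omega
    · have : (2:ℕ)^(d+1) = 2^d + 2^d := by ring
      omega

lemma pow_ratio (v L : ℕ) (h1 : 1 ≤ v) (h2 : v ≤ L) :
    2^v * L^2 ≤ 4 * 2^L * v^2 := by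
  obtain ⟨d, rfl⟩ : ∃ d, L = v + d := ⟨L - v, by omega⟩
  have hd := (sq_le_pow d).1
  have hvd : v + d ≤ v * (d+1) := by nlinarith
  calc 2^v * (v+d)^2 ≤ 2^v * (v*(d+1))^2 := by
        apply Nat.mul_le_mul_left
        exact Nat.pow_le_pow_left hvd 2
    _ = 2^v * ((d+1)^2 * v^2) := by ring
    _ ≤ 2^v * ((4*2^d) * v^2) := by
        apply Nat.mul_le_mul_left
        exact Nat.mul_le_mul_right _ hd
    _ = 4 * (2^v * 2^d) * v^2 := by ring
    _ = 4 * 2^(v+d) * v^2 := by rw [← pow_add]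

/-- master per-part bound -/
lemma part_bound (b : ℕ → ℕ) (hb : IsNeciporuk (fun _ f => BPc f) b)
    {n : ℕ} (hn : 2 ≤ n) (f : (Fin n → Bool) → Bool) (V : Finset (Fin n))
    (hV : V.Nonempty) :
    b (numSubfuns f V) * (Nat.clog 2 n)^2 ≤ 640 * 2^(Nat.clog 2 n) * V.card := by
  set L := Nat.clog 2 n with hL
  have hL1 : 1 ≤ L := Nat.clog_pos (by norm_num) hn
  set v := V.card with hv
  have hv1 : 1 ≤ v := Finset.card_pos.mpr hV
  set r := numSubfuns f V with hr
  have hr1 : 1 ≤ r := numSubfuns_pos f V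
  rcases le_or_gt v L with hvL | hvL
  · -- small part
    have hs := bound_at_scale b hb v hv1 r hr1 (numSubfuns_ub_fun f V)
    -- (b r * v) * L^2 ≤ 160*2^v*L^2 ≤ 640*2^L*v^2
    have h1 : (b r * v) * L^2 ≤ 640 * 2^L * v^2 := by
      calc (b r * v) * L^2 ≤ (160*2^v) * L^2 := Nat.mul_le_mul_right _ hs
        _ = 160 * (2^v * L^2) := by ring
        _ ≤ 160 * (4 * 2^L * v^2) := Nat.mul_le_mul_left _ (pow_ratio v L hv1 hvL)
        _ = 640 * 2^L * v^2 := by ring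
    have h2 : v * (b r * L^2) ≤ v * (640 * 2^L * v) := by
      calc v * (b r * L^2) = (b r * v) * L^2 := by ring
        _ ≤ 640 * 2^L * v^2 := h1
        _ = v * (640 * 2^L * v) := by ring
    exact Nat.le_of_mul_le_mul_left h2 (by omega)
  · -- big part
    have hrub : r ≤ 2^(2^L) := by
      calc r ≤ 2^n := numSubfuns_ub_dom f V
        _ ≤ 2^(2^L) := Nat.pow_le_pow_right (by norm_num)
            (Nat.le_pow_clog (by norm_num) n)
    have hs := bound_at_scale b hb L hL1 r hr1 hrub
    calc b r * L^2 = (b r * L) * L := by ring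
      _ ≤ (160 * 2^L) * L := Nat.mul_le_mul_right _ hs
      _ ≤ (160 * 2^L) * v := Nat.mul_le_mul_left _ (by omega)
      _ ≤ 640 * 2^L * v := by
          have : (160:ℕ) * 2^L ≤ 640 * 2^L := Nat.mul_le_mul_right _ (by norm_num)
          exact Nat.mul_le_mul_right _ this

lemma partition_card_sum {n p : ℕ} (V : Fin p → Finset (Fin n)) (hV : IsPartition V) :
    ∑ i, (V i).card = n := by
  classical
  obtain ⟨hne, hdisj, hcov⟩ := hV
  have hbi : Finset.univ.biUnion V = Finset.univ := by
    ext x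
    simp only [Finset.mem_biUnion, Finset.mem_univ, true_and, iff_true]
    exact hcov x
  have := Finset.card_biUnion (s := (Finset.univ : Finset (Fin p))) (t := V)
    (fun i _ j _ hij => hdisj i j hij)
  rw [hbi] at this
  rw [← this]
  simp

/-- final ℕ-inequality -/
lemma main_nat (b : ℕ → ℕ) (hb : IsNeciporuk (fun _ f => BPc f) b)
    {n : ℕ} (hn : 2 ≤ n) (f : (Fin n → Bool) → Bool)
    {p : ℕ} (V : Fin p → Finset (Fin n)) (hV : IsPartition V) :
    (∑ i, b (numSubfuns f (V i))) * (Nat.clog 2 n)^2 ≤ 1280 * n^2 := by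
  set L := Nat.clog 2 n with hL
  have hL1 : 1 ≤ L := Nat.clog_pos (by norm_num) hn
  have h2L : 2^L ≤ 2*n := by
    have h1 : 2^(L-1) < n := by
      have := Nat.pow_pred_clog_lt_self (b := 2) (by norm_num) (x := n) (by omega)
      simpa [hL, Nat.pred_eq_sub_one] using this
    have h2 : (2:ℕ)^L = 2 * 2^(L-1) := by
      rw [← pow_succ']
      congr 1
      omega
    omega
  calc (∑ i, b (numSubfuns f (V i))) * L^2
      = ∑ i, b (numSubfuns f (V i)) * L^2 := Finset.sum_mul _ _ _
    _ ≤ ∑ i, 640 * 2^L * (V i).card :=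
        Finset.sum_le_sum (fun i _ => part_bound b hb hn f (V i) (hV.1 i))
    _ = 640 * 2^L * ∑ i, (V i).card := by rw [Finset.mul_sum]
    _ = 640 * 2^L * n := by rw [partition_card_sum V hV]
    _ ≤ 640 * (2*n) * n := by
        apply Nat.mul_le_mul_right
        exact Nat.mul_le_mul_left _ h2L
    _ = 1280 * n^2 := by ring

end S18

theorem stmt18 (F : ∀ n : ℕ, (Fin n → Bool) → Bool) :
    ∃ c : ℝ, 0 < c ∧ ∃ n₀ : ℕ, ∀ n : ℕ, n₀ ≤ n →
      ∀ b : ℕ → ℕ, IsNeciporuk (fun _ f => BPc f) b →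
        ∀ (p : ℕ) (V : Fin p → Finset (Fin n)), IsPartition V →
          ((∑ i, b (numSubfuns (F n) (V i)) : ℕ) : ℝ)
            ≤ c * (n : ℝ)^2 / (Real.logb 2 (n : ℝ))^2 := by
  refine ⟨1280, by norm_num, 2, ?_⟩
  intro n hn b hb p V hV
  have hnat := S18.main_nat b hb hn (F n) V hV
  set L := Nat.clog 2 n with hL
  have hL1 : 1 ≤ L := Nat.clog_pos (by norm_num) hn
  set S := ∑ i, b (numSubfuns (F n) (V i)) with hS
  -- real facts
  have hn1 : (1:ℝ) < (n:ℝ) := by exact_mod_cast (by omega : 1 < n)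
  have hlogpos : 0 < Real.logb 2 (n:ℝ) := Real.logb_pos (by norm_num) hn1
  have hnle : (n:ℝ) ≤ (2:ℝ)^L := by
    exact_mod_cast Nat.le_pow_clog (by norm_num) n
  have hlogle : Real.logb 2 (n:ℝ) ≤ (L:ℝ) := by
    have h1 : Real.logb 2 (n:ℝ) ≤ Real.logb 2 ((2:ℝ)^L) := by
      rw [Real.logb_le_logb (by norm_num) (by positivity) (by positivity)]
      exact hnle
    rwa [Real.logb_pow, Real.logb_self_eq_one (by norm_num), mul_one] at h1
  have hLpos : (0:ℝ) < (L:ℝ) := by exact_mod_cast hL1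
  -- cast the nat inequality
  have hreal : (S:ℝ) * (L:ℝ)^2 ≤ 1280 * (n:ℝ)^2 := by
    have := hnat
    exact_mod_cast this
  have h1 : (S:ℝ) ≤ 1280 * (n:ℝ)^2 / (L:ℝ)^2 := by
    rw [le_div_iff₀ (by positivity)]
    exact hreal
  have h2 : 1280 * (n:ℝ)^2 / (L:ℝ)^2 ≤ 1280 * (n:ℝ)^2 / (Real.logb 2 (n:ℝ))^2 := by
    apply div_le_div_of_nonneg_left (by positivity) (by positivity)
    exact pow_le_pow_left₀ (le_of_lt hlogpos) hlogle 2
  exact le_trans h1 h2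
end
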